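/- arXiv:1901.10387 — 7 statements merged into one kernel-verified Lean document; each statement's English description precedes it below -/
import Mathlib

section
/- Every finite simple graph in which every vertex has degree at least 3 contains a cycle of length at most 2·log₂|V|. -/
open SimpleGraph

section ShortCycleHelpers

variable {V : Type*} {G : SimpleGraph V}



/-- If `s(u,x)` is an edge of a path starting at `u`, then `x` is the second vertex. -/
lemma head_edge {u w x : V} {p : G.Walk u w} (hp : p.IsPath)
    (hx : s(u, x) ∈ p.edges) : x = p.getVert 1 := by
  cases p with
  | nil => simp at hx
  | cons h q =>
    rw [Walk.edges_cons, List.mem_cons] at hx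
    rcases hx with hx | hx
    · rw [Sym2.eq_iff] at hx
      rcases hx with ⟨-, rfl⟩ | ⟨rfl, rfl⟩
      · simp [Walk.getVert_cons_succ, Walk.getVert_zero]
      · exact absurd rfl h.ne
    · exact absurd (Walk.fst_mem_support_of_mem_edges q hx)
        ((Walk.cons_isPath_iff _ _).mp hp).2

/-- Closing up a path with an edge back to the start gives a cycle. -/
lemma closing_cycle [DecidableEq V] {u w x : V} {p : G.Walk u w} (hp : p.IsPath) (hx : x ∈ p.support)
    (hadj : G.Adj u x) (hne : s(u, x) ∉ p.edges) :
    ∃ c : G.Walk u u, c.IsCycle ∧ c.length ≤ p.length + 1 := by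
  refine ⟨Walk.cons hadj (p.takeUntil x hx).reverse, ?_, ?_⟩
  · rw [Walk.cons_isCycle_iff]
    refine ⟨(hp.takeUntil hx).reverse, ?_⟩
    rw [Walk.edges_reverse, List.mem_reverse]
    exact fun hmem => hne (p.edges_takeUntil_subset hx hmem)
  · have := p.length_takeUntil_le hx
    simp only [Walk.length_cons, Walk.length_reverse]
    omega

lemma path_append {a z u : V} {T : G.Walk a z} {R : G.Walk z u} (hT : T.IsPath)
    (hR : R.IsPath) (hmeet : ∀ x ∈ T.support, x ∈ R.support → x = z) :
    (T.append R).IsPath := by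
  rw [Walk.isPath_def, Walk.support_append, List.nodup_append]
  have hzR : R.support = z :: R.support.tail := R.support_eq_cons
  have hRnd := hR.support_nodup
  rw [hzR, List.nodup_cons] at hRnd
  refine ⟨hT.support_nodup, hRnd.2, ?_⟩
  intro x hxT y hxR hxy
  subst hxy
  have hxz : x = z := hmeet x hxT (by rw [hzR]; exact List.mem_cons_of_mem _ hxR)
  exact hRnd.1 (hxz ▸ hxR)



lemma first_meet (S : List V) {a w : V} (P : G.Walk a w) :
    P.IsPath → w ∈ S →
      ∃ (z : V) (T : G.Walk a z), T.IsPath ∧ T.length ≤ P.length ∧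
        (∀ x ∈ T.support, x ∈ P.support) ∧ z ∈ S ∧
        (∀ x ∈ T.support, x ∈ S → x = z) := by
  induction P with
  | nil =>
    intro _ hw
    exact ⟨_, Walk.nil, Walk.IsPath.nil, by simp, by simp, hw, by simp⟩
  | @cons a' b' w' h P' ih =>
    intro hP hw
    by_cases haS : a' ∈ S
    · refine ⟨a', Walk.nil, Walk.IsPath.nil, by simp, ?_, haS, by simp⟩
      intro x hx
      simp only [Walk.support_nil, List.mem_singleton] at hx
      subst hx
      exact Walk.start_mem_support _
    · obtain ⟨z, T', h1, h2, h3, h4, h5⟩ := ih hP.of_cons hw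
      have haT' : a' ∉ T'.support := fun hmem =>
        ((Walk.cons_isPath_iff h P').mp hP).2 (h3 _ hmem)
      refine ⟨z, Walk.cons h T', ?_, ?_, ?_, h4, ?_⟩
      · exact h1.cons haT'
      · simp only [Walk.length_cons]; omega
      · intro x hx
        rw [Walk.support_cons, List.mem_cons] at hx
        rcases hx with rfl | hx
        · exact Walk.start_mem_support _
        · rw [Walk.support_cons]; exact List.mem_cons_of_mem _ (h3 _ hx)
      · intro x hx hxS
        rw [Walk.support_cons, List.mem_cons] at hx
        rcases hx with rfl | hx
        · exact absurd hxS haS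
        · exact h5 _ hx hxS
lemma two_paths [DecidableEq V] {u w : V} (p : G.Walk u w) :
    ∀ (q : G.Walk u w), p.IsPath → q.IsPath → p ≠ q →
      ∃ (x : V) (c : G.Walk x x), c.IsCycle ∧ c.length ≤ p.length + q.length := by
  induction p with
  | nil =>
    intro q hp hq hne
    rw [Walk.isPath_iff_eq_nil] at hq
    exact absurd hq.symm hne
  | @cons u' a w' h p' ih =>
    intro q hp hq hne
    cases q with
    | nil =>
      rw [Walk.isPath_iff_eq_nil] at hp
      exact absurd hp (by simp)
    | @cons _ b _ h' q' =>
      by_cases hab : a = b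
      · subst hab
        have hne' : p' ≠ q' := by rintro rfl; exact hne rfl
        obtain ⟨x, c, hc, hlen⟩ := ih q' ((Walk.cons_isPath_iff h p').mp hp).1
          ((Walk.cons_isPath_iff h' q').mp hq).1 hne'
        refine ⟨x, c, hc, ?_⟩
        simp only [Walk.length_cons]
        omega
      · have hup' : u' ∉ p'.support := ((Walk.cons_isPath_iff _ _).mp hp).2
        obtain ⟨z, T, hT, hTlen, hTsub, hzS, hmeet⟩ :=
          first_meet ((Walk.cons h' q').support) p'
            ((Walk.cons_isPath_iff h p').mp hp).1 (Walk.end_mem_support _)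
        have hQ1path : ((Walk.cons h' q').takeUntil z hzS).IsPath := hq.takeUntil hzS
        have hQ1len : ((Walk.cons h' q').takeUntil z hzS).length ≤ (Walk.cons h' q').length :=
          Walk.length_takeUntil_le _ hzS
        refine ⟨u', Walk.cons h (T.append ((Walk.cons h' q').takeUntil z hzS).reverse), ?_, ?_⟩
        · rw [Walk.cons_isCycle_iff]
          constructor
          · apply path_append hT hQ1path.reverse
            intro x hxT hxR
            rw [Walk.support_reverse, List.mem_reverse] at hxR
            exact hmeet x hxT (Walk.support_takeUntil_subset _ hzS hxR)
          · rw [Walk.edges_append, List.mem_append]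
            rintro (hmem | hmem)
            · exact hup' (hTsub _ (Walk.fst_mem_support_of_mem_edges T hmem))
            · rw [Walk.edges_reverse, List.mem_reverse] at hmem
              have h1 : s(u', a) ∈ (Walk.cons h' q').edges :=
                Walk.edges_takeUntil_subset _ hzS hmem
              have h2 := head_edge hq h1
              rw [Walk.getVert_cons_succ, Walk.getVert_zero] at h2
              exact hab h2
        · simp only [Walk.length_cons, Walk.length_append, Walk.length_reverse] at *
          omega

lemma cons_inj_sigma {v x u1 u2 : V} (h1 : G.Adj x u1) (h2 : G.Adj x u2)
    (p1 : G.Walk u1 v) (p2 : G.Walk u2 v)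
    (he : Walk.cons h1 p1 = Walk.cons h2 p2) :
    (⟨u1, p1⟩ : Σ u, G.Walk u v) = ⟨u2, p2⟩ := by
  injection he with e1 e2 e3 e4
  subst e2
  rw [eq_of_heq e4]

/-- The set of one-step extensions (at the front) of a path ending at `v`. -/
def extFun [Fintype V] [DecidableEq V] (G : SimpleGraph V) [DecidableRel G.Adj] (v : V)
    (s : Σ u : V, G.Walk u v) : Finset (Σ u : V, G.Walk u v) :=
  ((G.neighborFinset s.1).filter (fun x => x ∉ s.2.support)).attach.image
    (fun xh => ⟨xh.1, Walk.cons (by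
        have hx := Finset.mem_filter.mp xh.2
        rw [SimpleGraph.mem_neighborFinset] at hx
        exact hx.1.symm) s.2⟩)

lemma mem_extFun [Fintype V] [DecidableEq V] {G : SimpleGraph V} [DecidableRel G.Adj] {v : V}
    {s t : Σ u : V, G.Walk u v} :
    t ∈ extFun G v s ↔ ∃ (x : V) (hx : G.Adj x s.1), x ∉ s.2.support ∧
      t = ⟨x, Walk.cons hx s.2⟩ := by
  constructor
  · intro ht
    obtain ⟨xh, -, rfl⟩ := Finset.mem_image.mp ht
    have hx := Finset.mem_filter.mp xh.2
    rw [SimpleGraph.mem_neighborFinset] at hx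
    exact ⟨xh.1, hx.1.symm, hx.2, rfl⟩
  · rintro ⟨x, hx, hsup, rfl⟩
    apply Finset.mem_image.mpr
    refine ⟨⟨x, ?_⟩, Finset.mem_attach _ _, rfl⟩
    rw [Finset.mem_filter, SimpleGraph.mem_neighborFinset]
    exact ⟨hx.symm, hsup⟩

lemma card_extFun [Fintype V] [DecidableEq V] (G : SimpleGraph V) [DecidableRel G.Adj] (v : V)
    (s : Σ u : V, G.Walk u v) :
    (extFun G v s).card = ((G.neighborFinset s.1).filter (fun x => x ∉ s.2.support)).card := by
  rw [extFun, Finset.card_image_of_injOn, Finset.card_attach]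
  intro a _ b _ hab
  have : a.1 = b.1 := congrArg Sigma.fst hab
  exact Subtype.ext this
lemma moore {V : Type*} [Fintype V] [DecidableEq V] (G : SimpleGraph V) [DecidableRel G.Adj]
    (v : V) (r : ℕ) (hdeg : ∀ u : V, 3 ≤ G.degree u) (hr : 1 ≤ r)
    (hno : ∀ (x : V) (c : G.Walk x x), c.IsCycle → 2 * r < c.length) :
    3 * 2 ^ r ≤ Fintype.card V + 2 := by
  set Q : ℕ → Finset (Σ u : V, G.Walk u v) :=
    fun k => Finset.univ.sigma (fun u => (G.finsetWalkLength k u v).filter (fun p => p.IsPath))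
    with hQ
  have hmemQ : ∀ (k : ℕ) (s : Σ u : V, G.Walk u v),
      s ∈ Q k ↔ s.2.length = k ∧ s.2.IsPath := by
    intro k s
    simp [hQ, Finset.mem_sigma, Finset.mem_filter, SimpleGraph.mem_finsetWalkLength_iff]
  -- extensions land in the next level
  have hextsub : ∀ (k : ℕ) (s : Σ u : V, G.Walk u v), s ∈ Q k →
      extFun G v s ⊆ Q (k + 1) := by
    intro k s hs t ht
    obtain ⟨x, hx, hsup, rfl⟩ := mem_extFun.mp ht
    obtain ⟨hlen, hpath⟩ := (hmemQ k s).mp hs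
    rw [hmemQ]
    exact ⟨by simp [Walk.length_cons, hlen], (Walk.cons_isPath_iff _ _).mpr ⟨hpath, hsup⟩⟩
  -- extensions of distinct elements are disjoint
  have hextinj : ∀ (s t a : Σ u : V, G.Walk u v), a ∈ extFun G v s → a ∈ extFun G v t →
      s = t := by
    intro s t a has hat
    obtain ⟨x, hx, hsup, rfl⟩ := mem_extFun.mp has
    obtain ⟨x', hx', hsup', heq⟩ := mem_extFun.mp hat
    obtain ⟨e1, e2⟩ := Sigma.mk.inj_iff.mp heq
    subst e1
    have := cons_inj_sigma hx hx' s.2 t.2 (eq_of_heq e2)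
    obtain ⟨e3, e4⟩ := Sigma.mk.inj_iff.mp this
    exact Sigma.ext e3 e4
  -- extension count
  have hcard2 : ∀ (k : ℕ) (s : Σ u : V, G.Walk u v), s ∈ Q k → k + 1 ≤ r →
      2 ≤ (extFun G v s).card := by
    intro k s hs hkr
    obtain ⟨hlen, hpath⟩ := (hmemQ k s).mp hs
    rw [card_extFun]
    have hposle : (G.neighborFinset s.1).filter (fun x => x ∈ s.2.support) ⊆
        {s.2.getVert 1} := by
      intro x hxmem
      rw [Finset.mem_filter, SimpleGraph.mem_neighborFinset] at hxmem
      obtain ⟨hadj, hsupx⟩ := hxmem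
      by_cases he : s(s.1, x) ∈ s.2.edges
      · rw [Finset.mem_singleton]
        exact (head_edge hpath he).symm ▸ rfl
      · exfalso
        obtain ⟨c, hc, hclen⟩ := closing_cycle hpath hsupx hadj he
        have := hno _ c hc
        omega
    have hple : ((G.neighborFinset s.1).filter (fun x => x ∈ s.2.support)).card ≤ 1 := by
      have := Finset.card_le_card hposle
      simpa using this
    have hsplit := Finset.card_filter_add_card_filter_not
      (s := G.neighborFinset s.1) (p := fun x => x ∈ s.2.support)
    have hdegs := hdeg s.1
    rw [← SimpleGraph.card_neighborFinset_eq_degree] at hdegs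
    omega
  -- base level
  have hQ0 : (⟨v, Walk.nil⟩ : Σ u : V, G.Walk u v) ∈ Q 0 := by
    rw [hmemQ]; exact ⟨rfl, Walk.IsPath.nil⟩
  have hbase : 3 ≤ (Q 1).card := by
    have hsub := hextsub 0 _ hQ0
    refine le_trans ?_ (Finset.card_le_card hsub)
    rw [card_extFun]
    have : (G.neighborFinset v).filter
        (fun x => x ∉ (Walk.nil : G.Walk v v).support) = G.neighborFinset v := by
      apply Finset.filter_true_of_mem
      intro x hxmem
      rw [SimpleGraph.mem_neighborFinset] at hxmem
      simp [Walk.support_nil, hxmem.ne']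
    rw [this, SimpleGraph.card_neighborFinset_eq_degree]
    exact hdeg v
  -- growth
  have hgrow : ∀ k : ℕ, k + 1 ≤ r → 2 * (Q k).card ≤ (Q (k + 1)).card := by
    intro k hkr
    have hbiU : (Q k).biUnion (extFun G v) ⊆ Q (k + 1) :=
      Finset.biUnion_subset.mpr (fun s hs => hextsub k s hs)
    have hdisj : ∀ s ∈ Q k, ∀ t ∈ Q k, s ≠ t → Disjoint (extFun G v s) (extFun G v t) := by
      intro s _ t _ hst
      rw [Finset.disjoint_left]
      intro a has hat
      exact hst (hextinj s t a has hat)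
    calc 2 * (Q k).card = ∑ _s ∈ Q k, 2 := by
          rw [Finset.sum_const, smul_eq_mul, mul_comm]
      _ ≤ ∑ s ∈ Q k, (extFun G v s).card :=
          Finset.sum_le_sum (fun s hs => hcard2 k s hs hkr)
      _ = ((Q k).biUnion (extFun G v)).card := (Finset.card_biUnion hdisj).symm
      _ ≤ (Q (k + 1)).card := Finset.card_le_card hbiU
  -- power lower bound
  have hpow : ∀ k : ℕ, 1 ≤ k → k ≤ r → 3 * 2 ^ (k - 1) ≤ (Q k).card := by
    intro k
    induction k with
    | zero => omega
    | succ m ihm =>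
      intro _ hkr
      rcases Nat.eq_zero_or_pos m with rfl | hm
      · simp only [show 0+1-1=0 from rfl, pow_zero, mul_one]
        exact hbase
      · obtain ⟨j, rfl⟩ : ∃ j, m = j + 1 := ⟨m - 1, by omega⟩
        have h1 := ihm (by omega) (by omega)
        have h2 := hgrow (j + 1) (by omega)
        have h3 : (3:ℕ) * 2 ^ (j + 1) = 2 * (3 * 2 ^ j) := by ring
        rw [show j + 1 + 1 - 1 = j + 1 from rfl]
        rw [show j + 1 - 1 = j from rfl] at h1
        omega
  -- sum lower bound
  have hsum : ∀ m : ℕ, m ≤ r → 3 * 2 ^ m ≤ (∑ k ∈ Finset.range (m + 1), (Q k).card) + 2 := by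
    intro m
    induction m with
    | zero =>
      intro _
      have h1 : 1 ≤ (Q 0).card := Finset.card_pos.mpr ⟨_, hQ0⟩
      rw [Finset.sum_range_one]
      omega
    | succ m ihm =>
      intro hmr
      have h1 := ihm (by omega)
      have h2 := hpow (m + 1) (by omega) hmr
      have h3 : (3:ℕ) * 2 ^ (m + 1) = 3 * 2 ^ m + 3 * 2 ^ m := by ring
      have h4 : m + 1 - 1 = m := by omega
      rw [Finset.sum_range_succ]
      rw [h4] at h2
      omega
  -- injectivity of endpoints over the union
  set T : Finset (Σ u : V, G.Walk u v) := (Finset.range (r + 1)).biUnion Q with hT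
  have hTdisj : ∀ j ∈ Finset.range (r + 1), ∀ k ∈ Finset.range (r + 1), j ≠ k →
      Disjoint (Q j) (Q k) := by
    intro j _ k _ hjk
    rw [Finset.disjoint_left]
    intro s hsj hsk
    rw [hmemQ] at hsj hsk
    exact hjk (hsj.1 ▸ hsk.1 ▸ rfl)
  have hTcard : T.card = ∑ k ∈ Finset.range (r + 1), (Q k).card :=
    Finset.card_biUnion hTdisj
  have hinj : Set.InjOn (fun s : Σ u : V, G.Walk u v => s.1) T := by
    rintro ⟨u1, p1⟩ hs ⟨u2, p2⟩ ht he
    simp only at he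
    subst he
    obtain ⟨j, hj, hsj⟩ := Finset.mem_biUnion.mp hs
    obtain ⟨k, hk, htk⟩ := Finset.mem_biUnion.mp ht
    rw [hmemQ] at hsj htk
    rw [Finset.mem_range] at hj hk
    by_contra hne
    have hpne : p1 ≠ p2 := by
      rintro rfl
      exact hne rfl
    obtain ⟨x, c, hc, hclen⟩ := two_paths p1 p2 hsj.2 htk.2 hpne
    have := hno _ c hc
    have e1 : p1.length = j := hsj.1
    have e2 : p2.length = k := htk.1
    omega
  have hTle : T.card ≤ Fintype.card V := by
    rw [← Finset.card_image_of_injOn hinj]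
    exact Finset.card_le_univ _
  have := hsum r le_rfl
  omega

end ShortCycleHelpers

/-- Every finite simple graph with minimum degree at least 3 contains a cycle
of length at most `2 · log₂ |V|`. -/
theorem short_cycle_of_min_degree_three {V : Type*} [Fintype V] (G : SimpleGraph V)
    [DecidableRel G.Adj] (hV : 1 ≤ Fintype.card V) (hdeg : ∀ v : V, 3 ≤ G.degree v) :
    ∃ (v : V) (c : G.Walk v v), c.IsCycle ∧
      (c.length : ℝ) ≤ 2 * Real.logb 2 (Fintype.card V) := by
  classical
  obtain ⟨v⟩ : Nonempty V := Fintype.card_pos_iff.mp hV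
  have hn4 : 4 ≤ Fintype.card V := by
    have h1 := hdeg v
    have h2 := G.degree_lt_card_verts v
    omega
  set n := Fintype.card V with hn
  set r := Nat.log 2 n with hr
  have hr1 : 1 ≤ r := by
    rw [hr]
    exact (Nat.le_log_iff_pow_le (by norm_num) (by omega)).mpr (by omega)
  have hlogb : (r : ℝ) ≤ Real.logb 2 n := by
    have hpow : (2 : ℝ) ^ r ≤ (n : ℝ) := by
      exact_mod_cast Nat.pow_log_le_self 2 (show n ≠ 0 by omega)
    have h2 : Real.logb 2 ((2 : ℝ) ^ r) = r := by
      rw [Real.logb_pow, Real.logb_self_eq_one (by norm_num : (1:ℝ) < 2), mul_one]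
    calc (r : ℝ) = Real.logb 2 ((2 : ℝ) ^ r) := h2.symm
      _ ≤ Real.logb 2 n :=
        Real.logb_le_logb_of_le (by norm_num) (by positivity) hpow
  by_contra hcon
  push_neg at hcon
  have hno : ∀ (x : V) (c : G.Walk x x), c.IsCycle → 2 * r < c.length := by
    intro x c hc
    by_contra hle
    push_neg at hle
    have h1 := hcon x c hc
    have h2 : (c.length : ℝ) ≤ 2 * (r : ℝ) := by exact_mod_cast hle
    linarith
  have hmoore := moore G v r hdeg hr1 hno
  have hlt : n < 2 ^ (r + 1) := Nat.lt_pow_succ_log_self (by norm_num) n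
  have h2r : 2 ≤ 2 ^ r := by
    calc (2:ℕ) = 2 ^ 1 := rfl
    _ ≤ 2 ^ r := Nat.pow_le_pow_right (by norm_num) hr1
  have hps : (2:ℕ) ^ (r + 1) = 2 * 2 ^ r := by ring
  omega
end

section
/- In any finite graph G = (V, E) (multigraphs with loops allowed) there exists a collection of pairwise edge-disjoint cycles containing at least (|E| − |V|)/(2·log₂|V|) cycles. -/
set_option linter.unusedSectionVars false

/-- A cycle in a multigraph given by an endpoint map `ι : E → Sym2 V`: a nonempty sequence
of distinct edges `es` and distinct vertices `vs` (of the same length `n`) such that the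
`j`-th edge joins the `j`-th vertex to the `(j+1 mod n)`-th vertex.  Loops (`n = 1`) and
pairs of parallel edges (`n = 2`) count as cycles. -/
def IsMultigraphCycle {V E : Type*} (ι : E → Sym2 V) (n : ℕ) (hn : 0 < n)
    (es : Fin n → E) (vs : Fin n → V) : Prop :=
  Function.Injective es ∧ Function.Injective vs ∧
    ∀ j : Fin n, ι (es j) = s(vs j, vs ⟨(j.val + 1) % n, Nat.mod_lt _ hn⟩)


open Finset

namespace MGC

attribute [local instance] Classical.propDecidable

variable {V E : Type*} [Fintype V] [Fintype E] [DecidableEq V] [DecidableEq E]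

variable (ι : E → Sym2 V)

/-- edges of `F` incident to `v`. -/
def inc (F : Finset E) (v : V) : Finset E := F.filter (fun e => v ∈ ι e)

/-- A non-backtracking walk with edges in `F`. -/
structure GWalk (F : Finset E) where
  len : ℕ
  vs : ℕ → V
  es : ℕ → E
  mem : ∀ i < len, es i ∈ F
  adj : ∀ i < len, ι (es i) = s(vs i, vs (i+1))
  nb : ∀ i, i + 1 < len → es i ≠ es (i+1)

/-- A cycle with edges in `F`. -/
structure GCycle (F : Finset E) where
  len : ℕ
  pos : 0 < len
  vs : ℕ → V
  es : ℕ → E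
  mem : ∀ i < len, es i ∈ F
  adj : ∀ i < len, ι (es i) = s(vs i, vs ((i+1) % len))
  vinj : ∀ i < len, ∀ j < len, vs i = vs j → i = j
  einj : ∀ i < len, ∀ j < len, es i = es j → i = j

variable {ι}

/-- number of vertices of the cycle lying in `B`. -/
def bcount {F : Finset E} (B : Finset V) (c : GCycle ι F) : ℕ :=
  ((range c.len).filter (fun i => c.vs i ∈ B)).card

theorem master {F : Finset E} (w : GWalk ι F) :
    ∀ n a b, b - a ≤ n → a < b → b ≤ w.len → w.vs a = w.vs b →
    ∃ c : GCycle ι F, c.len ≤ b - a ∧ ∀ i < c.len, ∃ j, a ≤ j ∧ j < b ∧ c.vs i = w.vs j := by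
  intro n
  induction n with
  | zero => intro a b h hab _ _; omega
  | succ n IH =>
    intro a b hn hab hb hclosed
    by_cases hrep : ∃ c d, a ≤ c ∧ c < d ∧ d ≤ b ∧ d - c < b - a ∧ w.vs c = w.vs d
    · obtain ⟨c, d, hac, hcd, hdb, hlt, hvcd⟩ := hrep
      obtain ⟨cy, h1, h2⟩ := IH c d (by omega) hcd (by omega) hvcd
      exact ⟨cy, by omega, fun i hi => by
        obtain ⟨j, hj1, hj2, hj3⟩ := h2 i hi
        exact ⟨j, by omega, by omega, hj3⟩⟩
    · push_neg at hrep
      -- injectivity on [a, b)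
      have hinj : ∀ x y, a ≤ x → x < b → a ≤ y → y < b → w.vs x = w.vs y → x = y := by
        intro x y hax hxb hay hyb hxy
        rcases lt_trichotomy x y with h | h | h
        · exact absurd hxy (hrep x y hax h (by omega) (by omega))
        · exact h
        · exact absurd hxy.symm (hrep y x hay h (by omega) (by omega))
      set m := b - a with hm
      have hm1 : 1 ≤ m := by omega
      -- the candidate cycle
      have hedge : ∀ i j, i < j → j < m → w.es (a + i) ≠ w.es (a + j) := by
        intro i j hij hjm heq
        have hia : a + i < w.len := by omega
        have hja : a + j < w.len := by omega
        have h1 := w.adj (a+i) hia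
        have h2 := w.adj (a+j) hja
        rw [heq, h2] at h1
        rw [Sym2.eq_iff] at h1
        rcases h1 with ⟨h1, _⟩ | ⟨h1, h2'⟩
        · exact absurd (hinj (a+j) (a+i) (by omega) (by omega) (by omega) (by omega) h1) (by omega)
        · -- h1 : w.vs (a+j) = w.vs (a+i+1), h2' : w.vs (a+j+1) = w.vs (a+i)
          by_cases hib : a + i + 1 = b
          · -- then w.vs (a+j) = w.vs b = w.vs a, so j = 0, contradiction
            rw [hib, ← hclosed] at h1
            have := hinj (a+j) a (by omega) (by omega) (by omega) (by omega) h1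
            omega
          · have := hinj (a+j) (a+i+1) (by omega) (by omega) (by omega) (by omega) h1
            have hji : j = i + 1 := by omega
            exact w.nb (a+i) (by omega) (by rw [heq, hji]; ring_nf)
      have hadj : ∀ i < m, ι (w.es (a+i)) = s(w.vs (a+i), w.vs (a + ((i+1) % m))) := by
        intro i hi
        by_cases hlast : i + 1 = m
        · have : (i+1) % m = 0 := by rw [hlast, Nat.mod_self]
          rw [this]
          have := w.adj (a+i) (by omega)
          rw [this]
          have : a + i + 1 = b := by omega
          rw [this, ← hclosed]
          rfl
        · have : (i+1) % m = i + 1 := Nat.mod_eq_of_lt (by omega)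
          rw [this]
          have := w.adj (a+i) (by omega)
          rw [this, show a + (i+1) = a + i + 1 by omega]
      have hvinj : ∀ i < m, ∀ j < m, w.vs (a+i) = w.vs (a+j) → i = j := by
        intro i hi j hj hv
        have := hinj (a+i) (a+j) (by omega) (by omega) (by omega) (by omega) hv
        omega
      have heinj : ∀ i < m, ∀ j < m, w.es (a+i) = w.es (a+j) → i = j := by
        intro i hi j hj he
        rcases lt_trichotomy i j with h | h | h
        · exact absurd he (hedge i j h hj)
        · exact h
        · exact absurd he.symm (hedge j i h hi)
      exact ⟨⟨m, by omega, fun i => w.vs (a + i), fun i => w.es (a + i),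
        fun i hi => w.mem _ (by omega),
        hadj, hvinj, heinj⟩, le_refl _, fun i hi => ⟨a + i, by omega,
          by have : i < m := hi; omega, rfl⟩⟩

variable {F : Finset E} {W : Finset V}

/-- truncation of a walk -/
def GWalk.take (w : GWalk ι F) (k : ℕ) (hk : k ≤ w.len) : GWalk ι F :=
  ⟨k, w.vs, w.es, fun i hi => w.mem i (by omega), fun i hi => w.adj i (by omega),
    fun i hi => w.nb i (by omega)⟩

@[simp] theorem GWalk.take_len (w : GWalk ι F) (k : ℕ) (hk : k ≤ w.len) :
    (w.take k hk).len = k := rfl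
@[simp] theorem GWalk.take_vs (w : GWalk ι F) (k : ℕ) (hk : k ≤ w.len) :
    (w.take k hk).vs = w.vs := rfl
@[simp] theorem GWalk.take_es (w : GWalk ι F) (k : ℕ) (hk : k ≤ w.len) :
    (w.take k hk).es = w.es := rfl

/-- Branch vertices: degree at least 3. -/
def Br (ι : E → Sym2 V) (F : Finset E) (W : Finset V) : Finset V :=
  W.filter (fun v => 3 ≤ (inc ι F v).card)

/-- context for a graph on `W` with min degree 2 -/
structure Ctx (ι : E → Sym2 V) (F : Finset E) (W : Finset V) : Prop where
  endW : ∀ e ∈ F, ∀ v, v ∈ ι e → v ∈ W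
  deg2 : ∀ v ∈ W, 2 ≤ (inc ι F v).card

theorem Ctx.exists_other (H : Ctx ι F W) {e : E} (he : e ∈ F) {v : V} (hv : v ∈ ι e) :
    ∃ e2, e2 ∈ F ∧ e2 ≠ e ∧ v ∈ ι e2 := by
  have hvW : v ∈ W := H.endW e he v hv
  have h2 : 1 < (inc ι F v).card := lt_of_lt_of_le (by norm_num) (H.deg2 v hvW)
  obtain ⟨e2, he2, hne⟩ := Finset.exists_mem_ne h2 e
  rw [inc, Finset.mem_filter] at he2
  exact ⟨e2, he2.1, hne, he2.2⟩

/-- next step of the canonical trajectory -/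
noncomputable def nxt (ι : E → Sym2 V) (F : Finset E) : V × E → V × E := fun p =>
  if h : p.1 ∈ ι p.2 then
    (if h2 : ∃ e2, e2 ∈ F ∧ e2 ≠ p.2 ∧ (Sym2.Mem.other' h) ∈ ι e2 then
      ((Sym2.Mem.other' h), h2.choose) else ((Sym2.Mem.other' h), p.2))
  else p

def GS (ι : E → Sym2 V) (F : Finset E) (p : V × E) : Prop := p.2 ∈ F ∧ p.1 ∈ ι p.2

theorem nxt_spec (H : Ctx ι F W) {p : V × E} (hp : GS ι F p) :
    GS ι F (nxt ι F p) ∧ ι p.2 = s(p.1, (nxt ι F p).1) ∧ (nxt ι F p).2 ≠ p.2 ∧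
      (nxt ι F p).1 ∈ ι p.2 := by
  obtain ⟨hpF, hpv⟩ := hp
  have h2 : ∃ e2, e2 ∈ F ∧ e2 ≠ p.2 ∧ (Sym2.Mem.other' hpv) ∈ ι e2 :=
    H.exists_other hpF (Sym2.other_mem' hpv)
  have hnxt : nxt ι F p = ((Sym2.Mem.other' hpv), h2.choose) := by
    rw [nxt, dif_pos hpv, dif_pos h2]
  obtain ⟨hc1, hc2, hc3⟩ := h2.choose_spec
  rw [hnxt]
  exact ⟨⟨hc1, hc3⟩, (Sym2.other_spec' hpv).symm, hc2, Sym2.other_mem' hpv⟩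

theorem traj_gs (H : Ctx ι F W) {p : V × E} (hp : GS ι F p) (i : ℕ) :
    GS ι F ((nxt ι F)^[i] p) := by
  induction i with
  | zero => exact hp
  | succ n IH => rw [Function.iterate_succ_apply']; exact (nxt_spec H IH).1

/-- the trajectory of length `N` starting from a good state is an NB walk -/
noncomputable def trajWalk (H : Ctx ι F W) {p : V × E} (hp : GS ι F p) (N : ℕ) :
    GWalk ι F where
  len := N
  vs := fun i => ((nxt ι F)^[i] p).1
  es := fun i => ((nxt ι F)^[i] p).2
  mem := fun i _ => (traj_gs H hp i).1
  adj := fun i _ => by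
    show ι ((nxt ι F)^[i] p).2 = s(((nxt ι F)^[i] p).1, ((nxt ι F)^[i+1] p).1)
    rw [Function.iterate_succ_apply']
    exact (nxt_spec H (traj_gs H hp i)).2.1
  nb := fun i _ => by
    show ((nxt ι F)^[i] p).2 ≠ ((nxt ι F)^[i+1] p).2
    rw [Function.iterate_succ_apply']
    exact fun h => (nxt_spec H (traj_gs H hp i)).2.2.1 h.symm

theorem trajWalk_vs_mem (H : Ctx ι F W) {p : V × E} (hp : GS ι F p) (N i : ℕ) :
    (trajWalk H hp N).vs i ∈ W := by
  obtain ⟨h1, h2⟩ := traj_gs H hp i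
  exact H.endW _ h1 _ h2

/-- existence of some cycle -/
theorem exists_gcycle (H : Ctx ι F W) (hF : F.Nonempty) : Nonempty (GCycle ι F) := by
  obtain ⟨e, he⟩ := hF
  have hv : (ι e).out.1 ∈ ι e := Sym2.out_fst_mem _
  have hp : GS ι F ((ι e).out.1, e) := ⟨he, hv⟩
  set w := trajWalk H hp (W.card + 1) with hw
  have hmap : ∀ i ∈ Finset.range (W.card + 1 + 1), w.vs i ∈ W := fun i _ =>
    trajWalk_vs_mem H hp _ i
  obtain ⟨a, ha, b, hb, hab, hvab⟩ :=
    Finset.exists_ne_map_eq_of_card_lt_of_maps_to (s := Finset.range (W.card + 1 + 1))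
      (by rw [Finset.card_range]; omega) hmap
  simp only [Finset.mem_range] at ha hb
  rcases lt_or_gt_of_ne hab with h | h
  · obtain ⟨c, -, -⟩ := master w (b - a) a b (le_refl _) h
      (by change b ≤ W.card + 1; omega) hvab
    exact ⟨c⟩
  · obtain ⟨c, -, -⟩ := master w (a - b) b a (le_refl _) h
      (by change a ≤ W.card + 1; omega) hvab.symm
    exact ⟨c⟩

/-- Existence of threads: under `NS1` (no cycle with at most one branch vertex),
from any good state we can follow the walk until hitting a branch vertex. -/
theorem exists_thread (H : Ctx ι F W)
    (NS1 : ∀ c : GCycle ι F, 1 < bcount (Br ι F W) c)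
    {x : V} {e' : E} (he' : e' ∈ F) (hxe : x ∈ ι e') :
    ∃ T : GWalk ι F, 1 ≤ T.len ∧ T.vs 0 = x ∧ T.es 0 = e' ∧
      (∀ i, 0 < i → i < T.len → T.vs i ∉ Br ι F W) ∧ T.vs T.len ∈ Br ι F W := by
  classical
  have hp : GS ι F (x, e') := ⟨he', hxe⟩
  set N := W.card + 1 with hN
  set w := trajWalk H hp N with hw
  have hlen : w.len = N := rfl
  by_cases hstop : ∃ i, (1 ≤ i ∧ i ≤ N) ∧ w.vs i ∈ Br ι F W
  · obtain ⟨⟨hτ1, hτN⟩, hτB⟩ := Nat.find_spec hstop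
    have hlenN : w.len = N := rfl
    refine ⟨w.take (Nat.find hstop) (by omega), ?_, ?_, ?_, ?_, ?_⟩
    · simpa using hτ1
    · rfl
    · rfl
    · intro i hi0 hiτ hiB
      simp only [GWalk.take_len] at hiτ
      simp only [GWalk.take_vs] at hiB
      exact Nat.find_min hstop hiτ ⟨⟨hi0, by omega⟩, hiB⟩
    · simpa using hτB
  · exfalso
    push_neg at hstop
    have hmap : ∀ i ∈ Finset.range (N + 1), w.vs i ∈ W := fun i _ =>
      trajWalk_vs_mem H hp _ i
    obtain ⟨a, ha, b, hb, hab, hvab⟩ :=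
      Finset.exists_ne_map_eq_of_card_lt_of_maps_to (s := Finset.range (N + 1))
        (by rw [Finset.card_range]; omega) hmap
    simp only [Finset.mem_range] at ha hb
    have key : ∀ a b : ℕ, a < b → b ≤ N → w.vs a = w.vs b → False := by
      intro a b h hbN hvab
      obtain ⟨c, -, htr⟩ := master w (b - a) a b (le_refl _) h (by omega) hvab
      have hbc : bcount (Br ι F W) c ≤ 1 := by
        rw [bcount]
        refine Finset.card_le_one.mpr ?_
        intro i hi j hj
        simp only [Finset.mem_filter, Finset.mem_range] at hi hj
        obtain ⟨ji, hji1, hji2, hji3⟩ := htr i hi.1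
        obtain ⟨jj, hjj1, hjj2, hjj3⟩ := htr j hj.1
        have hji0 : ji = 0 := by
          by_contra hne
          exact hstop ji ⟨by omega, by omega⟩ (hji3 ▸ hi.2)
        have hjj0 : jj = 0 := by
          by_contra hne
          exact hstop jj ⟨by omega, by omega⟩ (hjj3 ▸ hj.2)
        exact c.vinj i hi.1 j hj.1 (by rw [hji3, hjj3, hji0, hjj0])
      exact absurd (NS1 c) (by omega)
    rcases lt_or_gt_of_ne hab with h | h
    · exact key a b h (by omega) hvab
    · exact key b a h (by omega) hvab.symm

/-- in a set of cardinality at most two containing `f`, all elements different from `f`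
agree -/
theorem eq_of_card_le_two {s : Finset E} (hs : s.card ≤ 2) {f a b : E} (hf : f ∈ s)
    (ha : a ∈ s) (hb : b ∈ s) (haf : a ≠ f) (hbf : b ≠ f) : a = b := by
  by_contra hne
  have : ({a, b, f} : Finset E) ⊆ s := by
    intro x hx
    simp only [Finset.mem_insert, Finset.mem_singleton] at hx
    rcases hx with h | h | h <;> subst h <;> assumption
  have hcard : ({a, b, f} : Finset E).card = 3 := by
    rw [Finset.card_insert_of_notMem (by simp [hne, haf]),
      Finset.card_insert_of_notMem (by simp [hbf]), Finset.card_singleton]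
  have := Finset.card_le_card this
  omega

theorem sym2_cancel {a b w : V} (h : s(a, w) = s(b, w)) : a = b := by
  rw [Sym2.eq_iff] at h
  rcases h with ⟨h1, -⟩ | ⟨h1, h2⟩
  · exact h1
  · rw [h1, h2]

/-- Backward determinism of threads. -/
theorem thread_back (H : Ctx ι F W) :
    ∀ n (T1 T2 : GWalk ι F), T1.len ≤ n →
    (1 ≤ T1.len) → (T1.vs 0 ∈ Br ι F W) → (∀ i, 0 < i → i < T1.len → T1.vs i ∉ Br ι F W) →
    (1 ≤ T2.len) → (T2.vs 0 ∈ Br ι F W) → (∀ i, 0 < i → i < T2.len → T2.vs i ∉ Br ι F W) →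
    T1.vs T1.len = T2.vs T2.len → T1.es (T1.len - 1) = T2.es (T2.len - 1) →
    T1.vs 0 = T2.vs 0 ∧ T1.es 0 = T2.es 0 := by
  intro n
  induction n with
  | zero => intro T1 T2 h h1; omega
  | succ n IH =>
    intro T1 T2 hn h1len h1B h1int h2len h2B h2int hend hlast
    -- previous vertices agree
    have hT1a := T1.adj (T1.len - 1) (by omega)
    have hT2a := T2.adj (T2.len - 1) (by omega)
    rw [show T1.len - 1 + 1 = T1.len by omega] at hT1a
    rw [show T2.len - 1 + 1 = T2.len by omega] at hT2a
    have hprev : T1.vs (T1.len - 1) = T2.vs (T2.len - 1) := by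
      apply sym2_cancel (w := T1.vs T1.len)
      rw [← hT1a, hlast, hT2a, hend]
    rcases Nat.lt_or_ge T1.len 2 with hl1 | hl1
    · have hl1' : T1.len = 1 := by omega
      rcases Nat.lt_or_ge T2.len 2 with hl2 | hl2
      · have hl2' : T2.len = 1 := by omega
        rw [hl1', hl2'] at hprev hlast
        norm_num at hprev hlast
        exact ⟨hprev, hlast⟩
      · exfalso
        rw [hl1'] at hprev
        simp only [Nat.sub_self] at hprev
        exact h2int (T2.len - 1) (by omega) (by omega) (hprev ▸ h1B)
    · rcases Nat.lt_or_ge T2.len 2 with hl2 | hl2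
      · exfalso
        have hl2' : T2.len = 1 := by omega
        rw [hl2'] at hprev
        simp only [Nat.sub_self] at hprev
        exact h1int (T1.len - 1) (by omega) (by omega) (hprev ▸ h2B)
      · -- both length ≥ 2; the common previous vertex z has degree 2
        set z := T1.vs (T1.len - 1) with hz
        have hzB : z ∉ Br ι F W := h1int _ (by omega) (by omega)
        have hzF : z ∈ ι (T1.es (T1.len - 1)) := by rw [hT1a]; exact Sym2.mem_mk_left _ _
        have hzW : z ∈ W := H.endW _ (T1.mem _ (by omega)) _ hzF
        have hdeg : (inc ι F z).card ≤ 2 := by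
          by_contra hc
          exact hzB (Finset.mem_filter.mpr ⟨hzW, by omega⟩)
        -- the three last edges are in inc z
        have hmem1 : T1.es (T1.len - 1) ∈ inc ι F z :=
          Finset.mem_filter.mpr ⟨T1.mem _ (by omega), hzF⟩
        have hmem1' : T1.es (T1.len - 2) ∈ inc ι F z := by
          refine Finset.mem_filter.mpr ⟨T1.mem _ (by omega), ?_⟩
          have := T1.adj (T1.len - 2) (by omega)
          rw [this, show T1.len - 2 + 1 = T1.len - 1 by omega]
          exact Sym2.mem_mk_right _ _
        have hmem2' : T2.es (T2.len - 2) ∈ inc ι F z := by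
          refine Finset.mem_filter.mpr ⟨T2.mem _ (by omega), ?_⟩
          have := T2.adj (T2.len - 2) (by omega)
          rw [this, show T2.len - 2 + 1 = T2.len - 1 by omega, ← hprev]
          exact Sym2.mem_mk_right _ _
        have hne1 : T1.es (T1.len - 2) ≠ T1.es (T1.len - 1) := by
          have := T1.nb (T1.len - 2) (by omega)
          rwa [show T1.len - 2 + 1 = T1.len - 1 by omega] at this
        have hne2 : T2.es (T2.len - 2) ≠ T1.es (T1.len - 1) := by
          have := T2.nb (T2.len - 2) (by omega)
          rw [show T2.len - 2 + 1 = T2.len - 1 by omega] at this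
          rw [hlast]
          exact this
        have heq2 : T1.es (T1.len - 2) = T2.es (T2.len - 2) :=
          eq_of_card_le_two hdeg hmem1 hmem1' hmem2' hne1 hne2
        -- recurse on truncated walks
        have := IH (T1.take (T1.len - 1) (by omega)) (T2.take (T2.len - 1) (by omega))
          (by simp; omega) (by simp; omega) (by simpa using h1B)
          (by intro i h1 h2; simp only [GWalk.take_len] at h2
              simp only [GWalk.take_vs]; exact h1int i h1 (by omega))
          (by simp; omega) (by simpa using h2B)
          (by intro i h1 h2; simp only [GWalk.take_len] at h2
              simp only [GWalk.take_vs]; exact h2int i h1 (by omega))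
          (by simpa using hprev)
          (by simp only [GWalk.take_len, GWalk.take_es]
              rw [show T1.len - 1 - 1 = T1.len - 2 by omega,
                show T2.len - 1 - 1 = T2.len - 2 by omega]; exact heq2)
        simpa using this

end MGC

namespace MGC

variable {V E : Type*} [Fintype V] [Fintype E] [DecidableEq V] [DecidableEq E]
variable {ι : E → Sym2 V} {F : Finset E} {W : Finset V}

/-- reversal of a walk -/
def GWalk.rev (w : GWalk ι F) : GWalk ι F where
  len := w.len
  vs := fun i => w.vs (w.len - i)
  es := fun i => w.es (w.len - 1 - i)
  mem := fun i hi => w.mem _ (by omega)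
  adj := fun i hi => by
    show ι (w.es (w.len - 1 - i)) = s(w.vs (w.len - i), w.vs (w.len - (i+1)))
    have h := w.adj (w.len - 1 - i) (by omega)
    rw [show w.len - 1 - i + 1 = w.len - i by omega] at h
    rw [h, show w.len - (i+1) = w.len - 1 - i by omega]
    exact Sym2.eq_swap
  nb := fun i hi => by
    show w.es (w.len - 1 - i) ≠ w.es (w.len - 1 - (i+1))
    have h := w.nb (w.len - 1 - (i+1)) (by omega)
    rw [show w.len - 1 - (i+1) + 1 = w.len - 1 - i by omega] at h
    exact fun hh => h hh.symm

@[simp] theorem GWalk.rev_len (w : GWalk ι F) : w.rev.len = w.len := rfl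
theorem GWalk.rev_vs (w : GWalk ι F) (i : ℕ) : w.rev.vs i = w.vs (w.len - i) := rfl
theorem GWalk.rev_es (w : GWalk ι F) (i : ℕ) : w.rev.es i = w.es (w.len - 1 - i) := rfl

/-- concatenation of two walks -/
def GWalk.app (w1 w2 : GWalk ι F) (h : w2.vs 0 = w1.vs w1.len)
    (hnb : w1.es (w1.len - 1) ≠ w2.es 0 ∨ w1.len = 0 ∨ w2.len = 0) : GWalk ι F where
  len := w1.len + w2.len
  vs := fun i => if i ≤ w1.len then w1.vs i else w2.vs (i - w1.len)
  es := fun i => if i < w1.len then w1.es i else w2.es (i - w1.len)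
  mem := fun i hi => by
    show (if i < w1.len then w1.es i else w2.es (i - w1.len)) ∈ F
    by_cases h1 : i < w1.len
    · rw [if_pos h1]; exact w1.mem i h1
    · rw [if_neg h1]; exact w2.mem _ (by omega)
  adj := fun i hi => by
    show ι (if i < w1.len then w1.es i else w2.es (i - w1.len)) =
      s((if i ≤ w1.len then w1.vs i else w2.vs (i - w1.len)),
        (if i + 1 ≤ w1.len then w1.vs (i+1) else w2.vs (i + 1 - w1.len)))
    by_cases h1 : i < w1.len
    · rw [if_pos h1, if_pos (by omega : i ≤ w1.len), if_pos (by omega : i + 1 ≤ w1.len)]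
      exact w1.adj i h1
    · rw [if_neg h1, if_neg (by omega : ¬(i + 1 ≤ w1.len))]
      by_cases h2 : i = w1.len
      · rw [if_pos (by omega : i ≤ w1.len), h2, ← h]
        have := w2.adj 0 (by omega)
        simpa [show w1.len + 1 - w1.len = 1 by omega, h2] using this
      · rw [if_neg (by omega : ¬(i ≤ w1.len))]
        have := w2.adj (i - w1.len) (by omega)
        rwa [show i - w1.len + 1 = i + 1 - w1.len by omega] at this
  nb := fun i hi => by
    show (if i < w1.len then w1.es i else w2.es (i - w1.len)) ≠
      (if i + 1 < w1.len then w1.es (i+1) else w2.es (i + 1 - w1.len))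
    by_cases h1 : i + 1 < w1.len
    · rw [if_pos h1, if_pos (by omega : i < w1.len)]
      exact w1.nb i h1
    · by_cases h2 : i + 1 = w1.len
      · rw [if_pos (by omega : i < w1.len), if_neg (by omega : ¬(i + 1 < w1.len))]
        rcases hnb with h3 | h3 | h3
        · rw [show i + 1 - w1.len = 0 by omega, show i = w1.len - 1 by omega]
          exact h3
        · omega
        · omega
      · rw [if_neg (by omega : ¬(i < w1.len)), if_neg (by omega : ¬(i + 1 < w1.len))]
        have := w2.nb (i - w1.len) (by omega)
        rwa [show i - w1.len + 1 = i + 1 - w1.len by omega] at this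

theorem GWalk.app_len (w1 w2 : GWalk ι F) (h hnb) :
    (w1.app w2 h hnb).len = w1.len + w2.len := rfl
theorem GWalk.app_vs_le (w1 w2 : GWalk ι F) (h hnb) {i : ℕ} (hi : i ≤ w1.len) :
    (w1.app w2 h hnb).vs i = w1.vs i := if_pos hi
theorem GWalk.app_vs_ge (w1 w2 : GWalk ι F) (h hnb) {i : ℕ} (hi : w1.len ≤ i) :
    (w1.app w2 h hnb).vs i = w2.vs (i - w1.len) := by
  by_cases h2 : i = w1.len
  · show (if i ≤ w1.len then w1.vs i else w2.vs (i - w1.len)) = _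
    rw [if_pos (by omega : i ≤ w1.len), h2, Nat.sub_self, h]
  · exact if_neg (by omega)
theorem GWalk.app_es_lt (w1 w2 : GWalk ι F) (h hnb) {i : ℕ} (hi : i < w1.len) :
    (w1.app w2 h hnb).es i = w1.es i := if_pos hi
theorem GWalk.app_es_ge (w1 w2 : GWalk ι F) (h hnb) {i : ℕ} (hi : w1.len ≤ i) :
    (w1.app w2 h hnb).es i = w2.es (i - w1.len) := if_neg (by omega)

/-- `p` is the end-state of a thread from `x` with first edge `e'`. -/
def StepT (ι : E → Sym2 V) (F : Finset E) (W : Finset V) (x : V) (e' : E) (p : V × E) :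
    Prop :=
  ∃ T : GWalk ι F, 1 ≤ T.len ∧ T.vs 0 = x ∧ T.es 0 = e' ∧
    (∀ i, 0 < i → i < T.len → T.vs i ∉ Br ι F W) ∧
    T.vs T.len = p.1 ∧ T.es (T.len - 1) = p.2 ∧ p.1 ∈ Br ι F W

open Classical in
/-- successor states of a branch vertex `x`, avoiding arrival edge `a`. -/
noncomputable def nexts (ι : E → Sym2 V) (F : Finset E) (W : Finset V) (x : V)
    (a : Option E) : Finset (V × E) :=
  Finset.univ.filter
    (fun p => ∃ e', e' ∈ inc ι F x ∧ (∀ b ∈ a, e' ≠ b) ∧ StepT ι F W x e' p)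

theorem nexts_card (H : Ctx ι F W) (NS1 : ∀ c : GCycle ι F, 1 < bcount (Br ι F W) c)
    {x : V} (hx : x ∈ Br ι F W) (a : Option E) :
    (inc ι F x).card - (a.elim 0 (fun _ => 1)) ≤ (nexts ι F W x a).card := by
  classical
  set s := (inc ι F x) \ (a.elim ∅ (fun b => {b})) with hs
  have hcard : (inc ι F x).card - (a.elim 0 (fun _ => 1)) ≤ s.card := by
    cases a with
    | none => simp [hs]
    | some b =>
      have := Finset.le_card_sdiff ({b} : Finset E) (inc ι F x)
      simpa [hs] using this
  refine le_trans hcard (Finset.card_le_card_of_injOn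
    (fun e' => if h : ∃ p, StepT ι F W x e' p then h.choose else (x, e')) ?_ ?_)
  · intro e' he'
    rw [hs, Finset.mem_coe, Finset.mem_sdiff] at he'
    obtain ⟨he'i, he'a⟩ := he'
    rw [inc, Finset.mem_filter] at he'i
    obtain ⟨T, hT1, hT2, hT3, hT4, hT5⟩ := exists_thread H NS1 he'i.1 he'i.2
    have hex : ∃ p, StepT ι F W x e' p := ⟨(T.vs T.len, T.es (T.len - 1)),
      T, hT1, hT2, hT3, hT4, rfl, rfl, hT5⟩
    show (if h : ∃ p, StepT ι F W x e' p then h.choose else (x, e')) ∈ nexts ι F W x a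
    rw [dif_pos hex]
    rw [nexts, Finset.mem_filter]
    refine ⟨Finset.mem_univ _, e', Finset.mem_filter.mpr he'i, ?_, hex.choose_spec⟩
    intro b hb
    cases a with
    | none => simp at hb
    | some a0 =>
      simp only [Option.mem_def, Option.some.injEq] at hb
      subst hb
      simp at he'a
      exact he'a
  · intro e1 h1 e2 h2 heq
    replace heq : (if h : ∃ p, StepT ι F W x e1 p then h.choose else (x, e1)) =
      (if h : ∃ p, StepT ι F W x e2 p then h.choose else (x, e2)) := heq
    rw [hs] at h1 h2
    simp only [Finset.coe_sdiff, Set.mem_diff, Finset.mem_coe] at h1 h2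
    have hex1 : ∃ p, StepT ι F W x e1 p := by
      rw [inc, Finset.mem_filter] at h1
      obtain ⟨T, hT1, hT2, hT3, hT4, hT5⟩ := exists_thread H NS1 h1.1.1 h1.1.2
      exact ⟨(T.vs T.len, T.es (T.len - 1)), T, hT1, hT2, hT3, hT4, rfl, rfl, hT5⟩
    have hex2 : ∃ p, StepT ι F W x e2 p := by
      rw [inc, Finset.mem_filter] at h2
      obtain ⟨T, hT1, hT2, hT3, hT4, hT5⟩ := exists_thread H NS1 h2.1.1 h2.1.2
      exact ⟨(T.vs T.len, T.es (T.len - 1)), T, hT1, hT2, hT3, hT4, rfl, rfl, hT5⟩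
    rw [dif_pos hex1, dif_pos hex2] at heq
    obtain ⟨T1, hT11, hT12, hT13, hT14, hT15, hT16, -⟩ := hex1.choose_spec
    obtain ⟨T2, hT21, hT22, hT23, hT24, hT25, hT26, -⟩ := hex2.choose_spec
    rw [heq] at hT15 hT16
    have := thread_back H T1.len T1 T2 (le_refl _) hT11 (hT12 ▸ hx) hT14
      hT21 (hT22 ▸ hx) hT24 (hT15.trans hT25.symm) (hT16.trans hT26.symm)
    rw [hT13, hT23] at this
    exact this.2

end MGC

namespace MGC

variable {V E : Type*} [Fintype V] [Fintype E] [DecidableEq V] [DecidableEq E]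
variable {ι : E → Sym2 V} {F : Finset E} {W : Finset V}

attribute [local instance] Classical.propDecidable

def endSt (x0 : V) (a0 : Option E) (l : List (V × E)) : V × Option E :=
  match l.getLast? with
  | none => (x0, a0)
  | some p => (p.1, some p.2)

@[simp] theorem endSt_nil (x0 : V) (a0 : Option E) : endSt x0 a0 [] = (x0, a0) := rfl

@[simp] theorem endSt_concat (x0 : V) (a0 : Option E) (l : List (V × E)) (p : V × E) :
    endSt x0 a0 (l ++ [p]) = (p.1, some p.2) := by
  rw [endSt, List.getLast?_concat]

noncomputable def Fam (ι : E → Sym2 V) (F : Finset E) (W : Finset V) (x0 : V)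
    (a0 : Option E) : ℕ → Finset (List (V × E))
  | 0 => {[]}
  | (k+1) => (Fam ι F W x0 a0 k).biUnion
      (fun l => (nexts ι F W (endSt x0 a0 l).1 (endSt x0 a0 l).2).image (fun p => l ++ [p]))

theorem fam_zero {x0 : V} {a0 : Option E} : Fam ι F W x0 a0 0 = {[]} := rfl

theorem mem_fam_succ {x0 : V} {a0 : Option E} {k : ℕ} {l' : List (V × E)} :
    l' ∈ Fam ι F W x0 a0 (k+1) ↔ ∃ l ∈ Fam ι F W x0 a0 k,
      ∃ p ∈ nexts ι F W (endSt x0 a0 l).1 (endSt x0 a0 l).2, l' = l ++ [p] := by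
  constructor
  · intro h
    rw [Fam, Finset.mem_biUnion] at h
    obtain ⟨l, hl, h2⟩ := h
    rw [Finset.mem_image] at h2
    obtain ⟨p, hp, h3⟩ := h2
    exact ⟨l, hl, p, hp, h3.symm⟩
  · rintro ⟨l, hl, p, hp, rfl⟩
    rw [Fam, Finset.mem_biUnion]
    exact ⟨l, hl, Finset.mem_image.mpr ⟨p, hp, rfl⟩⟩

theorem fam_length {x0 : V} {a0 : Option E} :
    ∀ k, ∀ l ∈ Fam ι F W x0 a0 k, l.length = k := by
  intro k
  induction k with
  | zero => intro l hl; rw [fam_zero, Finset.mem_singleton] at hl; simp [hl]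
  | succ n IH =>
    intro l hl
    obtain ⟨m, hm, p, hp, rfl⟩ := mem_fam_succ.mp hl
    simp [IH m hm]

theorem fam_prefix {x0 : V} {a0 : Option E} {k : ℕ} {l : List (V × E)} {p : V × E}
    (h : l ++ [p] ∈ Fam ι F W x0 a0 (k+1)) (hlen : l.length = k) :
    l ∈ Fam ι F W x0 a0 k ∧ p ∈ nexts ι F W (endSt x0 a0 l).1 (endSt x0 a0 l).2 := by
  obtain ⟨m, hm, q, hq, heq⟩ := mem_fam_succ.mp h
  have hlm : l.length = m.length := by rw [hlen, fam_length k m hm]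
  obtain ⟨h1, h2⟩ := List.append_inj heq hlm
  subst h1
  simp only [List.cons.injEq, and_true] at h2
  subst h2
  exact ⟨hm, hq⟩

theorem nexts_fst_B {x : V} {a : Option E} {p : V × E} (hp : p ∈ nexts ι F W x a) :
    p.1 ∈ Br ι F W := by
  rw [nexts, Finset.mem_filter] at hp
  obtain ⟨-, e', -, -, T, hT⟩ := hp
  exact hT.2.2.2.2.2.2

theorem fam_endSt_B {x0 : V} {a0 : Option E} {k : ℕ} (hk : 1 ≤ k) {l : List (V × E)}
    (hl : l ∈ Fam ι F W x0 a0 k) : (endSt x0 a0 l).1 ∈ Br ι F W := by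
  obtain ⟨k', rfl⟩ : ∃ k', k = k' + 1 := ⟨k - 1, by omega⟩
  obtain ⟨m, hm, p, hp, rfl⟩ := mem_fam_succ.mp hl
  rw [endSt_concat]
  exact nexts_fst_B hp

theorem fam_card_step {x0 : V} {a0 : Option E} {k c : ℕ}
    (hB : ∀ l ∈ Fam ι F W x0 a0 k,
      c ≤ (nexts ι F W (endSt x0 a0 l).1 (endSt x0 a0 l).2).card) :
    c * (Fam ι F W x0 a0 k).card ≤ (Fam ι F W x0 a0 (k+1)).card := by
  classical
  have hdisj : ∀ l1 ∈ Fam ι F W x0 a0 k, ∀ l2 ∈ Fam ι F W x0 a0 k, l1 ≠ l2 →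
      Disjoint ((nexts ι F W (endSt x0 a0 l1).1 (endSt x0 a0 l1).2).image (fun p => l1 ++ [p]))
        ((nexts ι F W (endSt x0 a0 l2).1 (endSt x0 a0 l2).2).image (fun p => l2 ++ [p])) := by
    intro l1 h1 l2 h2 hne
    rw [Finset.disjoint_left]
    intro z hz1 hz2
    rw [Finset.mem_image] at hz1 hz2
    obtain ⟨p1, -, hp1⟩ := hz1
    obtain ⟨p2, -, hp2⟩ := hz2
    rw [← hp2] at hp1
    have hlen : l1.length = l2.length := by
      rw [fam_length k l1 h1, fam_length k l2 h2]
    exact hne (List.append_inj hp1 hlen).1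
  show c * (Fam ι F W x0 a0 k).card ≤ ((Fam ι F W x0 a0 k).biUnion _).card
  rw [Finset.card_biUnion hdisj]
  calc c * (Fam ι F W x0 a0 k).card = ∑ _l ∈ Fam ι F W x0 a0 k, c := by
        rw [Finset.sum_const, smul_eq_mul, mul_comm]
    _ ≤ _ := by
        refine Finset.sum_le_sum ?_
        intro l hl
        rw [Finset.card_image_of_injective _ (fun p q h => by simpa using h)]
        exact hB l hl

theorem fam_card {x0 : V} {a0 : Option E} {c0 : ℕ}
    (h0 : c0 ≤ (nexts ι F W x0 a0).card)
    (hstep : ∀ k, 1 ≤ k → ∀ l ∈ Fam ι F W x0 a0 k,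
      2 ≤ (nexts ι F W (endSt x0 a0 l).1 (endSt x0 a0 l).2).card) :
    ∀ k, c0 * 2^k ≤ (Fam ι F W x0 a0 (k+1)).card := by
  intro k
  induction k with
  | zero =>
    have := fam_card_step (ι := ι) (F := F) (W := W) (x0 := x0) (a0 := a0) (k := 0) (c := c0)
      (by intro l hl; rw [fam_zero, Finset.mem_singleton] at hl; subst hl; simpa using h0)
    simpa [fam_zero] using this
  | succ n IH =>
    have h2 := fam_card_step (ι := ι) (F := F) (W := W) (x0 := x0) (a0 := a0) (k := n+1)
      (c := 2) (by intro l hl; exact hstep (n+1) (by omega) l hl)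
    calc c0 * 2^(n+1) = 2 * (c0 * 2^n) := by ring
      _ ≤ 2 * (Fam ι F W x0 a0 (n+1)).card := by omega
      _ ≤ _ := h2

end MGC

namespace MGC

variable {V E : Type*} [Fintype V] [Fintype E] [DecidableEq V] [DecidableEq E]
variable {ι : E → Sym2 V} {F : Finset E} {W : Finset V}

attribute [local instance] Classical.propDecidable

theorem fam_walk {x0 : V} {a0 : Option E} :
    ∀ k, 1 ≤ k → ∀ l ∈ Fam ι F W x0 a0 k,
    ∃ Z : GWalk ι F, 1 ≤ Z.len ∧ Z.vs 0 = x0 ∧ Z.vs Z.len = (endSt x0 a0 l).1 ∧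
      (∀ f, (endSt x0 a0 l).2 = some f → Z.es (Z.len - 1) = f) ∧
      (∀ b ∈ a0, Z.es 0 ≠ b) ∧
      (∀ i, i ≤ Z.len → Z.vs i ∈ Br ι F W → Z.vs i ∈ insert x0 (l.map Prod.fst).toFinset) := by
  intro k
  induction k with
  | zero => omega
  | succ n IH =>
    intro _ l hl
    obtain ⟨m, hm, p, hp, rfl⟩ := mem_fam_succ.mp hl
    rw [nexts, Finset.mem_filter] at hp
    obtain ⟨-, e', he'inc, he'avoid, T, hT1, hT2, hT3, hT4, hT5, hT6, hT7⟩ := hp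
    rcases Nat.eq_zero_or_pos n with hn | hn
    · -- base case : n = 0, m = []
      subst hn
      rw [fam_zero, Finset.mem_singleton] at hm
      subst hm
      simp only [endSt_nil] at hT2 he'avoid ⊢
      refine ⟨T, hT1, hT2, ?_, ?_, ?_, ?_⟩
      · rw [endSt_concat]; exact hT5
      · rw [endSt_concat]; intro f hf
        simp only [Option.some.injEq] at hf
        rw [← hf]; exact hT6
      · intro b hb; rw [hT3]; exact he'avoid b hb
      · intro i hi hiB
        rcases Nat.eq_zero_or_pos i with h0 | h0
        · subst h0; rw [hT2]; exact Finset.mem_insert_self _ _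
        · rcases Nat.lt_or_ge i T.len with hlt | hge
          · exact absurd hiB (hT4 i h0 hlt)
          · have : i = T.len := by omega
            subst this
            rw [hT5]
            simp
    · -- step case
      obtain ⟨Z', hZ1, hZ2, hZ3, hZ4, hZ5, hZ6⟩ := IH hn m hm
      -- endSt of m is (y, some g)
      obtain ⟨n', rfl⟩ : ∃ n', n = n' + 1 := ⟨n - 1, by omega⟩
      obtain ⟨m', hm', q, hq, rfl⟩ := mem_fam_succ.mp hm
      rw [endSt_concat] at hT2 he'avoid hZ3 hZ4 ⊢
      have hjun : T.vs 0 = Z'.vs Z'.len := by rw [hT2, hZ3]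
      have hnbj : Z'.es (Z'.len - 1) ≠ T.es 0 ∨ Z'.len = 0 ∨ T.len = 0 := by
        left
        rw [hZ4 q.2 rfl, hT3]
        exact fun hh => (he'avoid q.2 rfl) hh.symm
      refine ⟨Z'.app T hjun hnbj, ?_, ?_, ?_, ?_, ?_, ?_⟩
      · show 1 ≤ Z'.len + T.len; omega
      · rw [GWalk.app_vs_le _ _ _ _ (by omega : 0 ≤ Z'.len)]; exact hZ2
      · show (Z'.app T hjun hnbj).vs (Z'.len + T.len) = p.1
        rw [GWalk.app_vs_ge _ _ _ _ (by omega : Z'.len ≤ Z'.len + T.len),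
          show Z'.len + T.len - Z'.len = T.len by omega]
        exact hT5
      · intro f hf
        simp only [Option.some.injEq] at hf
        subst hf
        show (Z'.app T hjun hnbj).es (Z'.len + T.len - 1) = p.2
        rw [GWalk.app_es_ge _ _ _ _ (by omega : Z'.len ≤ Z'.len + T.len - 1),
          show Z'.len + T.len - 1 - Z'.len = T.len - 1 by omega]
        exact hT6
      · intro b hb
        rw [GWalk.app_es_lt _ _ _ _ (by omega : 0 < Z'.len)]
        exact hZ5 b hb
      · intro i hi hiB
        show _ ∈ insert x0 (((m' ++ [q] ++ [p]).map Prod.fst).toFinset)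
        rcases le_or_gt i Z'.len with hle | hgt
        · rw [GWalk.app_vs_le _ _ _ _ hle] at hiB ⊢
          have := hZ6 i hle hiB
          simp only [Finset.mem_insert, List.mem_toFinset, List.mem_map] at this ⊢
          rcases this with h | ⟨w, hw1, hw2⟩
          · exact Or.inl h
          · exact Or.inr ⟨w, by simp only [List.mem_append] at hw1 ⊢; tauto, hw2⟩
        · rw [GWalk.app_vs_ge _ _ _ _ (by omega : Z'.len ≤ i)] at hiB ⊢
          have hi' : i - Z'.len ≤ T.len := by
            show i - Z'.len ≤ T.len
            have : i ≤ Z'.len + T.len := hi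
            omega
          rcases Nat.lt_or_ge (i - Z'.len) T.len with hlt | hge
          · exact absurd hiB (hT4 _ (by omega) hlt)
          · have : i - Z'.len = T.len := by omega
            rw [this] at hiB ⊢
            rw [hT5]
            simp
    
/-- Two walks with common endpoints, different last edges, and branch vertices inside a
small set `A` yield a short cycle: contradiction with `NS`. -/
theorem collision {s : ℕ} (NS : ∀ c : GCycle ι F, s < bcount (Br ι F W) c)
    {Z1 Z2 : GWalk ι F} (A : Finset V) (hA : A.card ≤ s)
    (h1 : 1 ≤ Z1.len) (h2 : 1 ≤ Z2.len)
    (hstart : Z1.vs 0 = Z2.vs 0) (hend : Z1.vs Z1.len = Z2.vs Z2.len)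
    (hlast : Z1.es (Z1.len - 1) ≠ Z2.es (Z2.len - 1))
    (htr1 : ∀ i ≤ Z1.len, Z1.vs i ∈ Br ι F W → Z1.vs i ∈ A)
    (htr2 : ∀ i ≤ Z2.len, Z2.vs i ∈ Br ι F W → Z2.vs i ∈ A) : False := by
  have hjun : Z2.rev.vs 0 = Z1.vs Z1.len := by
    rw [GWalk.rev_vs, Nat.sub_zero, hend]
  have hnbj : Z1.es (Z1.len - 1) ≠ Z2.rev.es 0 ∨ Z1.len = 0 ∨ Z2.rev.len = 0 := by
    left
    rw [GWalk.rev_es, Nat.sub_zero]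
    exact hlast
  set Z := Z1.app Z2.rev hjun hnbj with hZ
  have hZlen : Z.len = Z1.len + Z2.len := rfl
  have hclosed : Z.vs 0 = Z.vs Z.len := by
    rw [hZ, GWalk.app_vs_le _ _ _ _ (by omega : 0 ≤ Z1.len), hZlen,
      GWalk.app_vs_ge _ _ _ _ (by omega : Z1.len ≤ Z1.len + Z2.len),
      show Z1.len + Z2.len - Z1.len = Z2.len by omega, GWalk.rev_vs]
    simp only [GWalk.rev_len, Nat.sub_self]
    rw [hstart]
  obtain ⟨c, -, htr⟩ := master Z Z.len 0 Z.len (by omega) (by omega) (by omega) hclosed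
  have hbc : bcount (Br ι F W) c ≤ A.card := by
    rw [bcount]
    refine Finset.card_le_card_of_injOn (fun i => c.vs i) ?_ ?_
    · intro i hi
      rw [Finset.mem_coe, Finset.mem_filter, Finset.mem_range] at hi
      obtain ⟨j, -, hj2, hj3⟩ := htr i hi.1
      show c.vs i ∈ A
      rw [hj3]
      rw [hj3] at hi
      rcases le_or_gt j Z1.len with hle | hgt
      · rw [hZ, GWalk.app_vs_le _ _ _ _ hle] at hi ⊢
        exact htr1 j hle hi.2
      · rw [hZ, GWalk.app_vs_ge _ _ _ _ (by omega : Z1.len ≤ j), GWalk.rev_vs] at hi ⊢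
        refine htr2 _ (by omega) hi.2
    · intro i hi j hj hij
      rw [Finset.coe_filter] at hi hj
      simp only [Set.mem_setOf_eq, Finset.mem_range] at hi hj
      exact c.vinj i hi.1 j hj.1 hij
  have := NS c
  omega

end MGC

namespace MGC

variable {V E : Type*} [Fintype V] [Fintype E] [DecidableEq V] [DecidableEq E]
variable {ι : E → Sym2 V} {F : Finset E} {W : Finset V}

attribute [local instance] Classical.propDecidable

theorem nexts_stepT {x : V} {a : Option E} {p : V × E} (hp : p ∈ nexts ι F W x a) :
    ∃ e', e' ∈ inc ι F x ∧ (∀ b ∈ a, e' ≠ b) ∧ StepT ι F W x e' p := by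
  rw [nexts, Finset.mem_filter] at hp
  exact hp.2

theorem fam_endSt_B' (H : Ctx ι F W) {x0 : V} {a0 : Option E} (hx0 : x0 ∈ Br ι F W)
    {k : ℕ} {l : List (V × E)} (hl : l ∈ Fam ι F W x0 a0 k) :
    (endSt x0 a0 l).1 ∈ Br ι F W := by
  rcases Nat.eq_zero_or_pos k with h | h
  · subst h; rw [fam_zero, Finset.mem_singleton] at hl; subst hl; simpa using hx0
  · exact fam_endSt_B h hl

theorem fam_endInj (H : Ctx ι F W) {s : ℕ}
    (NS : ∀ c : GCycle ι F, s < bcount (Br ι F W) c)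
    {x0 : V} {a0 : Option E} (hx0 : x0 ∈ Br ι F W) :
    ∀ k, 2*k ≤ s → ∀ l1 ∈ Fam ι F W x0 a0 k, ∀ l2 ∈ Fam ι F W x0 a0 k,
      (endSt x0 a0 l1).1 = (endSt x0 a0 l2).1 → l1 = l2 := by
  intro k
  induction k with
  | zero =>
    intro _ l1 h1 l2 h2 _
    rw [fam_zero, Finset.mem_singleton] at h1 h2
    rw [h1, h2]
  | succ k IH =>
    intro hs l1 hl1 l2 hl2 hend
    obtain ⟨m1, hm1, p, hp, rfl⟩ := mem_fam_succ.mp hl1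
    obtain ⟨m2, hm2, q, hq, rfl⟩ := mem_fam_succ.mp hl2
    rw [endSt_concat, endSt_concat] at hend
    simp only at hend
    obtain ⟨e1, he1inc, he1av, T1, hT11, hT12, hT13, hT14, hT15, hT16, hT17⟩ := nexts_stepT hp
    obtain ⟨e2, he2inc, he2av, T2, hT21, hT22, hT23, hT24, hT25, hT26, hT27⟩ := nexts_stepT hq
    have hB1 : (endSt x0 a0 m1).1 ∈ Br ι F W := fam_endSt_B' H hx0 hm1
    have hB2 : (endSt x0 a0 m2).1 ∈ Br ι F W := fam_endSt_B' H hx0 hm2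
    by_cases hpq : p.2 = q.2
    · -- same last edge: backward determinism
      have := thread_back H T1.len T1 T2 (le_refl _) hT11 (hT12 ▸ hB1) hT14
        hT21 (hT22 ▸ hB2) hT24 (by rw [hT15, hT25, hend]) (by rw [hT16, hT26, hpq])
      have hstarts : (endSt x0 a0 m1).1 = (endSt x0 a0 m2).1 := by
        rw [← hT12, ← hT22]; exact this.1
      have hm12 : m1 = m2 := IH (by omega) m1 hm1 m2 hm2 hstarts
      subst hm12
      have : p = q := Prod.ext hend hpq
      rw [this]
    · -- different last edges: collision gives a short cycle
      exfalso
      obtain ⟨Z1, hZ11, hZ12, hZ13, hZ14, hZ15, hZ16⟩ := fam_walk (k+1) (by omega) _ hl1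
      obtain ⟨Z2, hZ21, hZ22, hZ23, hZ24, hZ25, hZ26⟩ := fam_walk (k+1) (by omega) _ hl2
      set t1 := ((m1 ++ [p]).map Prod.fst).toFinset with ht1
      set t2 := ((m2 ++ [q]).map Prod.fst).toFinset with ht2
      have hp1t1 : p.1 ∈ t1 := by
        rw [ht1, List.mem_toFinset]
        exact List.mem_map_of_mem (f := Prod.fst) (by simp)
      have hp1t2 : p.1 ∈ t2 := by
        rw [ht2, List.mem_toFinset, hend]
        exact List.mem_map_of_mem (f := Prod.fst) (by simp)
      have hinter : 1 ≤ (t1 ∩ t2).card :=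
        Finset.card_pos.mpr ⟨p.1, Finset.mem_inter.mpr ⟨hp1t1, hp1t2⟩⟩
      have ht1c : t1.card ≤ k + 1 := by
        refine le_trans (List.toFinset_card_le _) ?_
        rw [List.length_map]
        simp [fam_length (k+1) _ hl1]
      have ht2c : t2.card ≤ k + 1 := by
        refine le_trans (List.toFinset_card_le _) ?_
        rw [List.length_map]
        simp [fam_length (k+1) _ hl2]
      have hAcard : (insert x0 (t1 ∪ t2)).card ≤ s := by
        have h1 := Finset.card_insert_le x0 (t1 ∪ t2)
        have h2 := Finset.card_union_add_card_inter t1 t2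
        omega
      refine collision NS (insert x0 (t1 ∪ t2)) hAcard hZ11 hZ21 (by rw [hZ12, hZ22]) ?_ ?_ ?_ ?_
      · rw [hZ13, hZ23, endSt_concat, endSt_concat]
        exact hend
      · rw [hZ14 p.2 (by rw [endSt_concat]), hZ24 q.2 (by rw [endSt_concat])]
        exact hpq
      · intro i hi hiB
        have := hZ16 i hi hiB
        simp only [Finset.mem_insert] at this ⊢
        rcases this with h | h
        · exact Or.inl h
        · exact Or.inr (Finset.mem_union_left _ h)
      · intro i hi hiB
        have := hZ26 i hi hiB
        simp only [Finset.mem_insert] at this ⊢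
        rcases this with h | h
        · exact Or.inl h
        · exact Or.inr (Finset.mem_union_right _ h)

theorem branch_nonempty (H : Ctx ι F W) (hF : F.Nonempty) {s : ℕ}
    (NS : ∀ c : GCycle ι F, s < bcount (Br ι F W) c) : (Br ι F W).Nonempty := by
  by_contra h
  rw [Finset.not_nonempty_iff_eq_empty] at h
  obtain ⟨c⟩ := exists_gcycle H hF
  have : bcount (Br ι F W) c = 0 := by
    rw [bcount, h]
    simp
  have := NS c
  omega

theorem br_deg {x : V} (hx : x ∈ Br ι F W) : 3 ≤ (inc ι F x).card :=
  (Finset.mem_filter.mp hx).2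

theorem nexts_card_some (H : Ctx ι F W)
    (NS1 : ∀ c : GCycle ι F, 1 < bcount (Br ι F W) c)
    {x : V} (hx : x ∈ Br ι F W) (b : E) : 2 ≤ (nexts ι F W x (some b)).card := by
  have := nexts_card H NS1 hx (some b)
  have hd := br_deg hx
  simp only [Option.elim_some] at this
  omega

theorem fam_hstep (H : Ctx ι F W) (NS1 : ∀ c : GCycle ι F, 1 < bcount (Br ι F W) c)
    {x0 : V} {a0 : Option E} (hx0 : x0 ∈ Br ι F W) :
    ∀ k, 1 ≤ k → ∀ l ∈ Fam ι F W x0 a0 k,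
      2 ≤ (nexts ι F W (endSt x0 a0 l).1 (endSt x0 a0 l).2).card := by
  intro k hk l hl
  have hB := fam_endSt_B hk hl
  obtain ⟨k', rfl⟩ : ∃ k', k = k' + 1 := ⟨k - 1, by omega⟩
  obtain ⟨m, hm, p, hp, rfl⟩ := mem_fam_succ.mp hl
  rw [endSt_concat] at hB ⊢
  exact nexts_card_some H NS1 hB p.2

/-- ODD CASE: no cycle with at most `2r` branch vertices forces `3·2^(r-1)` branch
vertices. -/
theorem branch_odd (H : Ctx ι F W) (hF : F.Nonempty) {r : ℕ} (hr : 1 ≤ r)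
    (NS : ∀ c : GCycle ι F, 2*r < bcount (Br ι F W) c) :
    3 * 2^(r-1) ≤ (Br ι F W).card := by
  have NS1 : ∀ c : GCycle ι F, 1 < bcount (Br ι F W) c := by
    intro c; have := NS c; omega
  obtain ⟨x0, hx0⟩ := branch_nonempty H hF NS
  have h0 : 3 ≤ (nexts ι F W x0 none).card := by
    have := nexts_card H NS1 hx0 none
    have hd := br_deg hx0
    simp only [Option.elim_none, Nat.sub_zero] at this
    omega
  have hcard := fam_card h0 (fam_hstep H NS1 hx0) (r-1)
  rw [show r - 1 + 1 = r by omega] at hcard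
  have hinj := fam_endInj (a0 := none) H NS hx0 r (by omega)
  have himg : (Fam ι F W x0 none r).image (fun l => (endSt x0 none l).1) ⊆ Br ι F W := by
    intro y hy
    rw [Finset.mem_image] at hy
    obtain ⟨l, hl, rfl⟩ := hy
    exact fam_endSt_B hr hl
  have hic : (Fam ι F W x0 none r).card =
      ((Fam ι F W x0 none r).image (fun l => (endSt x0 none l).1)).card := by
    rw [Finset.card_image_of_injOn]
    intro l1 h1 l2 h2 h
    exact hinj l1 h1 l2 h2 h
  calc 3 * 2^(r-1) ≤ (Fam ι F W x0 none r).card := hcard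
    _ = _ := hic
    _ ≤ (Br ι F W).card := Finset.card_le_card himg

end MGC

namespace MGC

variable {V E : Type*} [Fintype V] [Fintype E] [DecidableEq V] [DecidableEq E]
variable {ι : E → Sym2 V} {F : Finset E} {W : Finset V}

attribute [local instance] Classical.propDecidable

/-- EVEN CASE: no cycle with at most `2r+1` branch vertices forces `2^(r+1)` branch
vertices. -/
theorem branch_even (H : Ctx ι F W) (hF : F.Nonempty) {r : ℕ} (hr : 1 ≤ r)
    (NS : ∀ c : GCycle ι F, 2*r + 1 < bcount (Br ι F W) c) :
    2^(r+1) ≤ (Br ι F W).card := by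
  have NS1 : ∀ c : GCycle ι F, 1 < bcount (Br ι F W) c := by
    intro c; have := NS c; omega
  obtain ⟨u0, hu0⟩ := branch_nonempty H hF NS
  obtain ⟨e0, he0⟩ := Finset.card_pos.mp (show 0 < (inc ι F u0).card by have := br_deg hu0; omega)
  have he0F : e0 ∈ F := (Finset.mem_filter.mp he0).1
  have hu0e0 : u0 ∈ ι e0 := (Finset.mem_filter.mp he0).2
  obtain ⟨T0, hT01, hT02, hT03, hT04, hT05⟩ := exists_thread H NS1 he0F hu0e0
  set v0 := T0.vs T0.len with hv0def
  set f0 := T0.es (T0.len - 1) with hf0def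
  have hv0 : v0 ∈ Br ι F W := hT05
  -- u0 ≠ v0
  have huv : u0 ≠ v0 := by
    intro heq
    obtain ⟨c, -, htr⟩ := master T0 T0.len 0 T0.len (by omega) (by omega) (le_refl _)
      (by rw [hT02, heq])
    have hbc : bcount (Br ι F W) c ≤ 1 := by
      rw [bcount]
      refine Finset.card_le_one.mpr ?_
      intro i hi j hj
      simp only [Finset.mem_filter, Finset.mem_range] at hi hj
      obtain ⟨ji, -, hji2, hji3⟩ := htr i hi.1
      obtain ⟨jj, -, hjj2, hjj3⟩ := htr j hj.1
      have hji0 : ji = 0 := by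
        by_contra hne
        exact hT04 ji (by omega) (by omega) (hji3 ▸ hi.2)
      have hjj0 : jj = 0 := by
        by_contra hne
        exact hT04 jj (by omega) (by omega) (hjj3 ▸ hj.2)
      exact c.vinj i hi.1 j hj.1 (by rw [hji3, hjj3, hji0, hjj0])
    have := NS c
    omega
  -- cross injectivity
  have cross : ∀ k, k ≤ r → ∀ l1 ∈ Fam ι F W u0 (some e0) k, ∀ l2 ∈ Fam ι F W v0 (some f0) k,
      (endSt u0 (some e0) l1).1 ≠ (endSt v0 (some f0) l2).1 := by
    intro k
    induction k with
    | zero =>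
      intro _ l1 h1 l2 h2
      rw [fam_zero, Finset.mem_singleton] at h1 h2
      subst h1; subst h2
      simpa using huv
    | succ k IH =>
      intro hkr l1 hl1 l2 hl2 heq
      obtain ⟨m1, hm1, p, hp, rfl⟩ := mem_fam_succ.mp hl1
      obtain ⟨m2, hm2, q, hq, rfl⟩ := mem_fam_succ.mp hl2
      rw [endSt_concat, endSt_concat] at heq
      simp only at heq
      obtain ⟨e1, he1inc, he1av, T1, hT11, hT12, hT13, hT14, hT15, hT16, hT17⟩ :=
        nexts_stepT hp
      obtain ⟨e2, he2inc, he2av, T2, hT21, hT22, hT23, hT24, hT25, hT26, hT27⟩ :=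
        nexts_stepT hq
      have hB1 : (endSt u0 (some e0) m1).1 ∈ Br ι F W := fam_endSt_B' H hu0 hm1
      have hB2 : (endSt v0 (some f0) m2).1 ∈ Br ι F W := fam_endSt_B' H hv0 hm2
      by_cases hpq : p.2 = q.2
      · have := thread_back H T1.len T1 T2 (le_refl _) hT11 (hT12 ▸ hB1) hT14
          hT21 (hT22 ▸ hB2) hT24 (by rw [hT15, hT25, heq]) (by rw [hT16, hT26, hpq])
        have hstarts : (endSt u0 (some e0) m1).1 = (endSt v0 (some f0) m2).1 := by
          rw [← hT12, ← hT22]; exact this.1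
        exact IH (by omega) m1 hm1 m2 hm2 hstarts
      · obtain ⟨Z1, hZ11, hZ12, hZ13, hZ14, hZ15, hZ16⟩ := fam_walk (k+1) (by omega) _ hl1
        obtain ⟨Z2, hZ21, hZ22, hZ23, hZ24, hZ25, hZ26⟩ := fam_walk (k+1) (by omega) _ hl2
        have hjun : Z2.vs 0 = T0.vs T0.len := by rw [hZ22]
        have hnbj : T0.es (T0.len - 1) ≠ Z2.es 0 ∨ T0.len = 0 ∨ Z2.len = 0 :=
          Or.inl (fun h => (hZ25 f0 rfl) h.symm)
        set Z := T0.app Z2 hjun hnbj with hZdef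
        have hZlen : Z.len = T0.len + Z2.len := rfl
        set t1 := ((m1 ++ [p]).map Prod.fst).toFinset with ht1
        set t2 := ((m2 ++ [q]).map Prod.fst).toFinset with ht2
        have hp1t1 : p.1 ∈ t1 := by
          rw [ht1, List.mem_toFinset]
          exact List.mem_map_of_mem (f := Prod.fst) (by simp)
        have hp1t2 : p.1 ∈ t2 := by
          rw [ht2, List.mem_toFinset, heq]
          exact List.mem_map_of_mem (f := Prod.fst) (by simp)
        have hinter : 1 ≤ (t1 ∩ t2).card :=
          Finset.card_pos.mpr ⟨p.1, Finset.mem_inter.mpr ⟨hp1t1, hp1t2⟩⟩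
        have ht1c : t1.card ≤ k + 1 := by
          refine le_trans (List.toFinset_card_le _) ?_
          rw [List.length_map]
          simp [fam_length (k+1) _ hl1]
        have ht2c : t2.card ≤ k + 1 := by
          refine le_trans (List.toFinset_card_le _) ?_
          rw [List.length_map]
          simp [fam_length (k+1) _ hl2]
        have hAcard : (insert u0 (insert v0 (t1 ∪ t2))).card ≤ 2*r + 1 := by
          have h1 := Finset.card_insert_le u0 (insert v0 (t1 ∪ t2))
          have h2 := Finset.card_insert_le v0 (t1 ∪ t2)
          have h3 := Finset.card_union_add_card_inter t1 t2
          omega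
        refine collision (Z1 := Z1) (Z2 := Z) NS (insert u0 (insert v0 (t1 ∪ t2))) hAcard
          hZ11 (show 1 ≤ T0.len + Z2.len by omega)
          (by rw [hZ12, hZdef, GWalk.app_vs_le _ _ _ _ (by omega : 0 ≤ T0.len), hT02])
          ?_ ?_ ?_ ?_
        · rw [hZ13, endSt_concat]
          show p.1 = Z.vs (T0.len + Z2.len)
          rw [hZdef, GWalk.app_vs_ge _ _ _ _ (by omega : T0.len ≤ T0.len + Z2.len),
            show T0.len + Z2.len - T0.len = Z2.len by omega, hZ23, endSt_concat]
          exact heq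
        · rw [hZ14 p.2 (by rw [endSt_concat])]
          show p.2 ≠ Z.es (T0.len + Z2.len - 1)
          rw [hZdef, GWalk.app_es_ge _ _ _ _ (by omega : T0.len ≤ T0.len + Z2.len - 1),
            show T0.len + Z2.len - 1 - T0.len = Z2.len - 1 by omega,
            hZ24 q.2 (by rw [endSt_concat])]
          exact hpq
        · intro i hi hiB
          have := hZ16 i hi hiB
          simp only [Finset.mem_insert] at this ⊢
          rcases this with h | h
          · exact Or.inl h
          · exact Or.inr (Or.inr (Finset.mem_union_left _ h))
        · intro i hi hiB
          rw [hZlen] at hi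
          rcases le_or_gt i T0.len with hle | hgt
          · rw [hZdef, GWalk.app_vs_le _ _ _ _ hle] at hiB ⊢
            rcases Nat.eq_zero_or_pos i with h0 | h0
            · subst h0; rw [hT02]; exact Finset.mem_insert_self _ _
            · rcases lt_or_eq_of_le hle with h | h
              · exact absurd hiB (hT04 i h0 h)
              · rw [h]
                exact Finset.mem_insert_of_mem (Finset.mem_insert_self _ _)
          · rw [hZdef, GWalk.app_vs_ge _ _ _ _ (by omega : T0.len ≤ i)] at hiB ⊢
            have := hZ26 (i - T0.len) (by omega) hiB
            simp only [Finset.mem_insert] at this ⊢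
            rcases this with h | h
            · exact Or.inr (Or.inl h)
            · exact Or.inr (Or.inr (Finset.mem_union_right _ h))
  -- conclude
  have hcU := fam_card (nexts_card_some H NS1 hu0 e0) (fam_hstep H NS1 hu0) (r-1)
  have hcV := fam_card (nexts_card_some H NS1 hv0 f0) (fam_hstep H NS1 hv0) (r-1)
  rw [show r - 1 + 1 = r by omega] at hcU hcV
  have hinjU := fam_endInj (a0 := some e0) H NS hu0 r (by omega)
  have hinjV := fam_endInj (a0 := some f0) H NS hv0 r (by omega)
  set imU := (Fam ι F W u0 (some e0) r).image (fun l => (endSt u0 (some e0) l).1) with hiU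
  set imV := (Fam ι F W v0 (some f0) r).image (fun l => (endSt v0 (some f0) l).1) with hiV
  have hUB : imU ⊆ Br ι F W := by
    intro y hy
    rw [hiU, Finset.mem_image] at hy
    obtain ⟨l, hl, rfl⟩ := hy
    exact fam_endSt_B hr hl
  have hVB : imV ⊆ Br ι F W := by
    intro y hy
    rw [hiV, Finset.mem_image] at hy
    obtain ⟨l, hl, rfl⟩ := hy
    exact fam_endSt_B hr hl
  have hdisj : Disjoint imU imV := by
    rw [Finset.disjoint_left]
    intro y hyU hyV
    rw [hiU, Finset.mem_image] at hyU
    rw [hiV, Finset.mem_image] at hyV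
    obtain ⟨l1, hl1, h1⟩ := hyU
    obtain ⟨l2, hl2, h2⟩ := hyV
    exact cross r (le_refl _) l1 hl1 l2 hl2 (h1.trans h2.symm)
  have hcardU : 2^r ≤ imU.card := by
    rw [hiU, Finset.card_image_of_injOn (fun l1 h1 l2 h2 h => hinjU l1 h1 l2 h2 h)]
    calc (2:ℕ)^r = 2 * 2^(r-1) := by
          rw [← pow_succ']
          congr 1
          omega
      _ ≤ _ := hcU
  have hcardV : 2^r ≤ imV.card := by
    rw [hiV, Finset.card_image_of_injOn (fun l1 h1 l2 h2 h => hinjV l1 h1 l2 h2 h)]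
    calc (2:ℕ)^r = 2 * 2^(r-1) := by
          rw [← pow_succ']
          congr 1
          omega
      _ ≤ _ := hcV
  calc (2:ℕ)^(r+1) = 2^r + 2^r := by ring
    _ ≤ imU.card + imV.card := by omega
    _ = (imU ∪ imV).card := (Finset.card_union_of_disjoint hdisj).symm
    _ ≤ (Br ι F W).card := Finset.card_le_card (Finset.union_subset hUB hVB)

end MGC

namespace MGC

variable {V E : Type*} [Fintype V] [Fintype E] [DecidableEq V] [DecidableEq E]
variable {ι : E → Sym2 V} {F : Finset E} {W : Finset V}

attribute [local instance] Classical.propDecidable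

theorem logb_nat_pow (m : ℕ) : Real.logb 2 ((2:ℝ)^m) = m := by
  rw [Real.logb_pow, Real.logb_self_eq_one (by norm_num)]
  ring

theorem logb_three : (3:ℝ)/2 ≤ Real.logb 2 3 := by
  have h9 : Real.logb 2 8 ≤ Real.logb 2 9 :=
    Real.logb_le_logb_of_le (by norm_num) (by norm_num) (by norm_num)
  have h8 : Real.logb 2 8 = 3 := by
    rw [show (8:ℝ) = 2^(3:ℕ) by norm_num, logb_nat_pow]
    norm_num
  have h9' : Real.logb 2 9 = 2 * Real.logb 2 3 := by
    rw [show (9:ℝ) = 3^(2:ℕ) by norm_num, Real.logb_pow]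
    push_cast; ring
  rw [h8, h9'] at h9
  linarith

/-- the CRUX: there is a cycle whose number of branch vertices is at most
`2 log₂ |V|`. -/
theorem crux (H : Ctx ι F W) (hWF : W.card < F.card) (hV : 2 ≤ Fintype.card V) :
    ∃ c : GCycle ι F,
      (bcount (Br ι F W) c : ℝ) ≤ 2 * Real.logb 2 (Fintype.card V) := by
  have hF : F.Nonempty := Finset.card_pos.mp (by omega)
  have hlogV : 1 ≤ Real.logb 2 (Fintype.card V) := by
    have := Real.logb_le_logb_of_le (b := 2) (x := 2) (y := (Fintype.card V : ℝ))
      (by norm_num) (by norm_num) (by exact_mod_cast hV)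
    rwa [Real.logb_self_eq_one (by norm_num)] at this
  have hP : ∃ b, ∃ c : GCycle ι F, bcount (Br ι F W) c = b := by
    obtain ⟨c⟩ := exists_gcycle H hF
    exact ⟨_, c, rfl⟩
  set s := Nat.find hP with hsdef
  obtain ⟨c0, hc0⟩ := Nat.find_spec hP
  have NSlow : ∀ c : GCycle ι F, s ≤ bcount (Br ι F W) c := fun c =>
    Nat.find_min' hP ⟨c, rfl⟩
  refine ⟨c0, ?_⟩
  rw [hc0, ← hsdef]
  rcases le_or_gt s 2 with hs2 | hs2
  · calc (s:ℝ) ≤ 2 := by exact_mod_cast hs2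
      _ ≤ 2 * Real.logb 2 (Fintype.card V) := by linarith
  · -- s ≥ 3
    have NS : ∀ c : GCycle ι F, s - 1 < bcount (Br ι F W) c := by
      intro c; have := NSlow c; omega
    have hbrcard : (Br ι F W).card ≤ Fintype.card V := Finset.card_le_univ _
    have logmono : ∀ m : ℕ, 0 < m → m ≤ (Br ι F W).card →
        Real.logb 2 m ≤ Real.logb 2 (Fintype.card V) := by
      intro m hm hmb
      refine Real.logb_le_logb_of_le (by norm_num) (by exact_mod_cast hm) ?_
      exact_mod_cast le_trans hmb hbrcard
    rcases Nat.even_or_odd s with he | ho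
    · -- s even, s = 2r+2 with r ≥ 1
      obtain ⟨r, hr⟩ : ∃ r, s = 2*r + 2 := by
        obtain ⟨t, ht⟩ := he; exact ⟨t - 1, by omega⟩
      have hr1 : 1 ≤ r := by omega
      have hbig := branch_even H hF hr1 (by intro c; have := NS c; omega)
      have hlog : (r:ℝ) + 1 ≤ Real.logb 2 (Fintype.card V) := by
        have := logmono (2^(r+1)) (by positivity) hbig
        rw [show ((2^(r+1) : ℕ) : ℝ) = (2:ℝ)^(r+1) by push_cast; ring, logb_nat_pow] at this
        push_cast at this
        linarith
      rw [hr]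
      push_cast
      linarith
    · -- s odd, s = 2r+1 with r ≥ 1
      obtain ⟨r, hr⟩ : ∃ r, s = 2*r + 1 := by
        obtain ⟨t, ht⟩ := ho; exact ⟨t, by omega⟩
      have hr1 : 1 ≤ r := by omega
      have hbig := branch_odd H hF hr1 (by intro c; have := NS c; omega)
      have hlog : (r:ℝ) + 1/2 ≤ Real.logb 2 (Fintype.card V) := by
        have h1 := logmono (3 * 2^(r-1)) (by positivity) hbig
        have h2 : ((3 * 2^(r-1) : ℕ) : ℝ) = 3 * (2:ℝ)^(r-1) := by push_cast; ring
        rw [h2, Real.logb_mul (by norm_num) (by positivity), logb_nat_pow] at h1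
        have h3 := logb_three
        have h4 : ((r - 1 : ℕ) : ℝ) = (r:ℝ) - 1 := by
          have : (1:ℕ) ≤ r := hr1
          push_cast [this]
          ring
        rw [h4] at h1
        linarith
      rw [hr]
      push_cast
      linarith

end MGC

namespace MGC

variable {V E : Type*} [Fintype V] [Fintype E] [DecidableEq V] [DecidableEq E]
variable {ι : E → Sym2 V} {F : Finset E} {W : Finset V}

attribute [local instance] Classical.propDecidable

theorem gcycle_imc (c : GCycle ι F) :
    IsMultigraphCycle ι c.len c.pos (fun j : Fin c.len => c.es j.val)
      (fun j : Fin c.len => c.vs j.val) := by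
  refine ⟨?_, ?_, ?_⟩
  · intro i j h
    exact Fin.ext (c.einj i.val i.isLt j.val j.isLt h)
  · intro i j h
    exact Fin.ext (c.vinj i.val i.isLt j.val j.isLt h)
  · intro j
    exact c.adj j.val j.isLt

theorem aux_base (hV : 2 ≤ Fintype.card V) {W : Finset V} {F : Finset E}
    (hFW : F.card ≤ W.card) :
    ∃ (k : ℕ) (C : Fin k → Set E),
      (∀ i : Fin k, ∃ (n : ℕ) (hn : 0 < n) (es : Fin n → E) (vs : Fin n → V),
        IsMultigraphCycle ι n hn es vs ∧ C i = Set.range es) ∧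
      (∀ i : Fin k, C i ⊆ ↑F) ∧
      (Pairwise fun i j => Disjoint (C i) (C j)) ∧
      ((F.card : ℝ) - W.card) / (2 * Real.logb 2 (Fintype.card V)) ≤ k := by
  have hL : 0 < 2 * Real.logb 2 (Fintype.card V) := by
    have : 0 < Real.logb 2 (Fintype.card V) :=
      Real.logb_pos (by norm_num) (by exact_mod_cast hV)
    linarith
  refine ⟨0, fun i => i.elim0, fun i => i.elim0, fun i => i.elim0, by intro i; exact i.elim0, ?_⟩
  push_cast
  refine le_trans (div_nonpos_of_nonpos_of_nonneg ?_ (le_of_lt hL)) (by norm_num)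
  have : (F.card:ℝ) ≤ W.card := by exact_mod_cast hFW
  linarith

theorem logb_V_ge_one (hV : 2 ≤ Fintype.card V) :
    1 ≤ Real.logb 2 (Fintype.card V) := by
  have := Real.logb_le_logb_of_le (b := 2) (x := 2) (y := (Fintype.card V : ℝ))
    (by norm_num) (by norm_num) (by exact_mod_cast hV)
  rwa [Real.logb_self_eq_one (by norm_num)] at this

theorem aux (hV : 2 ≤ Fintype.card V) :
    ∀ (N : ℕ) (W : Finset V) (F : Finset E), W.card + F.card ≤ N →
      (∀ e ∈ F, ∀ v, v ∈ ι e → v ∈ W) →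
      ∃ (k : ℕ) (C : Fin k → Set E),
        (∀ i : Fin k, ∃ (n : ℕ) (hn : 0 < n) (es : Fin n → E) (vs : Fin n → V),
          IsMultigraphCycle ι n hn es vs ∧ C i = Set.range es) ∧
        (∀ i : Fin k, C i ⊆ ↑F) ∧
        (Pairwise fun i j => Disjoint (C i) (C j)) ∧
        ((F.card : ℝ) - W.card) / (2 * Real.logb 2 (Fintype.card V)) ≤ k := by
  have hLpos : 0 < 2 * Real.logb 2 (Fintype.card V) := by
    have : 0 < Real.logb 2 (Fintype.card V) :=
      Real.logb_pos (by norm_num) (by exact_mod_cast hV)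
    linarith
  have hL2 : 2 ≤ 2 * Real.logb 2 (Fintype.card V) := by
    have := logb_V_ge_one (V := V) hV
    linarith
  intro N
  induction N with
  | zero =>
    intro W F hN hend
    exact aux_base hV (by omega)
  | succ N IH =>
    intro W F hN hend
    rcases le_or_gt F.card W.card with hFW | hFW
    · exact aux_base hV hFW
    by_cases hlow : ∃ w ∈ W, (inc ι F w).card ≤ 1
    · -- remove a low-degree vertex
      obtain ⟨w, hwW, hwdeg⟩ := hlow
      have hincF : inc ι F w ⊆ F := Finset.filter_subset _ _
      have hend' : ∀ e ∈ F \ inc ι F w, ∀ v, v ∈ ι e → v ∈ W.erase w := by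
        intro e he v hv
        rw [Finset.mem_sdiff] at he
        refine Finset.mem_erase.mpr ⟨?_, hend e he.1 v hv⟩
        intro hvw
        exact he.2 (Finset.mem_filter.mpr ⟨he.1, hvw ▸ hv⟩)
      have hcard' : (W.erase w).card + (F \ inc ι F w).card ≤ N := by
        have h1 : (W.erase w).card = W.card - 1 := Finset.card_erase_of_mem hwW
        have h2 : (F \ inc ι F w).card = F.card - (inc ι F w).card :=
          Finset.card_sdiff_of_subset hincF
        have hW1 : 1 ≤ W.card := Finset.card_pos.mpr ⟨w, hwW⟩
        omega
      obtain ⟨k, C, hC1, hC2, hC3, hC4⟩ := IH (W.erase w) (F \ inc ι F w) hcard' hend'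
      refine ⟨k, C, hC1, ?_, hC3, ?_⟩
      · intro i
        exact subset_trans (hC2 i) (Finset.coe_subset.mpr (Finset.sdiff_subset))
      · refine le_trans ?_ hC4
        rw [div_le_div_iff_of_pos_right hLpos]
        have h1 : (W.erase w).card = W.card - 1 := Finset.card_erase_of_mem hwW
        have h2 : (F \ inc ι F w).card = F.card - (inc ι F w).card :=
          Finset.card_sdiff_of_subset hincF
        have hW1 : 1 ≤ W.card := Finset.card_pos.mpr ⟨w, hwW⟩
        have hiF : (inc ι F w).card ≤ F.card := Finset.card_le_card hincF
        have c1 : ((W.erase w).card : ℝ) = (W.card : ℝ) - 1 := by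
          rw [h1]; push_cast [hW1]; ring
        have c2 : ((F \ inc ι F w).card : ℝ) = (F.card : ℝ) - (inc ι F w).card := by
          rw [h2]; push_cast [hiF]; ring
        have c3 : ((inc ι F w).card : ℝ) ≤ 1 := by exact_mod_cast hwdeg
        rw [c1, c2]
        linarith
    · -- min degree 2 : find a short cycle and remove it
      push_neg at hlow
      have H : Ctx ι F W := ⟨hend, fun v hv => by have := hlow v hv; omega⟩
      obtain ⟨c, hc⟩ := crux H hFW hV
      set S := (Finset.range c.len).image c.es with hSdef
      have hSF : S ⊆ F := by
        intro e he
        rw [hSdef, Finset.mem_image] at he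
        obtain ⟨i, hi, rfl⟩ := he
        exact c.mem i (Finset.mem_range.mp hi)
      have hScard : S.card = c.len := by
        rw [hSdef, Finset.card_image_of_injOn, Finset.card_range]
        intro i hi j hj h
        simp only [Finset.coe_range, Set.mem_Iio] at hi hj
        exact c.einj i hi j hj h
      set D := ((Finset.range c.len).image c.vs).filter (fun v => inc ι F v ⊆ S) with hDdef
      have hDW : D ⊆ W := by
        intro v hv
        rw [hDdef, Finset.mem_filter, Finset.mem_image] at hv
        obtain ⟨⟨i, hi, rfl⟩, -⟩ := hv
        rw [Finset.mem_range] at hi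
        refine hend (c.es i) (c.mem i hi) _ ?_
        rw [c.adj i hi]
        exact Sym2.mem_mk_left _ _
      -- the key inequality
      have hkey : (c.len : ℝ) - D.card ≤ 2 * Real.logb 2 (Fintype.card V) := by
        rcases Nat.lt_or_ge c.len 2 with hlen | hlen
        · have : c.len = 1 := by have := c.pos; omega
          rw [this]
          have hD0 : (0:ℝ) ≤ D.card := by positivity
          push_cast
          linarith
        · -- length at least 2 : each non-branch cycle vertex lies in D
          have hsub : ∀ i, i < c.len → c.vs i ∉ Br ι F W → c.vs i ∈ D := by
            intro i hi hnB
            rw [hDdef, Finset.mem_filter]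
            refine ⟨Finset.mem_image.mpr ⟨i, Finset.mem_range.mpr hi, rfl⟩, ?_⟩
            have hvW : c.vs i ∈ W := by
              refine hend (c.es i) (c.mem i hi) _ ?_
              rw [c.adj i hi]
              exact Sym2.mem_mk_left _ _
            have hdeg2 : 2 ≤ (inc ι F (c.vs i)).card := H.deg2 _ hvW
            have hdeg2' : (inc ι F (c.vs i)).card ≤ 2 := by
              by_contra hcon
              exact hnB (Finset.mem_filter.mpr ⟨hvW, by omega⟩)
            have hjlt : (i + c.len - 1) % c.len < c.len := Nat.mod_lt _ c.pos
            have hjval : (i + c.len - 1) % c.len = if i = 0 then c.len - 1 else i - 1 := by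
              by_cases h0 : i = 0
              · rw [if_pos h0, h0]
                simp only [Nat.zero_add]
                exact Nat.mod_eq_of_lt (by omega)
              · rw [if_neg h0]
                rw [show i + c.len - 1 = (i-1) + c.len by omega, Nat.add_mod_right]
                exact Nat.mod_eq_of_lt (by omega)
            have hij : (i + c.len - 1) % c.len ≠ i := by
              rw [hjval]
              by_cases h0 : i = 0
              · rw [if_pos h0]; omega
              · rw [if_neg h0]; omega
            have hj1 : ((i + c.len - 1) % c.len + 1) % c.len = i := by
              rw [Nat.mod_add_mod, show i + c.len - 1 + 1 = i + c.len by omega,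
                Nat.add_mod_right]
              exact Nat.mod_eq_of_lt hi
            have he1 : c.es i ∈ inc ι F (c.vs i) := by
              refine Finset.mem_filter.mpr ⟨c.mem i hi, ?_⟩
              rw [c.adj i hi]
              exact Sym2.mem_mk_left _ _
            have he2 : c.es ((i + c.len - 1) % c.len) ∈ inc ι F (c.vs i) := by
              refine Finset.mem_filter.mpr ⟨c.mem _ hjlt, ?_⟩
              rw [c.adj _ hjlt, hj1]
              exact Sym2.mem_mk_right _ _
            have hne : c.es i ≠ c.es ((i + c.len - 1) % c.len) := by
              intro h
              exact hij (c.einj _ hjlt i hi h.symm)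
            have hpair : ({c.es i, c.es ((i + c.len - 1) % c.len)} : Finset E)
                = inc ι F (c.vs i) := by
              refine Finset.eq_of_subset_of_card_le ?_ ?_
              · intro e he
                simp only [Finset.mem_insert, Finset.mem_singleton] at he
                rcases he with h | h <;> subst h
                · exact he1
                · exact he2
              · rw [Finset.card_insert_of_notMem (by simpa using hne),
                  Finset.card_singleton]
                exact hdeg2'
            intro e he
            rw [← hpair] at he
            simp only [Finset.mem_insert, Finset.mem_singleton] at he
            rcases he with h | h <;> subst h
            · exact Finset.mem_image.mpr ⟨i, Finset.mem_range.mpr hi, rfl⟩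
            · exact Finset.mem_image.mpr ⟨_, Finset.mem_range.mpr hjlt, rfl⟩
          have hcount : ((Finset.range c.len).filter
              (fun i => c.vs i ∉ Br ι F W)).card ≤ D.card := by
            refine Finset.card_le_card_of_injOn c.vs ?_ ?_
            · intro i hi
              rw [Finset.mem_coe, Finset.mem_filter, Finset.mem_range] at hi
              exact hsub i hi.1 hi.2
            · intro i hi j hj h
              rw [Finset.coe_filter] at hi hj
              simp only [Set.mem_setOf_eq, Finset.mem_range] at hi hj
              exact c.vinj i hi.1 j hj.1 h
          have hsplit := Finset.card_filter_add_card_filter_not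
            (s := Finset.range c.len) (p := fun i => c.vs i ∈ Br ι F W)
          rw [Finset.card_range] at hsplit
          have hlen_le : c.len ≤ D.card + bcount (Br ι F W) c := by
            rw [bcount] at *
            omega
          have hcast : (c.len : ℝ) ≤ (D.card : ℝ) + (bcount (Br ι F W) c : ℝ) := by
            exact_mod_cast hlen_le
          linarith
      -- recurse
      have hend' : ∀ e ∈ F \ S, ∀ v, v ∈ ι e → v ∈ W \ D := by
        intro e he v hv
        rw [Finset.mem_sdiff] at he
        rw [Finset.mem_sdiff]
        refine ⟨hend e he.1 v hv, ?_⟩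
        intro hvD
        rw [hDdef, Finset.mem_filter] at hvD
        exact he.2 (hvD.2 (Finset.mem_filter.mpr ⟨he.1, hv⟩))
      have hcard' : (W \ D).card + (F \ S).card ≤ N := by
        have h1 : (W \ D).card ≤ W.card := Finset.card_le_card (Finset.sdiff_subset)
        have h2 : (F \ S).card = F.card - S.card := Finset.card_sdiff_of_subset hSF
        have h3 := c.pos
        rw [hScard] at h2
        have h4 : S.card ≤ F.card := Finset.card_le_card hSF
        rw [hScard] at h4
        omega
      obtain ⟨k, C, hC1, hC2, hC3, hC4⟩ := IH (W \ D) (F \ S) hcard' hend'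
      have hdisj0 : ∀ j : Fin k, Disjoint (Set.range (fun j : Fin c.len => c.es j.val)) (C j) := by
        intro j
        rw [Set.disjoint_left]
        intro e he hej
        obtain ⟨i, rfl⟩ := he
        have heS : c.es i.val ∈ S := Finset.mem_image.mpr ⟨i.val, Finset.mem_range.mpr i.isLt, rfl⟩
        have := hC2 j hej
        rw [Finset.coe_sdiff, Set.mem_diff] at this
        exact this.2 heS
      refine ⟨k+1, Fin.cons (Set.range (fun j : Fin c.len => c.es j.val)) C, ?_, ?_, ?_, ?_⟩
      · intro i
        induction i using Fin.cases with
        | zero =>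
          refine ⟨c.len, c.pos, (fun j : Fin c.len => c.es j.val),
            (fun j : Fin c.len => c.vs j.val), gcycle_imc c, ?_⟩
          rw [Fin.cons_zero]
        | succ i' =>
          obtain ⟨n, hn, es, vs, h1, h2⟩ := hC1 i'
          exact ⟨n, hn, es, vs, h1, by rw [Fin.cons_succ]; exact h2⟩
      · intro i
        induction i using Fin.cases with
        | zero =>
          rw [Fin.cons_zero]
          intro e he
          obtain ⟨i, rfl⟩ := he
          exact hSF (Finset.mem_image.mpr ⟨i.val, Finset.mem_range.mpr i.isLt, rfl⟩)
        | succ i' =>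
          rw [Fin.cons_succ]
          exact subset_trans (hC2 i') (Finset.coe_subset.mpr (Finset.sdiff_subset))
      · intro i j hij
        induction i using Fin.cases with
        | zero =>
          induction j using Fin.cases with
          | zero => exact absurd rfl hij
          | succ j' =>
            rw [Fin.cons_zero, Fin.cons_succ]
            exact hdisj0 j'
        | succ i' =>
          induction j using Fin.cases with
          | zero =>
            rw [Fin.cons_zero, Fin.cons_succ]
            exact (hdisj0 i').symm
          | succ j' =>
            rw [Fin.cons_succ, Fin.cons_succ]
            exact hC3 (by intro h; exact hij (by rw [h]))
      · -- the numerical bound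
        have h2 : (F \ S).card = F.card - S.card := Finset.card_sdiff_of_subset hSF
        have h4 : S.card ≤ F.card := Finset.card_le_card hSF
        have h5 : (W \ D).card = W.card - D.card := Finset.card_sdiff_of_subset hDW
        have h6 : D.card ≤ W.card := Finset.card_le_card hDW
        have e1 : ((F \ S).card : ℝ) = (F.card : ℝ) - c.len := by
          rw [h2, hScard]
          rw [hScard] at h4
          push_cast [h4]
          ring
        have e2 : ((W \ D).card : ℝ) = (W.card : ℝ) - D.card := by
          rw [h5]; push_cast [h6]; ring
        have hnum : ((F.card : ℝ) - W.card) ≤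
            (((F \ S).card : ℝ) - (W \ D).card) + 2 * Real.logb 2 (Fintype.card V) := by
          rw [e1, e2]
          linarith
        calc ((F.card : ℝ) - W.card) / (2 * Real.logb 2 (Fintype.card V))
            ≤ ((((F \ S).card : ℝ) - (W \ D).card) + 2 * Real.logb 2 (Fintype.card V)) /
              (2 * Real.logb 2 (Fintype.card V)) := by
              rw [div_le_div_iff_of_pos_right hLpos]
              exact hnum
          _ = (((F \ S).card : ℝ) - (W \ D).card) / (2 * Real.logb 2 (Fintype.card V)) + 1 := by
              rw [add_div, div_self (ne_of_gt hLpos)]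
          _ ≤ k + 1 := by linarith
          _ = ((k+1 : ℕ) : ℝ) := by push_cast; ring

end MGC


/-- In any finite multigraph (loops allowed) there is a collection of pairwise
edge-disjoint cycles containing at least `(|E| - |V|) / (2 log₂ |V|)` cycles. -/
theorem edge_disjoint_cycles_count {V E : Type*} [Fintype V] [Fintype E]
    (hV : 2 ≤ Fintype.card V) (ι : E → Sym2 V) :
    ∃ (k : ℕ) (C : Fin k → Set E),
      (∀ i : Fin k, ∃ (n : ℕ) (hn : 0 < n) (es : Fin n → E) (vs : Fin n → V),
        IsMultigraphCycle ι n hn es vs ∧ C i = Set.range es) ∧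
      (Pairwise fun i j => Disjoint (C i) (C j)) ∧
      ((Fintype.card E : ℝ) - Fintype.card V) / (2 * Real.logb 2 (Fintype.card V)) ≤ k := by
  classical
  obtain ⟨k, C, h1, h2, h3, h4⟩ := MGC.aux (ι := ι) hV (Fintype.card V + Fintype.card E)
    Finset.univ Finset.univ (by rw [Finset.card_univ, Finset.card_univ])
    (fun e _ v _ => Finset.mem_univ v)
  refine ⟨k, C, h1, h3, ?_⟩
  rwa [Finset.card_univ, Finset.card_univ] at h4
end

section
/- Let T be a finite tree with an even number of tokens placed on its vertices (possibly multiple tokens per vertex). Then the tokens can be partitioned into pairs such that the unique tree paths connecting the two tokens of each pair are pairwise edge-disjoint. -/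
open SimpleGraph

set_option linter.unusedSectionVars false
set_option maxHeartbeats 1000000

section helpers
variable {V : Type*} {T : SimpleGraph V}

lemma my_reach (ℓ : V) {a b : V} (p : T.Walk a b) (hp : ∀ x ∈ p.support, x ≠ ℓ) :
    (T.comap (Subtype.val : {x : V // x ≠ ℓ} → V)).Reachable
      ⟨a, hp a p.start_mem_support⟩ ⟨b, hp b p.end_mem_support⟩ := by
  induction p with
  | nil => exact Reachable.refl _
  | @cons a c b h p ih =>
    have hc : ∀ x ∈ p.support, x ≠ ℓ := fun x hx => hp x (by simp [hx])
    refine Reachable.trans (Adj.reachable ?_) (ih hc)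
    exact h

lemma my_exists_walk_avoid [DecidableEq V] (hT : T.IsTree) {ℓ u : V}
    (hu : ∀ w, T.Adj ℓ w → w = u) {a b : V} (ha : a ≠ ℓ) (hb : b ≠ ℓ) :
    ∃ p : T.Walk a b, ∀ x ∈ p.support, x ≠ ℓ := by
  obtain ⟨p0⟩ := hT.isConnected.preconnected a b
  obtain ⟨p, hp⟩ : ∃ p : T.Walk a b, p.IsPath := ⟨p0.toPath, p0.toPath.2⟩
  refine ⟨p, fun x hx hxe => ?_⟩
  subst hxe
  have hq := p.take_spec hx
  have h1 : (p.takeUntil x hx).IsPath := hp.takeUntil hx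
  have hU1 : u ∈ (p.takeUntil x hx).support := by
    obtain ⟨c, hadj, r, hr⟩ := Walk.exists_eq_cons_of_ne (Ne.symm ha) (p.takeUntil x hx).reverse
    have hcu : c = u := hu c hadj
    rw [← hcu]
    have : c ∈ (p.takeUntil x hx).reverse.support := by
      rw [hr]; simp [Walk.support_cons]
    rwa [Walk.support_reverse, List.mem_reverse] at this
  have hU2 : u ∈ (p.dropUntil x hx).support.tail := by
    obtain ⟨c, hadj, r, hr⟩ := Walk.exists_eq_cons_of_ne (Ne.symm hb) (p.dropUntil x hx)
    have hcu : c = u := hu c hadj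
    rw [← hcu, hr, Walk.support_cons]
    exact r.start_mem_support
  have hnd := hp.support_nodup
  rw [← hq, Walk.support_append, List.nodup_append] at hnd
  exact hnd.2.2 u hU1 u hU2 rfl

variable [Fintype V] [DecidableEq V]

lemma my_exists_leaf (hT : T.IsTree) (h2 : 2 ≤ Fintype.card V) :
    ∃ ℓ u, T.Adj ℓ u ∧ ∀ w, T.Adj ℓ w → w = u := by
  classical
  have hd : ∑ v, T.degree v = 2 * T.edgeFinset.card :=
    T.sum_degrees_eq_twice_card_edges
  have he : T.edgeFinset.card + 1 = Fintype.card V := hT.card_edgeFinset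
  have hlow : ∃ v, T.degree v ≤ 1 := by
    by_contra hc
    push_neg at hc
    have : 2 * Fintype.card V ≤ ∑ v, T.degree v := by
      calc 2 * Fintype.card V = ∑ _v : V, 2 := by simp [mul_comm]
        _ ≤ ∑ v, T.degree v := Finset.sum_le_sum fun v _ => hc v
    omega
  obtain ⟨ℓ, hℓ⟩ := hlow
  obtain ⟨w, hw⟩ := Fintype.exists_ne_of_one_lt_card h2 ℓ
  obtain ⟨p⟩ := hT.isConnected.preconnected ℓ w
  obtain ⟨c, hadj, -, -⟩ := Walk.exists_eq_cons_of_ne (Ne.symm hw) p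
  have hdeg : T.degree ℓ = 1 := by
    have h1 : 1 ≤ T.degree ℓ := by
      rw [← T.card_neighborFinset_eq_degree]
      exact Finset.card_pos.2 ⟨c, by simpa using hadj⟩
    omega
  rw [← T.card_neighborFinset_eq_degree, Finset.card_eq_one] at hdeg
  obtain ⟨u, hu⟩ := hdeg
  refine ⟨ℓ, u, ?_, fun w hw2 => ?_⟩
  · have : u ∈ T.neighborFinset ℓ := hu ▸ Finset.mem_singleton_self u
    simpa using this
  · have : w ∈ T.neighborFinset ℓ := by simpa using hw2
    rw [hu] at this
    simpa using this

lemma my_subtree (hT : T.IsTree) {ℓ u : V} (hadj : T.Adj ℓ u)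
    (hu : ∀ w, T.Adj ℓ w → w = u) :
    (T.comap (Subtype.val : {x : V // x ≠ ℓ} → V)).IsTree := by
  classical
  constructor
  · haveI : Nonempty {x : V // x ≠ ℓ} := ⟨⟨u, fun h => T.irrefl (h ▸ hadj)⟩⟩
    refine ⟨?_⟩
    rintro ⟨a, ha⟩ ⟨b, hb⟩
    obtain ⟨p, hp⟩ := my_exists_walk_avoid hT hu ha hb
    exact my_reach ℓ p hp
  · intro v c hc
    have hinj : Function.Injective (Subtype.val : {x : V // x ≠ ℓ} → V) := Subtype.val_injective
    have := hc.map (f := (⟨Subtype.val, fun h => h⟩ :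
      (T.comap (Subtype.val : {x : V // x ≠ ℓ} → V)) →g T)) hinj
    exact hT.IsAcyclic _ this

end helpers

universe u

/-- token count of a vertex in a list of pairs-with-walks -/
def myCnt {V : Type u} [DecidableEq V] (v : V) {T : SimpleGraph V}
    (L : List ((vw : V × V) × T.Walk vw.1 vw.2)) : ℕ :=
  (L.map fun x => ((if x.1.1 = v then 1 else 0) + (if x.1.2 = v then 1 else 0))).sum

lemma my_main : ∀ (n : ℕ) (V : Type u) [Fintype V] [DecidableEq V] (T : SimpleGraph V),
    Fintype.card V ≤ n → T.IsTree → ∀ t : V → ℕ, Even (∑ v, t v) →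
    ∃ L : List ((vw : V × V) × T.Walk vw.1 vw.2),
      (∀ v, myCnt v L = t v)
      ∧ (∀ x ∈ L, x.2.IsPath)
      ∧ L.Pairwise (fun a b => ∀ e ∈ a.2.edges, e ∉ b.2.edges) := by
  intro n
  induction n with
  | zero =>
    intro V _ _ T hcard hT t ht
    exfalso
    haveI : Nonempty V := hT.isConnected.nonempty
    have := Fintype.card_pos (α := V)
    omega
  | succ n ih =>
    intro V _ _ T hcard hT t ht
    by_cases h2 : 2 ≤ Fintype.card V
    swap
    · -- single vertex case
      have h1 : Fintype.card V = 1 := by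
        haveI : Nonempty V := hT.isConnected.nonempty
        have := Fintype.card_pos (α := V)
        omega
      obtain ⟨v0, hv0⟩ := Fintype.card_eq_one_iff.mp h1
      have huniv : (Finset.univ : Finset V) = {v0} := by
        ext x; simp [hv0 x]
      rw [huniv, Finset.sum_singleton] at ht
      refine ⟨List.replicate (t v0 / 2) ⟨(v0, v0), Walk.nil⟩, fun v => ?_, ?_, ?_⟩
      · have hv : v = v0 := hv0 v
        subst hv
        simp [myCnt]
        rw [Nat.even_iff] at ht
        omega
      · intro x hx
        rw [List.eq_of_mem_replicate hx]
        exact Walk.IsPath.nil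
      · refine List.pairwise_replicate.mpr (Or.inr ?_)
        intro e he
        simp [Walk.edges_nil] at he
    · -- at least two vertices: find a leaf
      obtain ⟨ℓ, u, hadj, hu⟩ := my_exists_leaf hT h2
      have huℓ : u ≠ ℓ := fun h => T.irrefl (h ▸ hadj)
      set V' := {x : V // x ≠ ℓ} with hV'
      set T' := T.comap (Subtype.val : V' → V) with hT'def
      have hT' : T'.IsTree := my_subtree hT hadj hu
      have hcard' : Fintype.card V' ≤ n := by
        have h1 : Fintype.card V' = Fintype.card V - Fintype.card {x : V // x = ℓ} :=
          Fintype.card_subtype_compl (· = ℓ)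
        rw [Fintype.card_subtype_eq] at h1
        omega
      set r := t ℓ % 2 with hr
      set t' : V' → ℕ := fun x => t x.val + (if x.val = u then r else 0) with ht'def
      have hsum1 : ∑ v, t v = t ℓ + ∑ x : V', t x.val := by
        rw [Fintype.sum_eq_add_sum_compl ℓ t]
        congr 1
        exact Finset.sum_subtype _ (by simp) t
      have hsum2 : ∑ x : V', t' x = (∑ x : V', t x.val) + r := by
        rw [ht'def, Finset.sum_add_distrib]
        congr 1
        have h3 : (∑ x : V', if x.val = u then r else 0)
            = ∑ x : V', if x = ⟨u, huℓ⟩ then r else 0 :=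
          Finset.sum_congr rfl (fun x _ => by
            by_cases h : (x : V) = u
            · rw [if_pos h, if_pos (Subtype.ext h)]
            · rw [if_neg h, if_neg (fun hh => h (by rw [hh]))])
        rw [h3, Finset.sum_ite_eq' Finset.univ (⟨u, huℓ⟩ : V') (fun _ => r)]
        simp
      have ht' : Even (∑ x : V', t' x) := by
        rw [hsum2]
        rw [hsum1, Nat.even_iff] at ht
        rw [Nat.even_iff]
        omega
      obtain ⟨L', hcount', hpath', hdisj'⟩ := ih V' T' hcard' hT' t' ht'
      set emb : T' →g T := ⟨Subtype.val, fun h => h⟩ with hembdef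
      set F : ((vw : V' × V') × T'.Walk vw.1 vw.2) → ((vw : V × V) × T.Walk vw.1 vw.2) :=
        fun x => ⟨(x.1.1.val, x.1.2.val), x.2.map emb⟩ with hFdef
      set L₀ := L'.map F with hL₀def
      have hsupp₀ : ∀ x ∈ L₀, ∀ y ∈ x.2.support, y ≠ ℓ := by
        rintro x hx y hy
        rw [hL₀def] at hx
        obtain ⟨x', _, rfl⟩ := List.mem_map.mp hx
        rw [show (F x').2 = x'.2.map emb from rfl, Walk.support_map] at hy
        obtain ⟨z, _, rfl⟩ := List.mem_map.mp hy
        exact z.2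
      have hpath₀ : ∀ x ∈ L₀, x.2.IsPath := by
        rintro x hx
        rw [hL₀def] at hx
        obtain ⟨x', hx', rfl⟩ := List.mem_map.mp hx
        exact Walk.map_isPath_of_injective Subtype.val_injective (hpath' x' hx')
      have hdisj₀ : L₀.Pairwise (fun a b => ∀ e ∈ a.2.edges, e ∉ b.2.edges) := by
        rw [hL₀def, List.pairwise_map]
        refine hdisj'.imp ?_
        intro a b hab e he hee
        rw [show (F a).2 = a.2.map emb from rfl, Walk.edges_map] at he
        rw [show (F b).2 = b.2.map emb from rfl, Walk.edges_map] at hee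
        obtain ⟨e1, he1, rfl⟩ := List.mem_map.mp he
        obtain ⟨e2, he2, heq⟩ := List.mem_map.mp hee
        have hem : Function.Injective (Sym2.map (emb : V' → V)) :=
          Sym2.map.injective Subtype.val_injective
        rw [hem heq] at he2
        exact hab e1 he1 he2
      have hcount₀ : ∀ (v : V) (hv : v ≠ ℓ), myCnt v L₀ = t' ⟨v, hv⟩ := by
        intro v hv
        rw [hL₀def, myCnt, List.map_map]
        rw [← hcount' ⟨v, hv⟩, myCnt]
        congr 1
        refine List.map_congr_left (fun x _ => ?_)
        have e1 : ((F x).1.1 = v) ↔ (x.1.1 = ⟨v, hv⟩) :=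
          ⟨fun h => Subtype.ext h, fun h => congrArg Subtype.val h⟩
        have e2 : ((F x).1.2 = v) ↔ (x.1.2 = ⟨v, hv⟩) :=
          ⟨fun h => Subtype.ext h, fun h => congrArg Subtype.val h⟩
        simp only [Function.comp_apply, e1, e2]
      have hcountℓ : myCnt ℓ L₀ = 0 := by
        rw [myCnt]
        refine List.sum_eq_zero ?_
        intro m hm
        obtain ⟨x, hx, rfl⟩ := List.mem_map.mp hm
        rw [hL₀def] at hx
        obtain ⟨x', _, rfl⟩ := List.mem_map.mp hx
        have n1 : (F x').1.1 ≠ ℓ := x'.1.1.2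
        have n2 : (F x').1.2 ≠ ℓ := x'.1.2.2
        simp [n1, n2]
      set N : List ((vw : V × V) × T.Walk vw.1 vw.2) :=
        List.replicate (t ℓ / 2) ⟨(ℓ, ℓ), Walk.nil⟩ with hNdef
      have hcntN : ∀ v, myCnt v N = (t ℓ / 2) * (2 * if ℓ = v then 1 else 0) := by
        intro v
        rw [hNdef, myCnt, List.map_replicate, List.sum_replicate, smul_eq_mul]
        rcases eq_or_ne ℓ v with h | h
        · subst h; simp [mul_comm]
        · simp [h]
      have hpathN : ∀ x ∈ N, x.2.IsPath := by
        intro x hx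
        rw [List.eq_of_mem_replicate hx]
        exact Walk.IsPath.nil
      have hedgeN : ∀ x ∈ N, x.2.edges = [] := by
        intro x hx
        rw [List.eq_of_mem_replicate hx]
        rfl
      have hdisjN : N.Pairwise (fun a b => ∀ e ∈ a.2.edges, e ∉ b.2.edges) := by
        refine List.pairwise_replicate.mpr (Or.inr ?_)
        intro e he
        simp [Walk.edges_nil] at he
      have hcnt_append : ∀ (v : V) (A B : List ((vw : V × V) × T.Walk vw.1 vw.2)),
          myCnt v (A ++ B) = myCnt v A + myCnt v B := by
        intro v A B
        rw [myCnt, List.map_append, List.sum_append]; rfl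
      have hcnt_cons : ∀ (v : V) (y : ((vw : V × V) × T.Walk vw.1 vw.2)) B,
          myCnt v (y :: B) =
            ((if y.1.1 = v then 1 else 0) + (if y.1.2 = v then 1 else 0)) + myCnt v B := by
        intro v y B
        rw [myCnt, List.map_cons, List.sum_cons]; rfl
      by_cases hcase : r = 0
      · -- even number of tokens at the leaf
        refine ⟨L₀ ++ N, fun v => ?_, ?_, ?_⟩
        · rw [hcnt_append]
          by_cases hv : v = ℓ
          · subst hv
            rw [hcountℓ, hcntN]
            simp
            rw [hr] at hcase
            omega
          · rw [hcount₀ v hv, hcntN, ht'def]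
            simp only []
            have : ℓ ≠ v := Ne.symm hv
            rw [if_neg this]
            rcases eq_or_ne v u with h | h
            · subst h; rw [if_pos rfl, hcase]; omega
            · rw [if_neg (by simpa [Subtype.ext_iff] using h)]; omega
        · intro x hx
          rcases List.mem_append.mp hx with h | h
          · exact hpath₀ x h
          · exact hpathN x h
        · rw [List.pairwise_append]
          refine ⟨hdisj₀, hdisjN, ?_⟩
          intro a _ b hb e _ heb
          rw [hedgeN b hb] at heb
          simp at heb
      · -- odd number of tokens at the leaf
        have hr1 : r = 1 := by rw [hr] at hcase ⊢; omega
        have hex : ∃ x ∈ L₀, x.1.1 = u ∨ x.1.2 = u := by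
          by_contra hc
          push_neg at hc
          have hz : myCnt u L₀ = 0 := by
            rw [myCnt]
            refine List.sum_eq_zero ?_
            intro m hm
            obtain ⟨x, hx, rfl⟩ := List.mem_map.mp hm
            obtain ⟨n1, n2⟩ := hc x hx
            simp [n1, n2]
          have := hcount₀ u huℓ
          rw [hz, ht'def] at this
          simp [hr1] at this
        obtain ⟨x, hxmem, hxcase⟩ := hex
        obtain ⟨s, l2, hdecomp⟩ := List.append_of_mem hxmem
        set M := s ++ l2 with hMdef
        have hperm : L₀.Perm (x :: M) := by
          rw [hdecomp, hMdef]; exact List.perm_middle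
        have hsymm : ∀ {a b : ((vw : V × V) × T.Walk vw.1 vw.2)},
            (∀ e ∈ a.2.edges, e ∉ b.2.edges) → (∀ e ∈ b.2.edges, e ∉ a.2.edges) :=
          fun h e he1 he2 => h e he2 he1
        have hpm : (x :: M).Pairwise (fun a b => ∀ e ∈ a.2.edges, e ∉ b.2.edges) :=
          (hperm.pairwise_iff hsymm).mp hdisj₀
        have hMsub : ∀ y ∈ M, y ∈ L₀ := fun y hy => hperm.mem_iff.mpr (by simp [hy])
        have hxR : ∀ y ∈ M, ∀ e ∈ x.2.edges, e ∉ y.2.edges :=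
          (List.pairwise_cons.mp hpm).1
        have hMpw : M.Pairwise (fun a b => ∀ e ∈ a.2.edges, e ∉ b.2.edges) :=
          (List.pairwise_cons.mp hpm).2
        have hcntM : ∀ v, myCnt v L₀ =
            ((if x.1.1 = v then 1 else 0) + (if x.1.2 = v then 1 else 0)) + myCnt v M := by
          intro v
          rw [hdecomp, hcnt_append, hMdef, hcnt_append]
          have : myCnt v (x :: l2) =
              ((if x.1.1 = v then 1 else 0) + (if x.1.2 = v then 1 else 0)) + myCnt v l2 := by
            rw [myCnt, List.map_cons, List.sum_cons]; rfl
          rw [this]; ring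
        -- build the modified element x'
        obtain ⟨⟨a, b⟩, w⟩ := x
        have hbneℓ : b ≠ ℓ := hsupp₀ ⟨(a, b), w⟩ hxmem b w.end_mem_support
        have haneℓ : a ≠ ℓ := hsupp₀ ⟨(a, b), w⟩ hxmem a w.start_mem_support
        have hwpath : w.IsPath := hpath₀ ⟨(a, b), w⟩ hxmem
        have hwsupp : ℓ ∉ w.support := fun h => hsupp₀ ⟨(a, b), w⟩ hxmem ℓ h rfl
        -- x' : in either case starts at ℓ, with the other endpoint c, walk cons hadj w'
        obtain ⟨c, w', hc1, hc2, hcedge⟩ :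
            ∃ (c : V) (w' : T.Walk u c), c ≠ ℓ ∧
              ((if c = ℓ then 1 else 0) + (if c = u then 1 else 0) + 1
                = (if a = ℓ then (1:ℕ) else 0) + (if a = u then 1 else 0)
                  + ((if b = ℓ then 1 else 0) + (if b = u then 1 else 0))
                ∧ ∀ v, v ≠ ℓ → v ≠ u →
                  ((if c = v then (1:ℕ) else 0)
                    = (if a = v then (1:ℕ) else 0) + (if b = v then 1 else 0))) ∧
              (w'.IsPath ∧ ℓ ∉ w'.support ∧ ∀ e, e ∈ w'.edges ↔ e ∈ w.edges) := by
          rcases hxcase with h | h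
          · subst h
            exact ⟨b, w, hbneℓ, ⟨by simp [haneℓ, hbneℓ]; omega, fun v hv1 hv2 => by
              simp [Ne.symm hv2]⟩, hwpath, hwsupp, fun e => Iff.rfl⟩
          · subst h
            refine ⟨a, w.reverse, haneℓ, ⟨by simp [haneℓ, hbneℓ]; try omega, fun v hv1 hv2 => by
              simp [Ne.symm hv2]⟩, hwpath.reverse, ?_, fun e => by
                rw [Walk.edges_reverse, List.mem_reverse]⟩
            rwa [Walk.support_reverse, List.mem_reverse]
        obtain ⟨hkey, hother⟩ := hc2
        obtain ⟨hw'path, hw'supp, hw'edges⟩ := hcedge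
        refine ⟨⟨(ℓ, c), Walk.cons hadj w'⟩ :: (M ++ N), fun v => ?_, ?_, ?_⟩
        · rw [hcnt_cons, hcnt_append]
          change ((if ℓ = v then (1:ℕ) else 0) + (if c = v then 1 else 0))
            + (myCnt v M + myCnt v N) = t v
          have hMv : myCnt v L₀ =
              ((if a = v then 1 else 0) + (if b = v then 1 else 0)) + myCnt v M := hcntM v
          have hrr : t ℓ % 2 = 1 := hr ▸ hr1
          by_cases hv : v = ℓ
          · subst hv
            have hNℓ : myCnt v N = (t v / 2) * 2 := by rw [hcntN]; simp
            rw [if_pos rfl, if_neg hc1]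
            rw [if_neg haneℓ, if_neg hbneℓ, hcountℓ] at hMv
            omega
          · have hlv : ℓ ≠ v := Ne.symm hv
            have hNv : myCnt v N = 0 := by rw [hcntN, if_neg hlv]; ring
            have hLv : myCnt v L₀ = t v + (if v = u then 1 else 0) := by
              rw [hcount₀ v hv]
              show t v + (if v = u then r else 0) = _
              rw [hr1]
            rw [if_neg hlv]
            by_cases hvu : v = u
            · subst hvu
              rw [if_neg hc1, if_neg haneℓ, if_neg hbneℓ] at hkey
              rw [if_pos rfl] at hLv
              omega
            · have key : (if c = v then (1:ℕ) else 0)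
                  = (if a = v then 1 else 0) + (if b = v then 1 else 0) := hother v hv hvu
              rw [if_neg hvu] at hLv
              omega
        · intro y hy
          rcases List.mem_cons.mp hy with rfl | hy'
          · exact hw'path.cons hw'supp
          · rcases List.mem_append.mp hy' with hyM | hyN
            · exact hpath₀ y (hMsub y hyM)
            · exact hpathN y hyN
        · rw [List.pairwise_cons]
          constructor
          · intro y hy e he hey
            rw [show ((⟨(ℓ, c), Walk.cons hadj w'⟩ :
                (vw : V × V) × T.Walk vw.1 vw.2)).2.edges
              = s(ℓ, u) :: w'.edges from Walk.edges_cons hadj w'] at he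
            rcases List.mem_cons.mp he with rfl | he'
            · rcases List.mem_append.mp hy with hyM | hyN
              · exact hsupp₀ y (hMsub y hyM) ℓ (Walk.fst_mem_support_of_mem_edges _ hey) rfl
              · rw [hedgeN y hyN] at hey; simp at hey
            · rcases List.mem_append.mp hy with hyM | hyN
              · exact hxR y hyM e ((hw'edges e).mp he') hey
              · rw [hedgeN y hyN] at hey; simp at hey
          · rw [List.pairwise_append]
            exact ⟨hMpw, hdisjN, fun y _ z hz e _ hee => by
              rw [hedgeN z hz] at hee; simp at hee⟩




/-- In a finite tree `T` with an even number of tokens placed on its vertices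
(`t v` tokens on vertex `v`), the tokens can be partitioned into pairs so that the paths
connecting the two tokens of each pair are pairwise edge-disjoint. -/
theorem tree_token_pairing {V : Type*} [Fintype V] [DecidableEq V] (T : SimpleGraph V)
    (hT : T.IsTree) (t : V → ℕ) (ht : Even (∑ v, t v)) :
    ∃ (k : ℕ) (pair : Fin k → V × V) (p : ∀ i : Fin k, T.Walk (pair i).1 (pair i).2),
      (∀ v : V,
        (∑ i, ((if (pair i).1 = v then 1 else 0) + (if (pair i).2 = v then 1 else 0))) = t v) ∧
      (∀ i, (p i).IsPath) ∧
      (∀ i j, i ≠ j → ∀ e ∈ (p i).edges, e ∉ (p j).edges) := by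
  obtain ⟨L, hcnt, hpath, hdisj⟩ := my_main (Fintype.card V) V T le_rfl hT t ht
  refine ⟨L.length, fun i => (L.get i).1, fun i => (L.get i).2, ?_, ?_, ?_⟩
  · intro v
    have h := hcnt v
    rw [myCnt] at h
    rw [← h]
    exact Fin.sum_univ_fun_getElem L
      (fun x => (if x.1.1 = v then 1 else 0) + (if x.1.2 = v then 1 else 0))
  · intro i
    exact hpath _ (L.get_mem i)
  · intro i j hij
    have hp := List.pairwise_iff_get.mp hdisj
    rcases lt_or_gt_of_ne hij with h | h
    · exact hp i j h
    · intro e hei hej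
      exact hp j i h e hej hei
end

section
/- Suppose L is a laminar family of subsets of V, where V is equipped with positive node weights. Replace every S ∈ L whose total node weight exceeds half the total weight of V by its complement V − S. Then the resulting family L' is also laminar. -/
open Finset

/-- If `L` is a laminar family of subsets of a finite set `V` with positive
node weights `w`, and every set of `L` whose weight exceeds half the total weight is
replaced by its complement, the resulting family is again laminar. -/
theorem laminar_flip {V : Type*} [Fintype V] [DecidableEq V] (w : V → ℝ)
    (hw : ∀ v : V, 0 < w v) (L : Set (Finset V))
    (hlam : ∀ S ∈ L, ∀ S' ∈ L, S ∩ S' = ∅ ∨ S ⊆ S' ∨ S' ⊆ S) :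
    ∀ S ∈ (fun S : Finset V =>
        if (∑ v, w v) / 2 < ∑ v ∈ S, w v then univ \ S else S) '' L,
      ∀ S' ∈ (fun S : Finset V =>
        if (∑ v, w v) / 2 < ∑ v ∈ S, w v then univ \ S else S) '' L,
      S ∩ S' = ∅ ∨ S ⊆ S' ∨ S' ⊆ S := by
  have hmono : ∀ A B : Finset V, A ⊆ B → ∑ v ∈ A, w v ≤ ∑ v ∈ B, w v := by
    intro A B hAB
    exact Finset.sum_le_sum_of_subset_of_nonneg hAB (fun v _ _ => (hw v).le)
  have hnd : ∀ A B : Finset V, A ∩ B = ∅ →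
      (∑ v, w v) / 2 < ∑ v ∈ A, w v → (∑ v, w v) / 2 < ∑ v ∈ B, w v → False := by
    intro A B hd hA hB
    have hdis : Disjoint A B := Finset.disjoint_iff_inter_eq_empty.mpr hd
    have h1 : ∑ v ∈ A, w v + ∑ v ∈ B, w v = ∑ v ∈ A ∪ B, w v :=
      (Finset.sum_union hdis).symm
    have h2 : ∑ v ∈ A ∪ B, w v ≤ ∑ v, w v := hmono _ _ (Finset.subset_univ _)
    linarith
  rintro T ⟨S, hS, rfl⟩ T' ⟨S', hS', rfl⟩
  simp only
  rcases hlam S hS S' hS' with hd | hsub | hsub <;>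
    by_cases h1 : (∑ v, w v) / 2 < ∑ v ∈ S, w v <;>
    by_cases h2 : (∑ v, w v) / 2 < ∑ v ∈ S', w v <;>
    simp only [if_pos, if_neg, h1, h2, if_true, if_false]
  · exact (hnd S S' hd h1 h2).elim
  · -- S flipped, S' not, disjoint: S' ⊆ univ \ S
    refine Or.inr (Or.inr ?_)
    intro v hv
    simp only [mem_sdiff, mem_univ, true_and]
    intro hvS
    have : v ∈ S ∩ S' := mem_inter.mpr ⟨hvS, hv⟩
    simp [hd] at this
  · -- S not flipped, S' flipped, disjoint: S ⊆ univ \ S'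
    refine Or.inr (Or.inl ?_)
    intro v hv
    simp only [mem_sdiff, mem_univ, true_and]
    intro hvS'
    have : v ∈ S ∩ S' := mem_inter.mpr ⟨hv, hvS'⟩
    simp [hd] at this
  · exact Or.inl hd
  · -- S ⊆ S', both flipped: univ\S' ⊆ univ\S
    refine Or.inr (Or.inr ?_)
    intro v hv
    simp only [mem_sdiff, mem_univ, true_and] at hv ⊢
    exact fun h => hv (hsub h)
  · -- S ⊆ S', S flipped S' not: contradiction since sum S ≤ sum S'
    exact absurd (lt_of_lt_of_le h1 (hmono _ _ hsub)) h2
  · -- S not flipped, S' flipped, S ⊆ S': (univ\S') ∩ S = ∅ ... goal S ∩ (univ\S') = ∅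
    refine Or.inl ?_
    ext v
    simp only [mem_inter, mem_sdiff, mem_univ, true_and, Finset.notMem_empty, iff_false]
    rintro ⟨hvS, hvS'⟩
    exact hvS' (hsub hvS)
  · exact Or.inr (Or.inl hsub)
  · -- S' ⊆ S, both flipped: univ\S ⊆ univ\S'
    refine Or.inr (Or.inl ?_)
    intro v hv
    simp only [mem_sdiff, mem_univ, true_and] at hv ⊢
    exact fun h => hv (hsub h)
  · -- S' ⊆ S, S flipped, S' not: (univ\S) ∩ S' = ∅
    refine Or.inl ?_
    ext v
    simp only [mem_inter, mem_sdiff, mem_univ, true_and, Finset.notMem_empty, iff_false]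
    rintro ⟨hvS, hvS'⟩
    exact hvS (hsub hvS')
  · -- S' ⊆ S, S' flipped, S not: contradiction
    exact absurd (lt_of_lt_of_le h2 (hmono _ _ hsub)) h1
  · exact Or.inr (Or.inr hsub)
end

section
/- Let C be an even closed walk crossing a tight odd set S with nonzero mismatch: the alternating-sign sum over the edges of C of the indicator of crossing S is nonzero. Then C contains an edge both of whose endpoints lie in S. -/
/-- If an even closed walk `C` (given by its cyclic vertex sequence
`v 0, v 1, …, v (2k) = v 0`) has nonzero mismatch with a set `S` — i.e. the alternating-sign
sum over the edges of `C` of the indicator of crossing `S` is nonzero — then `C` contains an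
edge with both endpoints in `S`. -/
theorem mismatch_gives_internal_edge {V : Type*} [DecidableEq V] (G : SimpleGraph V)
    (S : Finset V) (k : ℕ) (hk : 0 < k) (v : ℕ → V)
    (hadj : ∀ i < 2 * k, G.Adj (v i) (v (i + 1))) (hclosed : v (2 * k) = v 0)
    (hmis : (∑ i ∈ Finset.range (2 * k), (-1 : ℤ) ^ i *
        (if (v i ∈ S ∧ v (i + 1) ∉ S) ∨ (v i ∉ S ∧ v (i + 1) ∈ S) then 1 else 0)) ≠ 0) :
    ∃ i < 2 * k, v i ∈ S ∧ v (i + 1) ∈ S := by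
  by_contra h
  push_neg at h
  apply hmis
  set f : ℕ → ℤ := fun i => (-1 : ℤ) ^ i * (if v i ∈ S then 1 else 0) with hf
  have key : ∀ i ∈ Finset.range (2 * k),
      (-1 : ℤ) ^ i * (if (v i ∈ S ∧ v (i + 1) ∉ S) ∨ (v i ∉ S ∧ v (i + 1) ∈ S) then 1 else 0)
        = f i - f (i + 1) := by
    intro i hi
    simp only [Finset.mem_range] at hi
    have hnb := h i hi
    simp only [hf, pow_succ]
    by_cases h1 : v i ∈ S <;> by_cases h2 : v (i + 1) ∈ S <;>
      simp [h1, h2] at hnb ⊢ <;> ring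
  rw [Finset.sum_congr rfl key, Finset.sum_range_sub' f]
  simp [hf, hclosed, pow_mul]
end

section
/- Let M₁ and M₂ be two perfect matchings of a graph G, both of minimum weight with respect to an edge weight function w. Then every cycle in the symmetric difference M₁ Δ M₂ has circulation zero, i.e., the sum of weights of the M₁-edges equals the sum of weights of the M₂-edges along the cycle. -/
/-- A perfect matching of `G`, given as a finite set of edges: every edge belongs to `G`
and every vertex lies in exactly one edge. -/
def IsPM {V : Type*} [Fintype V] [DecidableEq V] (G : SimpleGraph V) [DecidableRel G.Adj]
    (M : Finset (Sym2 V)) : Prop :=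
  M ⊆ G.edgeFinset ∧ ∀ v : V, (M.filter fun e => v ∈ e).card = 1

/-- The total weight of a set of edges. -/
def mweight {V : Type*} (w : Sym2 V → ℤ) (M : Finset (Sym2 V)) : ℤ := ∑ e ∈ M, w e

section Aux
open SimpleGraph Walk

lemma countP_eq_zero_of_not_mem_support {V : Type*} [DecidableEq V] {G : SimpleGraph V}
    {a b : V} (p : G.Walk a b) (x : V) (hx : x ∉ p.support) :
    p.edges.countP (fun e => x ∈ e) = 0 := by
  rw [List.countP_eq_zero]
  intro e he
  induction e with
  | h y z =>
    simp only [decide_eq_true_eq, Sym2.mem_iff]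
    rintro (rfl | rfl)
    · exact hx (p.fst_mem_support_of_mem_edges he)
    · exact hx (p.snd_mem_support_of_mem_edges he)

lemma path_countP {V : Type*} [DecidableEq V] {G : SimpleGraph V} {a b : V}
    (p : G.Walk a b) (hp : p.IsPath) (x : V) (hx : x ∈ p.support) :
    (p.edges.countP (fun e => x ∈ e)) + (if x = a then 1 else 0)
      + (if x = b then 1 else 0) = 2 := by
  induction p with
  | nil =>
    simp at hx
    subst hx
    simp
  | cons h q ih =>
    rename_i u v w
    rw [cons_isPath_iff] at hp
    rw [support_cons, List.mem_cons] at hx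
    rw [edges_cons, List.countP_cons]
    rcases hx with rfl | hx
    · have h0 : q.edges.countP (fun e => x ∈ e) = 0 :=
        countP_eq_zero_of_not_mem_support q x hp.2
      have hxw : x ≠ w := fun h' => hp.2 (h' ▸ q.end_mem_support)
      simp [h0, hxw]
    · have hxu : x ≠ u := fun h' => hp.2 (h' ▸ hx)
      have := ih hp.1 hx
      by_cases hxv : x = v
      · subst hxv
        simp only [hxu, if_false] at this ⊢
        have hd : (decide (x ∈ s(u, x))) = true := by simp
        rw [hd]
        simp only [if_true] at this ⊢
        omega
      · simp only [hxu, hxv, if_false] at this ⊢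
        have : (decide (x ∈ s(u, v))) = false := by
          simp [Sym2.mem_iff, hxu, hxv]
        simp_all

lemma cycle_countP {V : Type*} [DecidableEq V] {G : SimpleGraph V} {u : V}
    (c : G.Walk u u) (hc : c.IsCycle) (x : V) (hx : x ∈ c.support) :
    c.edges.countP (fun e => x ∈ e) = 2 := by
  cases c with
  | nil => exact (IsCycle.not_of_nil hc).elim
  | cons h q =>
    rename_i v
    rw [cons_isCycle_iff] at hc
    have hxq : x ∈ q.support := by
      rw [support_cons, List.mem_cons] at hx
      rcases hx with rfl | hx
      · exact q.end_mem_support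
      · exact hx
    have hkey := path_countP q hc.1 x hxq
    rw [edges_cons, List.countP_cons]
    have huv : u ≠ v := h.ne
    simp only [decide_eq_true_eq, Sym2.mem_iff]
    split_ifs at hkey ⊢ <;> first | omega | (exfalso; simp_all)

lemma cycle_card_filter {V : Type*} [DecidableEq V] {G : SimpleGraph V} {u : V}
    (c : G.Walk u u) (hc : c.IsCycle) (x : V) (hx : x ∈ c.support) :
    (c.edges.toFinset.filter (fun e => x ∈ e)).card = 2 := by
  classical
  have hnd : c.edges.Nodup := hc.edges_nodup
  rw [← cycle_countP c hc x hx, List.countP_eq_length_filter]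
  have he : Finset.filter (fun e => x ∈ e) c.edges.toFinset
      = (c.edges.filter (fun e => decide (x ∈ e))).toFinset := by
    ext e; simp
  rw [he, List.toFinset_card_of_nodup (hnd.filter _)]

lemma swap_isPM {V : Type*} [Fintype V] [DecidableEq V]
    (G : SimpleGraph V) [DecidableRel G.Adj]
    (M₁ M₂ : Finset (Sym2 V)) (h₁ : IsPM G M₁) (h₂ : IsPM G M₂)
    {u : V} (c : G.Walk u u) (hc : c.IsCycle)
    (hsub : ∀ e ∈ c.edges, e ∈ symmDiff M₁ M₂) :
    IsPM G (symmDiff M₁ c.edges.toFinset) := by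
  classical
  set C := c.edges.toFinset with hC
  constructor
  · intro e he
    rw [Finset.mem_symmDiff] at he
    rcases he with ⟨he, _⟩ | ⟨he, _⟩
    · exact h₁.1 he
    · rw [SimpleGraph.mem_edgeFinset]
      exact c.edges_subset_edgeSet (List.mem_toFinset.mp he)
  · intro v
    by_cases hv : v ∈ c.support
    · set D := C.filter (fun e => v ∈ e) with hD
      have hDcard : D.card = 2 := cycle_card_filter c hc v hv
      have hM1 : (M₁.filter fun e => v ∈ e).card = 1 := h₁.2 v
      have hM2 : (M₂.filter fun e => v ∈ e).card = 1 := h₂.2 v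
      obtain ⟨e₁, he₁⟩ := Finset.card_eq_one.mp hM1
      have he₁M : e₁ ∈ M₁ ∧ v ∈ e₁ := by
        have : e₁ ∈ M₁.filter fun e => v ∈ e := he₁ ▸ Finset.mem_singleton_self e₁
        simpa using this
      -- exactly one edge of D is in M₁
      have hsubM : ∀ e ∈ D, e ∉ M₁ → e ∈ M₂ := by
        intro e heD heM
        have heC : e ∈ C := (Finset.mem_filter.mp heD).1
        have := hsub e (List.mem_toFinset.mp heC)
        rw [Finset.mem_symmDiff] at this
        tauto
      have hDM1 : (D.filter (· ∈ M₁)).card = 1 := by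
        have hle : D.filter (· ∈ M₁) ⊆ {e₁} := by
          intro e he
          rw [← he₁]
          simp only [Finset.mem_filter, hD] at he ⊢
          tauto
        have h1 : (D.filter (· ∈ M₁)).card ≤ 1 := by
          calc (D.filter (· ∈ M₁)).card ≤ ({e₁} : Finset (Sym2 V)).card :=
                Finset.card_le_card hle
            _ = 1 := Finset.card_singleton e₁
        have h2 : (D.filter (· ∈ M₁)).Nonempty := by
          by_contra hne
          rw [Finset.not_nonempty_iff_eq_empty, Finset.filter_eq_empty_iff] at hne
          have : D ⊆ M₂.filter fun e => v ∈ e := by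
            intro e heD
            have hvin : v ∈ e := (Finset.mem_filter.mp heD).2
            exact Finset.mem_filter.mpr ⟨hsubM e heD (hne heD), hvin⟩
          have := Finset.card_le_card this
          omega
        have := Finset.card_pos.mpr h2
        omega
      -- e₁ is in D
      have he₁D : e₁ ∈ D := by
        obtain ⟨a, ha⟩ := Finset.card_eq_one.mp hDM1
        have haD : a ∈ D ∧ a ∈ M₁ := by
          have : a ∈ D.filter (· ∈ M₁) := ha ▸ Finset.mem_singleton_self a
          simpa using this
        have hav : v ∈ a := (Finset.mem_filter.mp haD.1).2
        have : a ∈ M₁.filter fun e => v ∈ e := Finset.mem_filter.mpr ⟨haD.2, hav⟩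
        rw [he₁, Finset.mem_singleton] at this
        exact this ▸ haD.1
      -- the filter is D \ M₁
      have hEq : (symmDiff M₁ C).filter (fun e => v ∈ e) = D \ M₁ := by
        ext e
        simp only [Finset.mem_filter, Finset.mem_symmDiff, Finset.mem_sdiff, hD]
        constructor
        · rintro ⟨⟨heM, heC⟩ | ⟨heC, heM⟩, hve⟩
          · exfalso
            have : e ∈ M₁.filter fun e => v ∈ e := Finset.mem_filter.mpr ⟨heM, hve⟩
            rw [he₁, Finset.mem_singleton] at this
            subst this
            exact heC (Finset.mem_filter.mp he₁D).1
          · exact ⟨⟨heC, hve⟩, heM⟩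
        · rintro ⟨⟨heC, hve⟩, heM⟩
          exact ⟨Or.inr ⟨heC, heM⟩, hve⟩
      rw [hEq]
      have hinter : D ∩ M₁ = D.filter (· ∈ M₁) := (Finset.filter_mem_eq_inter).symm
      have := Finset.card_sdiff_add_card_inter D M₁
      rw [hinter, hDM1] at this
      omega
    · have hnotC : ∀ e ∈ C, v ∉ e := by
        intro e heC hve
        induction e with
        | h a b =>
          rcases Sym2.mem_iff.mp hve with rfl | rfl
          · exact hv (c.fst_mem_support_of_mem_edges (List.mem_toFinset.mp heC))
          · exact hv (c.snd_mem_support_of_mem_edges (List.mem_toFinset.mp heC))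
      have hEq : (symmDiff M₁ C).filter (fun e => v ∈ e) = M₁.filter (fun e => v ∈ e) := by
        ext e
        simp only [Finset.mem_filter, Finset.mem_symmDiff]
        constructor
        · rintro ⟨⟨heM, _⟩ | ⟨heC, _⟩, hve⟩
          · exact ⟨heM, hve⟩
          · exact absurd hve (hnotC e heC)
        · rintro ⟨heM, hve⟩
          refine ⟨Or.inl ⟨heM, fun heC => hnotC e heC hve⟩, hve⟩
      rw [hEq]
      exact h₁.2 v

lemma mweight_symmDiff {V : Type*} [DecidableEq V] (w : Sym2 V → ℤ)
    (M C : Finset (Sym2 V)) :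
    mweight w (symmDiff M C) = mweight w M - ∑ e ∈ C.filter (· ∈ M), w e
      + ∑ e ∈ C \ M, w e := by
  classical
  have hd : Disjoint (M \ C) (C \ M) := disjoint_sdiff_sdiff
  have hsd : symmDiff M C = (M \ C) ∪ (C \ M) := by
    ext e; simp only [Finset.mem_symmDiff, Finset.mem_union, Finset.mem_sdiff]
  rw [mweight, hsd, Finset.sum_union hd]
  have h1 : M \ C = M \ (M ∩ C) := by rw [Finset.sdiff_inter_self_left]
  have h2 : ∑ e ∈ M \ (M ∩ C), w e = ∑ e ∈ M, w e - ∑ e ∈ M ∩ C, w e :=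
    Finset.sum_sdiff_eq_sub Finset.inter_subset_left
  have h3 : C.filter (· ∈ M) = M ∩ C := by
    rw [Finset.filter_mem_eq_inter, Finset.inter_comm]
  rw [h1, h2, h3, mweight]


end Aux

/-- If `M₁` and `M₂` are minimum-weight perfect matchings of `G`, then every
cycle contained in the symmetric difference `M₁ Δ M₂` has circulation zero: the sum of the
weights of its `M₁`-edges equals the sum of the weights of its `M₂`-edges. -/
theorem cycle_in_symmdiff_zero_circulation {V : Type*} [Fintype V] [DecidableEq V]
    (G : SimpleGraph V) [DecidableRel G.Adj] (w : Sym2 V → ℤ)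
    (M₁ M₂ : Finset (Sym2 V)) (h₁ : IsPM G M₁) (h₂ : IsPM G M₂)
    (hmin₁ : ∀ N, IsPM G N → mweight w M₁ ≤ mweight w N)
    (hmin₂ : ∀ N, IsPM G N → mweight w M₂ ≤ mweight w N)
    (u : V) (c : G.Walk u u) (hc : c.IsCycle)
    (hsub : ∀ e ∈ c.edges, e ∈ symmDiff M₁ M₂) :
    ∑ e ∈ c.edges.toFinset.filter (· ∈ M₁), w e =
      ∑ e ∈ c.edges.toFinset.filter (· ∈ M₂), w e := by
  classical
  set C := c.edges.toFinset with hC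
  have hsub' : ∀ e ∈ c.edges, e ∈ symmDiff M₂ M₁ := by
    intro e he; rw [symmDiff_comm]; exact hsub e he
  have hpm1 : IsPM G (symmDiff M₁ C) := swap_isPM G M₁ M₂ h₁ h₂ c hc hsub
  have hpm2 : IsPM G (symmDiff M₂ C) := swap_isPM G M₂ M₁ h₂ h₁ c hc hsub'
  have hCM2 : C \ M₁ = C.filter (· ∈ M₂) := by
    ext e
    simp only [Finset.mem_sdiff, Finset.mem_filter]
    constructor <;> rintro ⟨heC, heM⟩ <;>
      [skip; skip] <;>
      · have := hsub e (List.mem_toFinset.mp heC)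
        rw [Finset.mem_symmDiff] at this
        tauto
  have hCM1 : C \ M₂ = C.filter (· ∈ M₁) := by
    ext e
    simp only [Finset.mem_sdiff, Finset.mem_filter]
    constructor <;> rintro ⟨heC, heM⟩ <;>
      [skip; skip] <;>
      · have := hsub e (List.mem_toFinset.mp heC)
        rw [Finset.mem_symmDiff] at this
        tauto
  have w1 := mweight_symmDiff w M₁ C
  have w2 := mweight_symmDiff w M₂ C
  rw [hCM2] at w1
  rw [hCM1] at w2
  have l1 := hmin₁ _ hpm1
  have l2 := hmin₂ _ hpm2
  rw [w1] at l1
  rw [w2] at l2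
  linarith
end

section
/- Let G = (V, E) be a matching-covered graph that contains 2ℓ pairwise edge-disjoint odd cycles and is connected. Then G contains at least cℓ²/|E| pairwise edge-disjoint even closed walks, for some absolute constant c > 0. -/
set_option linter.unusedSectionVars false
set_option maxHeartbeats 1600000

namespace PairUpAux
open SimpleGraph

variable {V : Type*} [DecidableEq V] {G : SimpleGraph V}

lemma mem_support_rotate {u x : V} (w : G.Walk u u) (hx : x ∈ w.support) {v : V}
    (hv : v ∈ w.support) : v ∈ (w.rotate _ hx).support := by
  have htail : (w.rotate _ hx).support.tail ~r w.support.tail := w.support_rotate _ hx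
  cases w with
  | nil =>
    simp only [Walk.support_nil, List.mem_singleton] at hv hx
    subst hv; subst hx; exact Walk.start_mem_support _
  | cons h p =>
    have hv' : v ∈ (Walk.cons h p).support.tail := by
      rw [Walk.support_cons]
      rcases (by simpa [Walk.support_cons] using hv : v = u ∨ v ∈ p.support) with rfl | hv2
      · simpa using Walk.end_mem_support p
      · simpa using hv2
    exact List.mem_of_mem_tail (htail.perm.mem_iff.mpr hv')

lemma exists_crossing {u v : V} (p : G.Walk u v) (S : V → Prop) [DecidablePred S]
    (hu : S u) (hv : ¬ S v) : ∃ x y, G.Adj x y ∧ S x ∧ ¬ S y := by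
  induction p with
  | nil => exact absurd hu hv
  | @cons a b c h q ih =>
    by_cases hS : S b
    · exact ih hS hv
    · exact ⟨a, b, h, hu, hS⟩

lemma tour_aux [Fintype V] (hG : G.Connected) :
    ∀ (n : ℕ) (u : V) (w : G.Walk u u), (∀ e, w.edges.count e ≤ 2) →
      (Finset.univ.filter (fun v => v ∉ w.support)).card ≤ n →
      ∃ (x : V) (t : G.Walk x x), (∀ v, v ∈ t.support) ∧ (∀ e, t.edges.count e ≤ 2) := by
  intro n
  induction n with
  | zero =>
    intro u w hcnt hcard
    refine ⟨u, w, fun v => ?_, hcnt⟩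
    by_contra hv
    have : 0 < (Finset.univ.filter (fun v => v ∉ w.support)).card :=
      Finset.card_pos.mpr ⟨v, by simp [hv]⟩
    omega
  | succ n ih =>
    intro u w hcnt hcard
    by_cases hall : ∀ v, v ∈ w.support
    · exact ⟨u, w, hall, hcnt⟩
    · push_neg at hall
      obtain ⟨v0, hv0⟩ := hall
      obtain ⟨pw⟩ := hG.preconnected u v0
      obtain ⟨x, y, hadj, hxS, hyS⟩ :=
        exists_crossing pw (fun z => z ∈ w.support) (Walk.start_mem_support w) hv0
      set w2 : G.Walk x x := Walk.cons hadj (Walk.cons hadj.symm (w.rotate _ hxS)) with hw2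
      have hrotmem : ∀ z ∈ w.support, z ∈ (w.rotate _ hxS).support :=
        fun z hz => mem_support_rotate w hxS hz
      have hcnt2 : ∀ e, w2.edges.count e ≤ 2 := by
        intro e
        have hrot : (w.rotate _ hxS).edges.count e = w.edges.count e :=
          ((w.rotate_edges _ hxS).perm).count_eq e
        have hedges : w2.edges = s(x, y) :: s(y, x) :: (w.rotate _ hxS).edges := by
          simp [hw2]
        rw [hedges]
        by_cases he : e = s(x, y)
        · subst he
          have hnot : s(x, y) ∉ w.edges := by
            intro hmem
            exact hyS (Walk.snd_mem_support_of_mem_edges w hmem)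
          have : w.edges.count s(x, y) = 0 := List.count_eq_zero.mpr hnot
          simp [List.count_cons, Sym2.eq_swap, hrot, this]
        · have hyx : s(y,x) = s(x,y) := Sym2.eq_swap
          simp only [List.count_cons, hrot, hyx]
          have : (s(x,y) == e) = false := by
            simp [beq_eq_false_iff_ne]; exact fun hh => he hh.symm
          simp [this]
          exact hcnt e
      refine ih x w2 hcnt2 ?_
      have hsub : (Finset.univ.filter (fun v => v ∉ w2.support)) ⊆
          (Finset.univ.filter (fun v => v ∉ w.support)).erase y := by
        intro z hz
        simp only [Finset.mem_filter, Finset.mem_univ, true_and] at hz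
        have hzy : z ≠ y := by
          rintro rfl
          exact hz (by simp [hw2])
        have hzw : z ∉ w.support := by
          intro hzw
          exact hz (by simp [hw2, Walk.support_cons]; right; right; exact hzw)
        exact Finset.mem_erase.mpr ⟨hzy, by simp [hzw]⟩
      have hy' : y ∈ (Finset.univ.filter (fun v => v ∉ w.support)) := by simp [hyS]
      have := Finset.card_le_card hsub
      rw [Finset.card_erase_of_mem hy'] at this
      omega

lemma exists_tour [Fintype V] (hG : G.Connected) : ∃ (x : V) (t : G.Walk x x),
    (∀ v, v ∈ t.support) ∧ (∀ e, t.edges.count e ≤ 2) := by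
  obtain ⟨u⟩ := hG.nonempty
  exact tour_aux hG _ u Walk.nil (by simp) le_rfl

/-! ### Pairing along a walk -/

variable {ι : Type*} [DecidableEq ι]

structure PW (G : SimpleGraph V) (ι : Type*) where
  a : ι × V
  b : ι × V
  walk : G.Walk a.2 b.2

def epsL (L : List (PW G ι)) : List (ι × V) := L.flatMap fun x => [x.a, x.b]

def eps (L : List (PW G ι)) : Multiset (ι × V) := ↑(epsL L)

def esum (L : List (PW G ι)) : Multiset (Sym2 V) :=
  (L.map fun x => (x.walk.edges : Multiset (Sym2 V))).sum

@[simp] lemma epsL_nil : epsL ([] : List (PW G ι)) = [] := rfl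
@[simp] lemma epsL_cons (x : PW G ι) (L : List (PW G ι)) :
    epsL (x :: L) = x.a :: x.b :: epsL L := rfl
@[simp] lemma epsL_append (L₁ L₂ : List (PW G ι)) :
    epsL (L₁ ++ L₂) = epsL L₁ ++ epsL L₂ := by simp [epsL]
@[simp] lemma eps_nil : eps ([] : List (PW G ι)) = 0 := rfl
@[simp] lemma eps_cons (x : PW G ι) (L : List (PW G ι)) :
    eps (x :: L) = x.a ::ₘ x.b ::ₘ eps L := rfl
@[simp] lemma esum_nil : esum ([] : List (PW G ι)) = 0 := rfl
@[simp] lemma esum_cons (x : PW G ι) (L : List (PW G ι)) :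
    esum (x :: L) = ↑x.walk.edges + esum L := by simp [esum]
@[simp] lemma eps_append (L₁ L₂ : List (PW G ι)) :
    eps (L₁ ++ L₂) = eps L₁ + eps L₂ := by simp [eps]
@[simp] lemma esum_append (L₁ L₂ : List (PW G ι)) :
    esum (L₁ ++ L₂) = esum L₁ + esum L₂ := by simp [esum]

@[simp] lemma epsL_length (L : List (PW G ι)) : (epsL L).length = 2 * L.length := by
  induction L with
  | nil => simp
  | cons x L ih => simp [ih]; omega

private lemma cons_eq_add {α : Type*} (e : α) (A : Multiset α) : e ::ₘ A = A + {e} := by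
  rw [← Multiset.singleton_add, add_comm]

lemma pairNils (u : V) : ∀ (n : ℕ) (M : List (ι × V)), M.length ≤ n →
    (∀ m ∈ M, m.2 = u) → Even M.length →
    ∃ L : List (PW G ι), eps L = ↑M ∧ esum L = 0 := by
  intro n
  induction n with
  | zero =>
    intro M hlen _ _
    have : M = [] := List.length_eq_zero_iff.mp (by omega)
    exact ⟨[], by simp [this], by simp⟩
  | succ n ih =>
    intro M hlen hall heven
    match M with
    | [] => exact ⟨[], by simp, by simp⟩
    | [m] => simp at heven
    | m1 :: m2 :: M' =>
      have h1 : m1.2 = u := hall m1 (by simp)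
      have h2 : m2.2 = u := hall m2 (by simp)
      have hM' : M'.length ≤ n := by simp at hlen; omega
      have heven' : Even M'.length := by
        simp only [List.length_cons] at heven
        rcases heven with ⟨t, ht⟩
        exact ⟨t - 1, by omega⟩
      obtain ⟨L', hL'1, hL'2⟩ := ih M' hM' (fun m hm => hall m (by simp [hm])) heven'
      refine ⟨⟨m1, m2, (Walk.nil' u).copy h1.symm h2.symm⟩ :: L', ?_, ?_⟩
      · simp [hL'1]
      · simp [hL'2]

lemma surgery : ∀ (L : List (PW G ι)) (t s : ι × V), t ∈ eps L → G.Adj s.2 t.2 →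
    ∃ L' : List (PW G ι), eps L' = s ::ₘ (eps L).erase t ∧
      esum L' ≤ esum L + {s(s.2, t.2)} := by
  intro L
  induction L with
  | nil => intro t s ht _; simp [eps, epsL] at ht
  | cons x L ih =>
    intro t s ht hadj
    by_cases h1 : t = x.a
    · refine ⟨⟨s, x.b, Walk.cons (h1 ▸ hadj) x.walk⟩ :: L, ?_, ?_⟩
      · subst h1; simp [Multiset.erase_cons_head]
      · refine le_of_eq ?_
        simp only [esum_cons, Walk.edges_cons]
        rw [show ((s(s.2, x.a.2) :: x.walk.edges : List (Sym2 V)) : Multiset (Sym2 V))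
            = s(s.2, x.a.2) ::ₘ ↑x.walk.edges from rfl, cons_eq_add]
        have : s(s.2, x.a.2) = s(s.2, t.2) := by rw [h1]
        rw [this]; abel
    · by_cases h2 : t = x.b
      · refine ⟨⟨x.a, s, x.walk.concat (h2 ▸ hadj).symm⟩ :: L, ?_, ?_⟩
        · subst h2
          rw [eps_cons, eps_cons,
            Multiset.erase_cons_tail _ (fun h => h1 h.symm),
            Multiset.erase_cons_head]
          simp only [cons_eq_add]
          abel
        · refine le_of_eq ?_
          simp only [esum_cons, Walk.edges_concat]
          have : s(x.b.2, s.2) = s(s.2, t.2) := by rw [h2, Sym2.eq_swap]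
          rw [← this, List.concat_eq_append, ← Multiset.coe_add]
          push_cast
          abel
      · have htL : t ∈ eps L := by
          simp only [eps_cons, Multiset.mem_cons] at ht
          rcases ht with h | h | h
          · exact absurd h h1
          · exact absurd h h2
          · exact h
        obtain ⟨L', hL'1, hL'2⟩ := ih t s htL hadj
        refine ⟨x :: L', ?_, ?_⟩
        · rw [eps_cons, hL'1, eps_cons,
            Multiset.erase_cons_tail _ (fun h => h1 h.symm),
            Multiset.erase_cons_tail _ (fun h => h2 h.symm)]
          simp only [cons_eq_add]
          abel
        · simp only [esum_cons]
          calc ↑x.walk.edges + esum L' ≤ ↑x.walk.edges + (esum L + {s(s.2, t.2)}) :=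
                add_le_add_right hL'2 _
            _ = ↑x.walk.edges + esum L + {s(s.2, t.2)} := by rw [add_assoc]

lemma pairup : ∀ {a b : V} (w : G.Walk a b) (M : List (ι × V)),
    (∀ m ∈ M, m.2 ∈ w.support) → Even M.length →
    ∃ L : List (PW G ι), eps L = ↑M ∧ esum L ≤ ↑w.edges := by
  intro a b w
  induction w with
  | nil =>
    intro M hM heven
    obtain ⟨L, h1, h2⟩ := pairNils _ M.length M le_rfl
      (fun m hm => by simpa using hM m hm) heven
    exact ⟨L, h1, by simp [h2]⟩
  | @cons a c b hadj p ih =>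
    intro M hM heven
    classical
    set M1 := M.filter (fun m => decide (m.2 ∈ p.support)) with hM1def
    set M0 := M.filter (fun m => !decide (m.2 ∈ p.support)) with hM0def
    have hperm : List.Perm (M1 ++ M0) M := List.filter_append_perm _ M
    have hM0a : ∀ m ∈ M0, m.2 = a := by
      intro m hm
      rw [hM0def, List.mem_filter] at hm
      have := hM m hm.1
      simp only [Walk.support_cons, List.mem_cons] at this
      rcases this with h | h
      · exact h
      · exfalso; revert hm; simp [h]
    have hM1p : ∀ m ∈ M1, m.2 ∈ p.support := by
      intro m hm
      rw [hM1def, List.mem_filter] at hm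
      simpa using hm.2
    have hlen : M1.length + M0.length = M.length := by
      rw [← List.length_append]; exact hperm.length_eq
    by_cases hpar : Even M0.length
    · have heven1 : Even M1.length := by
        rcases heven with ⟨t1, ht1⟩; rcases hpar with ⟨t0, ht0⟩
        exact ⟨t1 - t0, by omega⟩
      obtain ⟨L0, hL01, hL02⟩ := pairNils a M0.length M0 le_rfl hM0a hpar
      obtain ⟨L1, hL11, hL12⟩ := ih M1 hM1p heven1
      refine ⟨L0 ++ L1, ?_, ?_⟩
      · rw [eps_append, hL01, hL11]
        calc (↑M0 + ↑M1 : Multiset (ι × V)) = ↑(M0 ++ M1) := by rw [← Multiset.coe_add]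
          _ = ↑M := Multiset.coe_eq_coe.mpr (List.perm_append_comm.trans hperm)
      · rw [esum_append, hL02, zero_add]
        refine le_trans hL12 ?_
        rw [Walk.edges_cons, ← Multiset.cons_coe]
        exact Multiset.le_cons_self _ _
    · match hM0 : M0 with
      | [] => simp at hpar
      | m0 :: M0' =>
        have hm0a : m0.2 = a := hM0a m0 (by simp)
        have hM0'a : ∀ m ∈ M0', m.2 = a := fun m hm => hM0a m (by simp [hm])
        have hpar' : Even M0'.length := by
          simp only [List.length_cons] at hpar
          rcases Nat.even_or_odd M0'.length with h | h
          · exact h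
          · exact absurd (by rcases h with ⟨t, ht⟩; exact ⟨t+1, by omega⟩) hpar
        obtain ⟨L0, hL01, hL02⟩ := pairNils a M0'.length M0' le_rfl hM0'a hpar'
        have heven1 : Even ((m0.1, c) :: M1).length := by
          simp only [List.length_cons] at hlen ⊢
          rcases heven with ⟨t1, ht1⟩; rcases hpar' with ⟨t0, ht0⟩
          refine ⟨M1.length / 2 + 1, by omega⟩
        obtain ⟨L1, hL11, hL12⟩ := ih ((m0.1, c) :: M1)
          (by
            intro m hm
            rcases List.mem_cons.mp hm with rfl | hm'
            · exact Walk.start_mem_support p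
            · exact hM1p m hm') heven1
        have htmem : ((m0.1, c) : ι × V) ∈ eps L1 := by
          rw [hL11]; simp
        obtain ⟨L1', hL1'1, hL1'2⟩ := surgery L1 (m0.1, c) m0 htmem
          (by rw [hm0a]; exact hadj)
        refine ⟨L0 ++ L1', ?_, ?_⟩
        · rw [eps_append, hL01, hL1'1, hL11]
          rw [show ((((m0.1, c) :: M1 : List (ι × V))) : Multiset (ι × V))
              = (m0.1, c) ::ₘ ↑M1 from rfl, Multiset.erase_cons_head]
          have : (M : Multiset (ι × V)) = ↑(M1 ++ (m0 :: M0')) := by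
            rw [Multiset.coe_eq_coe]
            exact hperm.symm
          rw [this, ← Multiset.coe_add, ← Multiset.cons_coe]
          simp only [cons_eq_add]
          abel
        · rw [esum_append, hL02, zero_add]
          refine le_trans hL1'2 ?_
          rw [Walk.edges_cons, ← Multiset.cons_coe]
          have he : s(m0.2, c) = s(a, c) := by rw [hm0a]
          rw [he, cons_eq_add]
          exact add_le_add_left hL12 _

/-! ### Trimming paths -/

lemma firstHit {x y : V} (p : G.Walk x y) (T : V → Prop) [DecidablePred T] (hy : T y) :
    ∃ (y' : V) (q : G.Walk x y'), T y' ∧ (∀ e ∈ q.edges, e ∈ p.edges) ∧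
      (∀ v ∈ q.support, v ∈ p.support) ∧
      (p.IsPath → q.IsPath) ∧ (∀ v ∈ q.support, T v → v = y') := by
  induction p with
  | nil =>
    exact ⟨_, Walk.nil, hy, by simp, by simp, fun _ => by simp,
      by intro v hv _; simpa using hv⟩
  | @cons a c b h q ih =>
    by_cases hx : T a
    · exact ⟨a, Walk.nil, hx, by simp, by simp, fun _ => by simp,
        by intro v hv _; simpa using hv⟩
    · obtain ⟨y', q', hT, hE, hS, hP, hlast⟩ := ih hy
      refine ⟨y', Walk.cons h q', hT, ?_, ?_, ?_, ?_⟩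
      · intro e he
        rw [Walk.edges_cons] at he ⊢
        rcases List.mem_cons.mp he with rfl | he'
        · simp
        · exact List.mem_cons_of_mem _ (hE e he')
      · intro v hv
        rw [Walk.support_cons] at hv ⊢
        rcases List.mem_cons.mp hv with rfl | hv'
        · simp
        · exact List.mem_cons_of_mem _ (hS v hv')
      · intro hpath
        have h1 : q'.IsPath := hP (Walk.IsPath.of_cons hpath)
        refine h1.cons ?_
        intro hmem
        have : a ∈ q.support := hS a hmem
        rw [Walk.cons_isPath_iff] at hpath
        exact hpath.2 this
      · intro v hv hTv
        rw [Walk.support_cons] at hv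
        rcases List.mem_cons.mp hv with rfl | hv'
        · exact absurd hTv hx
        · exact hlast v hv' hTv

lemma trim {x y : V} (p : G.Walk x y) (hp : p.IsPath) (S T : V → Prop)
    [DecidablePred S] [DecidablePred T] (hx : S x) (hy : T y) :
    ∃ (x' y' : V) (q : G.Walk x' y'), q.IsPath ∧ S x' ∧ T y' ∧
      (∀ e ∈ q.edges, e ∈ p.edges) ∧
      (∀ v ∈ q.support, S v → v = x') ∧ (∀ v ∈ q.support, T v → v = y') := by
  obtain ⟨x', r, hSx', hrE, hrS, hrP, hrlast⟩ := firstHit p.reverse S hx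
  have hrpath : r.IsPath := hrP hp.reverse
  obtain ⟨y', q, hTy', hqE, hqS, hqP, hqlast⟩ := firstHit r.reverse T hy
  refine ⟨x', y', q, hqP hrpath.reverse, hSx', hTy', ?_, ?_, hqlast⟩
  · intro e he
    have h1 : e ∈ r.reverse.edges := hqE e he
    rw [Walk.edges_reverse, List.mem_reverse] at h1
    have h2 : e ∈ p.reverse.edges := hrE e h1
    rwa [Walk.edges_reverse, List.mem_reverse] at h2
  · intro v hv hSv
    have h1 : v ∈ r.reverse.support := hqS v hv
    rw [Walk.support_reverse, List.mem_reverse] at h1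
    exact hrlast v h1 hSv

lemma length_rotate {u x : V} (w : G.Walk u u) (hx : x ∈ w.support) :
    (w.rotate _ hx).length = w.length := by
  rw [← Walk.length_edges, ← Walk.length_edges]
  exact (w.rotate_edges _ hx).perm.length_eq

lemma mem_edges_rotate {u x : V} (w : G.Walk u u) (hx : x ∈ w.support) {e : Sym2 V} :
    e ∈ (w.rotate _ hx).edges ↔ e ∈ w.edges := (w.rotate_edges _ hx).perm.mem_iff

lemma cycle_path_disjoint {c x' y' : V} (C : G.Walk c c) (q : G.Walk x' y')
    (h : ∀ v ∈ q.support, v ∈ C.support → v = x') :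
    ∀ e ∈ C.edges, e ∉ q.edges := by
  intro e
  induction e using Sym2.ind with
  | _ a b =>
    intro heC heq
    have ha : a ∈ C.support := Walk.fst_mem_support_of_mem_edges C heC
    have hb : b ∈ C.support := Walk.snd_mem_support_of_mem_edges C heC
    have ha' : a ∈ q.support := Walk.fst_mem_support_of_mem_edges q heq
    have hb' : b ∈ q.support := Walk.snd_mem_support_of_mem_edges q heq
    have hax : a = x' := h a ha' ha
    have hbx : b = x' := h b hb' hb
    subst hax; subst hbx
    exact G.loopless.irrefl _ (q.adj_of_mem_edges heq)

/-! ### Greedy independent set -/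

lemma greedy {α : Type*} [DecidableEq α] (R : α → α → Prop) (hsym : ∀ a b, R a b → R b a)
    (nbr : α → Finset α) (hR : ∀ a b, a ≠ b → R a b → b ∈ nbr a) (D : ℕ) :
    ∀ (n : ℕ) (A : Finset α), A.card ≤ n → (∀ a ∈ A, (nbr a).card ≤ D) →
    ∃ S : Finset α, S ⊆ A ∧ (∀ s ∈ S, ∀ t ∈ S, s ≠ t → ¬ R s t) ∧
      A.card ≤ S.card * (D + 1) := by
  intro n
  induction n with
  | zero =>
    intro A hA _
    exact ⟨∅, Finset.empty_subset _, by simp, by simpa using hA⟩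
  | succ n ih =>
    intro A hA hdeg
    rcases Finset.eq_empty_or_nonempty A with rfl | ⟨a, ha⟩
    · exact ⟨∅, Finset.empty_subset _, by simp, by simp⟩
    · set A' := A \ insert a (nbr a) with hA'def
      have hA'sub : A' ⊆ A := Finset.sdiff_subset
      have hcard' : A'.card ≤ n := by
        have h1 : A'.card < A.card := by
          refine Finset.card_lt_card ?_
          constructor
          · exact hA'sub
          · intro hsub
            have := hsub ha
            rw [hA'def, Finset.mem_sdiff] at this
            exact this.2 (Finset.mem_insert_self _ _)
        omega
      obtain ⟨S', hS'sub, hS'ind, hS'card⟩ := ih A' hcard'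
        (fun b hb => hdeg b (hA'sub hb))
      have haS' : a ∉ S' := by
        intro hmem
        have := hS'sub hmem
        rw [hA'def, Finset.mem_sdiff] at this
        exact this.2 (Finset.mem_insert_self _ _)
      refine ⟨insert a S', ?_, ?_, ?_⟩
      · intro s hs
        rcases Finset.mem_insert.mp hs with rfl | hs'
        · exact ha
        · exact hA'sub (hS'sub hs')
      · intro s hs t ht hst
        rcases Finset.mem_insert.mp hs with rfl | hs' <;>
          rcases Finset.mem_insert.mp ht with rfl | ht'
        · exact absurd rfl hst
        · intro hRst
          have hmem := hS'sub ht'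
          rw [hA'def, Finset.mem_sdiff] at hmem
          have hne2 : s ≠ t := by
            rintro rfl
            exact hmem.2 (Finset.mem_insert_self _ _)
          exact hmem.2 (Finset.mem_insert_of_mem (hR _ _ hne2 hRst))
        · intro hRst
          have hmem := hS'sub hs'
          rw [hA'def, Finset.mem_sdiff] at hmem
          have hne2 : t ≠ s := by
            rintro rfl
            exact hmem.2 (Finset.mem_insert_self _ _)
          exact hmem.2 (Finset.mem_insert_of_mem (hR _ _ hne2 (hsym _ _ hRst)))
        · exact hS'ind s hs' t ht' hst
      · rw [Finset.card_insert_of_notMem haS']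
        have hsplit : A.card ≤ A'.card + (D + 1) := by
          have hsub2 : A ⊆ A' ∪ insert a (nbr a) := by
            intro z hz
            rw [Finset.mem_union, hA'def, Finset.mem_sdiff]
            by_cases h : z ∈ insert a (nbr a)
            · right; exact h
            · left; exact ⟨hz, h⟩
          calc A.card ≤ (A' ∪ insert a (nbr a)).card := Finset.card_le_card hsub2
            _ ≤ A'.card + (insert a (nbr a)).card := Finset.card_union_le _ _
            _ ≤ A'.card + (D + 1) := by
                have := Finset.card_insert_le a (nbr a)
                have := hdeg a ha
                omega
        calc A.card ≤ A'.card + (D + 1) := hsplit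
          _ ≤ S'.card * (D + 1) + (D + 1) := by omega
          _ = (S'.card + 1) * (D + 1) := by ring

lemma select {α : Type*} [DecidableEq α] [Fintype α] (R : α → α → Prop)
    (hsym : ∀ a b, R a b → R b a)
    (nbr : α → Finset α) (hR : ∀ a b, a ≠ b → R a b → b ∈ nbr a) (B : ℕ)
    (hB : ∑ a : α, (nbr a).card ≤ B) (hm : 0 < Fintype.card α) :
    ∃ S : Finset α, (∀ s ∈ S, ∀ t ∈ S, s ≠ t → ¬ R s t) ∧
      Fintype.card α * Fintype.card α ≤ 2 * S.card * (2 * B + Fintype.card α) := by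
  classical
  set m := Fintype.card α with hmdef
  set D := 2 * B / m with hDdef
  have hDm : m * D ≤ 2 * B ∧ 2 * B < m * (D + 1) := by
    constructor
    · rw [hDdef, mul_comm]; exact Nat.div_mul_le_self _ _
    · rw [hDdef]
      have hmod := Nat.div_add_mod (2 * B) m
      have hlt : 2 * B % m < m := Nat.mod_lt _ hm
      nlinarith [hmod, hlt]
  set A := Finset.univ.filter (fun a : α => (nbr a).card ≤ D) with hAdef
  have hAc : (Finset.univ.filter (fun a : α => ¬ (nbr a).card ≤ D)).card * (D + 1) ≤ B := by
    calc (Finset.univ.filter (fun a : α => ¬ (nbr a).card ≤ D)).card * (D + 1)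
        = (Finset.univ.filter (fun a : α => ¬ (nbr a).card ≤ D)).card • (D + 1) := by
          simp [smul_eq_mul]
      _ ≤ ∑ a ∈ Finset.univ.filter (fun a : α => ¬ (nbr a).card ≤ D), (nbr a).card := by
          refine Finset.card_nsmul_le_sum _ _ _ ?_
          intro x hx
          simp only [Finset.mem_filter] at hx
          omega
      _ ≤ ∑ a : α, (nbr a).card :=
          Finset.sum_le_sum_of_subset (Finset.filter_subset _ _)
      _ ≤ B := hB
  have hcardsplit : A.card + (Finset.univ.filter (fun a : α => ¬ (nbr a).card ≤ D)).card = m := by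
    rw [hAdef, Finset.card_filter_add_card_filter_not]
    simp [hmdef]
  have hA2 : m ≤ 2 * A.card := by
    by_contra hcon
    push_neg at hcon
    set k := (Finset.univ.filter (fun a : α => ¬ (nbr a).card ≤ D)).card
    have hk : m + 1 ≤ 2 * k := by omega
    have h1 : (m + 1) * (D + 1) ≤ 2 * k * (D + 1) := Nat.mul_le_mul_right _ hk
    have h2 : 2 * (k * (D + 1)) ≤ 2 * B := by omega
    nlinarith [hDm.1, hDm.2]
  obtain ⟨S, _, hSind, hScard⟩ := greedy R hsym nbr hR D A.card A le_rfl
    (fun a haA => by rw [hAdef] at haA; simpa using (Finset.mem_filter.mp haA).2)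
  refine ⟨S, hSind, ?_⟩
  have h1 : m ≤ 2 * (S.card * (D + 1)) := by omega
  have h2 : m * (D + 1) ≤ 2 * B + m := by nlinarith [hDm.1]
  calc m * m ≤ (2 * (S.card * (D + 1))) * m := Nat.mul_le_mul_right _ h1
    _ = 2 * S.card * (m * (D + 1)) := by ring
    _ ≤ 2 * S.card * (2 * B + m) := Nat.mul_le_mul_left _ h2

end PairUpAux


/-- An even walk: a closed walk of even length that traverses either a simple even cycle,
or two edge-disjoint odd cycles joined by a path traversed twice (once in each
direction). -/
def IsEvenWalk {V : Type*} (G : SimpleGraph V) {u : V} (c : G.Walk u u) : Prop :=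
  (c.IsCycle ∧ Even c.length) ∨
  ∃ (y : V) (c₁ : G.Walk u u) (c₂ : G.Walk y y) (p : G.Walk u y),
    c₁.IsCycle ∧ c₂.IsCycle ∧ Odd c₁.length ∧ Odd c₂.length ∧ p.IsPath ∧
    (∀ e ∈ c₁.edges, e ∉ c₂.edges) ∧ (∀ e ∈ c₁.edges, e ∉ p.edges) ∧
    (∀ e ∈ c₂.edges, e ∉ p.edges) ∧
    c = c₁.append ((p.append c₂).append p.reverse)

open PairUpAux SimpleGraph

/-- There is an absolute constant `c > 0` such that every connected
matching-covered graph `G` containing `2ℓ` pairwise edge-disjoint odd cycles contains at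
least `c ℓ² / |E|` pairwise edge-disjoint even walks. -/
theorem pair_up_odd_cycles :
    ∃ c : ℝ, 0 < c ∧
      ∀ (V : Type) [Fintype V] [DecidableEq V] (G : SimpleGraph V) [DecidableRel G.Adj],
        G.Connected →
        (∀ e ∈ G.edgeSet, ∃ M : G.Subgraph, M.IsPerfectMatching ∧ e ∈ M.edgeSet) →
        ∀ (ℓ : ℕ) (u : Fin (2 * ℓ) → V) (cyc : ∀ i, G.Walk (u i) (u i)),
          (∀ i, (cyc i).IsCycle) → (∀ i, Odd (cyc i).length) →
          (∀ i j, i ≠ j → ∀ e ∈ (cyc i).edges, e ∉ (cyc j).edges) →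
          ∃ (m : ℕ) (x : Fin m → V) (wk : ∀ i, G.Walk (x i) (x i)),
            (∀ i, IsEvenWalk G (wk i)) ∧
            (∀ i j, i ≠ j → ∀ e ∈ (wk i).edges, e ∉ (wk j).edges) ∧
            c * (ℓ : ℝ) ^ 2 / G.edgeFinset.card ≤ m := by
  refine ⟨1/100, by norm_num, ?_⟩
  intro V _ _ G _ hconn _hmc ℓ u cyc hcyc hodd hdisj
  classical
  rcases Nat.eq_zero_or_pos ℓ with rfl | hlpos
  · exact ⟨0, Fin.elim0, fun i => i.elim0, fun i => i.elim0, fun i j h => i.elim0,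
      by norm_num⟩
  set E := G.edgeFinset.card with hEdef
  have hE6 : 6 * ℓ ≤ E := by
    have hsub : (Finset.univ.biUnion fun i : Fin (2*ℓ) => (cyc i).edges.toFinset)
        ⊆ G.edgeFinset := by
      intro e he
      rw [Finset.mem_biUnion] at he
      obtain ⟨i, _, hei⟩ := he
      rw [List.mem_toFinset] at hei
      exact SimpleGraph.mem_edgeFinset.mpr ((cyc i).edges_subset_edgeSet hei)
    have hdisjf : ∀ i ∈ (Finset.univ : Finset (Fin (2*ℓ))), ∀ j ∈ Finset.univ, i ≠ j →
        Disjoint (cyc i).edges.toFinset (cyc j).edges.toFinset := by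
      intro i _ j _ hij
      rw [Finset.disjoint_left]
      intro e hei hej
      rw [List.mem_toFinset] at hei hej
      exact hdisj i j hij e hei hej
    have hcardeq := Finset.card_biUnion hdisjf
    have hlower : ∀ i : Fin (2*ℓ), 3 ≤ (cyc i).edges.toFinset.card := by
      intro i
      rw [List.toFinset_card_of_nodup (hcyc i).edges_nodup, Walk.length_edges]
      exact (hcyc i).three_le_length
    calc 6 * ℓ = ∑ _i : Fin (2*ℓ), 3 := by rw [Finset.sum_const, Finset.card_univ, Fintype.card_fin, smul_eq_mul]; ring
      _ ≤ ∑ i : Fin (2*ℓ), (cyc i).edges.toFinset.card :=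
          Finset.sum_le_sum (fun i _ => hlower i)
      _ = (Finset.univ.biUnion fun i : Fin (2*ℓ) => (cyc i).edges.toFinset).card :=
          hcardeq.symm
      _ ≤ E := Finset.card_le_card hsub
  obtain ⟨x0, tour, htourS, htourC⟩ := exists_tour hconn
  have htourlen : tour.edges.length ≤ 2 * E := by
    have h1 : (tour.edges : Multiset (Sym2 V)).toFinset ⊆ G.edgeFinset := by
      intro e he
      rw [Multiset.mem_toFinset, Multiset.mem_coe] at he
      exact SimpleGraph.mem_edgeFinset.mpr (tour.edges_subset_edgeSet he)
    calc tour.edges.length = Multiset.card (tour.edges : Multiset (Sym2 V)) := by simp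
      _ = ∑ e ∈ (tour.edges : Multiset (Sym2 V)).toFinset,
            (tour.edges : Multiset (Sym2 V)).count e := (Multiset.toFinset_sum_count_eq _).symm
      _ ≤ ∑ _e ∈ (tour.edges : Multiset (Sym2 V)).toFinset, 2 := by
          refine Finset.sum_le_sum ?_
          intro e _
          rw [Multiset.coe_count]
          exact htourC e
      _ ≤ ∑ _e ∈ G.edgeFinset, 2 := Finset.sum_le_sum_of_subset h1
      _ = 2 * E := by simp [hEdef, mul_comm]
  set M₀ : List (Fin (2*ℓ) × V) := (List.finRange (2*ℓ)).map (fun i => (i, u i)) with hM₀def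
  obtain ⟨L, hLeps, hLsum⟩ := pairup tour M₀
    (fun m _ => htourS m.2)
    (by rw [hM₀def, List.length_map, List.length_finRange]; exact ⟨ℓ, by ring⟩)
  have hLperm : List.Perm (epsL L) M₀ := Multiset.coe_eq_coe.mp hLeps
  have hLlen : L.length = ℓ := by
    have h := hLperm.length_eq
    rw [epsL_length] at h
    simp [hM₀def] at h
    omega
  have hmemepsa : ∀ x ∈ L, x.a ∈ epsL L :=
    fun x hx => List.mem_flatMap.mpr ⟨x, hx, by simp⟩
  have hmemepsb : ∀ x ∈ L, x.b ∈ epsL L :=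
    fun x hx => List.mem_flatMap.mpr ⟨x, hx, by simp⟩
  have hM₀form : ∀ m ∈ M₀, m.2 = u m.1 := by
    intro m hm
    rw [hM₀def, List.mem_map] at hm
    obtain ⟨i, _, rfl⟩ := hm
    rfl
  set ia : Fin L.length → Fin (2*ℓ) := fun k => (L.get k).a.1 with hiadef
  set jb : Fin L.length → Fin (2*ℓ) := fun k => (L.get k).b.1 with hjbdef
  have hva : ∀ k, (L.get k).a.2 = u (ia k) :=
    fun k => hM₀form _ (hLperm.mem_iff.mp (hmemepsa _ (L.get_mem k)))
  have hvb : ∀ k, (L.get k).b.2 = u (jb k) :=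
    fun k => hM₀form _ (hLperm.mem_iff.mp (hmemepsb _ (L.get_mem k)))
  have hM₀fst : M₀.map Prod.fst = List.finRange (2*ℓ) := by
    rw [hM₀def, List.map_map]
    exact List.map_id _
  have hflat : (epsL L).map Prod.fst = L.flatMap (fun x => [x.a.1, x.b.1]) := by
    simp [epsL, List.map_flatMap]
  have hflatnodup : (L.flatMap (fun x => [x.a.1, x.b.1])).Nodup := by
    rw [← hflat]
    refine (hLperm.map Prod.fst).nodup_iff.mpr ?_
    rw [hM₀fst]
    exact List.nodup_finRange _
  have hpairnodup := (List.nodup_flatMap.mp hflatnodup).1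
  have hpairwise := (List.nodup_flatMap.mp hflatnodup).2
  have hne : ∀ k : Fin L.length, ia k ≠ jb k := by
    intro k
    have h := hpairnodup (L.get k) (L.get_mem k)
    simp at h
    exact h
  have hdistinct : ∀ k k' : Fin L.length, k ≠ k' →
      ∀ z, (z = ia k ∨ z = jb k) → (z = ia k' ∨ z = jb k') → False := by
    have hpg := List.pairwise_iff_get.mp hpairwise
    intro k k' hkk' z hz hz'
    have key : ∀ (m1 m2 : Fin L.length), m1 < m2 →
        ∀ w, (w = ia m1 ∨ w = jb m1) → (w = ia m2 ∨ w = jb m2) → False := by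
      intro m1 m2 hlt w hw1 hw2
      have hd := hpg m1 m2 hlt
      have hw1' : w ∈ (fun x => [x.a.1, x.b.1]) (L.get m1) := by
        rcases hw1 with rfl | rfl <;> simp [hiadef, hjbdef]
      have hw2' : w ∈ (fun x => [x.a.1, x.b.1]) (L.get m2) := by
        rcases hw2 with rfl | rfl <;> simp [hiadef, hjbdef]
      exact hd hw1' hw2'
    rcases lt_or_gt_of_ne hkk' with hlt | hlt
    · exact key k k' hlt z hz hz'
    · exact key k' k hlt z hz' hz
  -- per-pair dumbbells
  have main : ∀ k : Fin L.length, ∃ (xx : V) (wkk : G.Walk xx xx) (pe : List (Sym2 V)),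
      IsEvenWalk G wkk ∧
      (∀ e ∈ wkk.edges, e ∈ (cyc (ia k)).edges ∨ e ∈ (cyc (jb k)).edges ∨ e ∈ pe) ∧
      (∀ e ∈ pe, e ∈ (L.get k).walk.edges) := by
    intro k
    obtain ⟨x', y', p, hppath, hSx', hTy', hpE, hlastS, hlastT⟩ :=
      trim (((L.get k).walk).copy (hva k) (hvb k)).bypass (Walk.bypass_isPath _)
        (fun v => v ∈ (cyc (ia k)).support) (fun v => v ∈ (cyc (jb k)).support)
        (Walk.start_mem_support _) (Walk.start_mem_support _)
    have hpE' : ∀ e ∈ p.edges, e ∈ (L.get k).walk.edges := by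
      intro e he
      have h1 := hpE e he
      have h2 := Walk.edges_bypass_subset _ h1
      rwa [Walk.edges_copy] at h2
    set C₁ := (cyc (ia k)).rotate _ hSx' with hC₁def
    set C₂ := (cyc (jb k)).rotate _ hTy' with hC₂def
    have hC₁e : ∀ {e}, e ∈ C₁.edges ↔ e ∈ (cyc (ia k)).edges :=
      fun {e} => mem_edges_rotate _ hSx'
    have hC₂e : ∀ {e}, e ∈ C₂.edges ↔ e ∈ (cyc (jb k)).edges :=
      fun {e} => mem_edges_rotate _ hTy'
    have hd1p : ∀ e ∈ C₁.edges, e ∉ p.edges := by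
      intro e he
      exact cycle_path_disjoint (cyc (ia k)) p (fun v hv hvC => hlastS v hv hvC) e
        (hC₁e.mp he)
    have hd2p : ∀ e ∈ C₂.edges, e ∉ p.edges := by
      intro e he hep
      have h1 : e ∈ p.reverse.edges := by
        rw [Walk.edges_reverse, List.mem_reverse]; exact hep
      exact cycle_path_disjoint (cyc (jb k)) p.reverse
        (fun v hv hvC => hlastT v (by rwa [Walk.support_reverse, List.mem_reverse] at hv) hvC)
        e (hC₂e.mp he) h1
    refine ⟨x', C₁.append ((p.append C₂).append p.reverse), p.edges, Or.inr
      ⟨y', C₁, C₂, p, (hcyc _).rotate _, (hcyc _).rotate _, ?_, ?_, hppath, ?_, hd1p, hd2p,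
        rfl⟩, ?_, hpE'⟩
    · rw [length_rotate]; exact hodd _
    · rw [length_rotate]; exact hodd _
    · intro e he hec
      exact hdisj (ia k) (jb k) (hne k) e (hC₁e.mp he) (hC₂e.mp hec)
    · intro e he
      rw [Walk.edges_append, List.mem_append] at he
      rcases he with h | h
      · exact Or.inl (hC₁e.mp h)
      · rw [Walk.edges_append, List.mem_append] at h
        rcases h with h | h
        · rw [Walk.edges_append, List.mem_append] at h
          rcases h with h | h
          · exact Or.inr (Or.inr h)
          · exact Or.inr (Or.inl (hC₂e.mp h))
        · rw [Walk.edges_reverse, List.mem_reverse] at h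
          exact Or.inr (Or.inr h)
  choose xx wkk pe hEven hCover hPsub using main
  -- counting
  set qe : Fin L.length → List (Sym2 V) := fun k => (L.get k).walk.edges with hqedef
  have hesum : esum L = ∑ k : Fin L.length, (qe k : Multiset (Sym2 V)) := by
    rw [esum, Fin.sum_univ_def]
    congr 1
    conv_lhs => rw [← List.map_get_finRange L]
    rw [List.map_map]
    rfl
  have hQcount : ∀ e : Sym2 V, ∑ k : Fin L.length, (qe k).count e ≤ 2 := by
    intro e
    have h1 : Multiset.count e (esum L) ≤ Multiset.count e (tour.edges : Multiset (Sym2 V)) :=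
      Multiset.count_le_of_le e hLsum
    rw [hesum, Multiset.count_sum'] at h1
    rw [Multiset.coe_count] at h1
    calc ∑ k : Fin L.length, (qe k).count e
        = ∑ k : Fin L.length, Multiset.count e (qe k : Multiset (Sym2 V)) := by
          refine Finset.sum_congr rfl (fun k _ => ?_)
          rw [Multiset.coe_count]
      _ ≤ tour.edges.count e := h1
      _ ≤ 2 := htourC e
  have hQlen : ∑ k : Fin L.length, (qe k).length ≤ 2 * E := by
    have h1 : Multiset.card (esum L) ≤ Multiset.card (tour.edges : Multiset (Sym2 V)) :=
      Multiset.card_le_card hLsum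
    have hcs : Multiset.card (∑ k : Fin L.length, (qe k : Multiset (Sym2 V)))
        = ∑ k : Fin L.length, Multiset.card (qe k : Multiset (Sym2 V)) := by
      induction (Finset.univ : Finset (Fin L.length)) using Finset.induction with
      | empty => simp
      | @insert a s h ih => simp [Finset.sum_insert h, ih]
    rw [hesum, hcs] at h1
    simp only [Multiset.coe_card] at h1
    calc ∑ k : Fin L.length, (qe k).length ≤ Multiset.card (tour.edges : Multiset (Sym2 V)) := h1
      _ = tour.edges.length := by simp
      _ ≤ 2 * E := htourlen
  -- key cardinality bounds
  have hCyc1 : ∀ e : Sym2 V,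
      (Finset.univ.filter (fun k : Fin L.length =>
        e ∈ (cyc (ia k)).edges ∨ e ∈ (cyc (jb k)).edges)).card ≤ 1 := by
    intro e
    rw [Finset.card_le_one]
    intro k1 hk1 k2 hk2
    simp only [Finset.mem_filter, Finset.mem_univ, true_and] at hk1 hk2
    by_contra hne12
    have : ∀ z1 z2 : Fin (2*ℓ), (z1 = ia k1 ∨ z1 = jb k1) → (z2 = ia k2 ∨ z2 = jb k2) →
        e ∈ (cyc z1).edges → e ∈ (cyc z2).edges → False := by
      intro z1 z2 hz1 hz2 he1 he2
      by_cases hz : z1 = z2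
      · subst hz
        exact hdistinct k1 k2 hne12 z1 hz1 hz2
      · exact hdisj z1 z2 hz e he1 he2
    rcases hk1 with h1 | h1 <;> rcases hk2 with h2 | h2
    · exact this _ _ (Or.inl rfl) (Or.inl rfl) h1 h2
    · exact this _ _ (Or.inl rfl) (Or.inr rfl) h1 h2
    · exact this _ _ (Or.inr rfl) (Or.inl rfl) h1 h2
    · exact this _ _ (Or.inr rfl) (Or.inr rfl) h1 h2
  have hP2 : ∀ e : Sym2 V,
      (Finset.univ.filter (fun k : Fin L.length => e ∈ pe k)).card ≤ 2 := by
    intro e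
    calc (Finset.univ.filter (fun k : Fin L.length => e ∈ pe k)).card
        = ∑ k ∈ Finset.univ.filter (fun k : Fin L.length => e ∈ pe k), 1 := by simp
      _ ≤ ∑ k ∈ Finset.univ.filter (fun k : Fin L.length => e ∈ pe k), (qe k).count e := by
          refine Finset.sum_le_sum ?_
          intro k hk
          simp only [Finset.mem_filter] at hk
          have : e ∈ qe k := hPsub k e hk.2
          exact List.count_pos_iff.mpr this
      _ ≤ ∑ k : Fin L.length, (qe k).count e :=
          Finset.sum_le_sum_of_subset (Finset.filter_subset _ _)
      _ ≤ 2 := hQcount e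
  have hW3 : ∀ e : Sym2 V,
      (Finset.univ.filter (fun k : Fin L.length => e ∈ (wkk k).edges)).card ≤ 3 := by
    intro e
    have hsub : Finset.univ.filter (fun k : Fin L.length => e ∈ (wkk k).edges) ⊆
        (Finset.univ.filter (fun k : Fin L.length =>
          e ∈ (cyc (ia k)).edges ∨ e ∈ (cyc (jb k)).edges)) ∪
        (Finset.univ.filter (fun k : Fin L.length => e ∈ pe k)) := by
      intro k hk
      simp only [Finset.mem_filter, Finset.mem_univ, true_and, Finset.mem_union] at hk ⊢
      rcases hCover k e hk with h | h | h
      · exact Or.inl (Or.inl h)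
      · exact Or.inl (Or.inr h)
      · exact Or.inr h
    calc (Finset.univ.filter (fun k : Fin L.length => e ∈ (wkk k).edges)).card
        ≤ _ := Finset.card_le_card hsub
      _ ≤ _ := Finset.card_union_le _ _
      _ ≤ 3 := by
          have := hCyc1 e
          have := hP2 e
          omega
  -- conflict graph
  set R : Fin L.length → Fin L.length → Prop :=
    fun k k' => ∃ e, e ∈ (wkk k).edges ∧ e ∈ (wkk k').edges with hRdef
  set nbr : Fin L.length → Finset (Fin L.length) :=
    fun k => Finset.univ.filter (fun k' => k' ≠ k ∧ R k k') with hnbrdef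
  have hsym : ∀ a b, R a b → R b a := by
    intro a b ⟨e, h1, h2⟩
    exact ⟨e, h2, h1⟩
  have hRnbr : ∀ a b, (b ≠ a ∧ R a b) → b ∈ nbr a := by
    intro a b h
    simp [hnbrdef, h.1, h.2]
  -- total degree bound
  have hdegsum : ∑ k : Fin L.length, (nbr k).card ≤ 8 * E := by
    have hsubN : ∀ k, nbr k ⊆
        (Finset.univ.filter (fun k' => k' ≠ k ∧ ∃ e ∈ pe k, e ∈ (wkk k').edges)) ∪
        (Finset.univ.filter (fun k' => k' ≠ k ∧ ∃ e ∈ pe k',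
          e ∈ (cyc (ia k)).edges ∨ e ∈ (cyc (jb k)).edges)) := by
      intro k k' hk'
      simp only [hnbrdef, Finset.mem_filter, Finset.mem_univ, true_and] at hk'
      obtain ⟨hne', e, he1, he2⟩ := hk'
      simp only [Finset.mem_union, Finset.mem_filter, Finset.mem_univ, true_and]
      rcases hCover k e he1 with h | h | h
      · -- e in cyc part of k; look at k'
        rcases hCover k' e he2 with h' | h' | h'
        · exfalso
          by_cases hz : ia k = ia k'
          · exact hdistinct k k' (fun hh => hne' hh.symm) (ia k) (Or.inl rfl)
              (Or.inl (by rw [hz])) 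
          · exact hdisj _ _ hz e h h'
        · exfalso
          by_cases hz : ia k = jb k'
          · exact hdistinct k k' (fun hh => hne' hh.symm) (ia k) (Or.inl rfl)
              (Or.inr (by rw [hz]))
          · exact hdisj _ _ hz e h h'
        · exact Or.inr ⟨hne', e, h', Or.inl h⟩
      · rcases hCover k' e he2 with h' | h' | h'
        · exfalso
          by_cases hz : jb k = ia k'
          · exact hdistinct k k' (fun hh => hne' hh.symm) (jb k) (Or.inr rfl)
              (Or.inl (by rw [hz]))
          · exact hdisj _ _ hz e h h'
        · exfalso
          by_cases hz : jb k = jb k'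
          · exact hdistinct k k' (fun hh => hne' hh.symm) (jb k) (Or.inr rfl)
              (Or.inr (by rw [hz]))
          · exact hdisj _ _ hz e h h'
        · exact Or.inr ⟨hne', e, h', Or.inr h⟩
      · exact Or.inl ⟨hne', e, h, he2⟩
    have hN1 : ∀ k, (Finset.univ.filter (fun k' : Fin L.length =>
        k' ≠ k ∧ ∃ e ∈ pe k, e ∈ (wkk k').edges)).card ≤ 3 * (qe k).length := by
      intro k
      have hsub1 : (Finset.univ.filter (fun k' : Fin L.length =>
          k' ≠ k ∧ ∃ e ∈ pe k, e ∈ (wkk k').edges)) ⊆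
          (pe k).toFinset.biUnion (fun e =>
            Finset.univ.filter (fun k' : Fin L.length => e ∈ (wkk k').edges)) := by
        intro k' hk'
        simp only [Finset.mem_filter, Finset.mem_univ, true_and] at hk'
        obtain ⟨_, e, he1, he2⟩ := hk'
        rw [Finset.mem_biUnion]
        exact ⟨e, List.mem_toFinset.mpr he1, by simp [he2]⟩
      calc (Finset.univ.filter (fun k' : Fin L.length =>
          k' ≠ k ∧ ∃ e ∈ pe k, e ∈ (wkk k').edges)).card
          ≤ _ := Finset.card_le_card hsub1
        _ ≤ ∑ e ∈ (pe k).toFinset,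
              (Finset.univ.filter (fun k' : Fin L.length => e ∈ (wkk k').edges)).card :=
            Finset.card_biUnion_le
        _ ≤ ∑ _e ∈ (pe k).toFinset, 3 := Finset.sum_le_sum (fun e _ => hW3 e)
        _ = 3 * (pe k).toFinset.card := by rw [Finset.sum_const, smul_eq_mul, mul_comm]
        _ ≤ 3 * (qe k).length := by
            have hsub2 : (pe k).toFinset ⊆ (qe k).toFinset := by
              intro e he
              rw [List.mem_toFinset] at he ⊢
              exact hPsub k e he
            have h3 := Finset.card_le_card hsub2
            have h4 : (qe k).toFinset.card ≤ (qe k).length := (qe k).toFinset_card_le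
            omega
    have hN2 : ∑ k : Fin L.length, (Finset.univ.filter (fun k' : Fin L.length =>
        k' ≠ k ∧ ∃ e ∈ pe k', e ∈ (cyc (ia k)).edges ∨ e ∈ (cyc (jb k)).edges)).card
        ≤ 2 * E := by
      have hswap : ∑ k : Fin L.length, (Finset.univ.filter (fun k' : Fin L.length =>
          k' ≠ k ∧ ∃ e ∈ pe k', e ∈ (cyc (ia k)).edges ∨ e ∈ (cyc (jb k)).edges)).card
          = ∑ k' : Fin L.length, (Finset.univ.filter (fun k : Fin L.length =>
          k' ≠ k ∧ ∃ e ∈ pe k', e ∈ (cyc (ia k)).edges ∨ e ∈ (cyc (jb k)).edges)).card := by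
        simp only [Finset.card_filter]
        rw [Finset.sum_comm]
      rw [hswap]
      have hinner : ∀ k' : Fin L.length, (Finset.univ.filter (fun k : Fin L.length =>
          k' ≠ k ∧ ∃ e ∈ pe k', e ∈ (cyc (ia k)).edges ∨ e ∈ (cyc (jb k)).edges)).card
          ≤ (qe k').length := by
        intro k'
        have hsub1 : (Finset.univ.filter (fun k : Fin L.length =>
            k' ≠ k ∧ ∃ e ∈ pe k', e ∈ (cyc (ia k)).edges ∨ e ∈ (cyc (jb k)).edges)) ⊆
            (pe k').toFinset.biUnion (fun e =>
              Finset.univ.filter (fun k : Fin L.length =>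
                e ∈ (cyc (ia k)).edges ∨ e ∈ (cyc (jb k)).edges)) := by
          intro k hk
          simp only [Finset.mem_filter, Finset.mem_univ, true_and] at hk
          obtain ⟨_, e, he1, he2⟩ := hk
          rw [Finset.mem_biUnion]
          exact ⟨e, List.mem_toFinset.mpr he1, by simp [he2]⟩
        calc (Finset.univ.filter (fun k : Fin L.length =>
            k' ≠ k ∧ ∃ e ∈ pe k', e ∈ (cyc (ia k)).edges ∨ e ∈ (cyc (jb k)).edges)).card
            ≤ _ := Finset.card_le_card hsub1
          _ ≤ ∑ e ∈ (pe k').toFinset, (Finset.univ.filter (fun k : Fin L.length =>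
              e ∈ (cyc (ia k)).edges ∨ e ∈ (cyc (jb k)).edges)).card :=
              Finset.card_biUnion_le
          _ ≤ ∑ _e ∈ (pe k').toFinset, 1 := Finset.sum_le_sum (fun e _ => hCyc1 e)
          _ = (pe k').toFinset.card := by simp
          _ ≤ (qe k').length := by
              have hsub2 : (pe k').toFinset ⊆ (qe k').toFinset := by
                intro e he
                rw [List.mem_toFinset] at he ⊢
                exact hPsub k' e he
              have h3 := Finset.card_le_card hsub2
              have h4 : (qe k').toFinset.card ≤ (qe k').length := (qe k').toFinset_card_le
              omega
      calc ∑ k' : Fin L.length, (Finset.univ.filter (fun k : Fin L.length =>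
          k' ≠ k ∧ ∃ e ∈ pe k', e ∈ (cyc (ia k)).edges ∨ e ∈ (cyc (jb k)).edges)).card
          ≤ ∑ k' : Fin L.length, (qe k').length := Finset.sum_le_sum (fun k' _ => hinner k')
        _ ≤ 2 * E := hQlen
    calc ∑ k : Fin L.length, (nbr k).card
        ≤ ∑ k : Fin L.length, ((Finset.univ.filter (fun k' : Fin L.length =>
            k' ≠ k ∧ ∃ e ∈ pe k, e ∈ (wkk k').edges)).card +
          (Finset.univ.filter (fun k' : Fin L.length =>
            k' ≠ k ∧ ∃ e ∈ pe k', e ∈ (cyc (ia k)).edges ∨ e ∈ (cyc (jb k)).edges)).card) := by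
          refine Finset.sum_le_sum ?_
          intro k _
          calc (nbr k).card ≤ _ := Finset.card_le_card (hsubN k)
            _ ≤ _ := Finset.card_union_le _ _
      _ = (∑ k : Fin L.length, (Finset.univ.filter (fun k' : Fin L.length =>
            k' ≠ k ∧ ∃ e ∈ pe k, e ∈ (wkk k').edges)).card) +
          (∑ k : Fin L.length, (Finset.univ.filter (fun k' : Fin L.length =>
            k' ≠ k ∧ ∃ e ∈ pe k', e ∈ (cyc (ia k)).edges ∨ e ∈ (cyc (jb k)).edges)).card) :=
          Finset.sum_add_distrib
      _ ≤ (∑ k : Fin L.length, 3 * (qe k).length) + 2 * E := by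
          have := Finset.sum_le_sum (fun k (_ : k ∈ Finset.univ) => hN1 k)
          omega
      _ ≤ 3 * (2 * E) + 2 * E := by
          have h1 : ∑ k : Fin L.length, 3 * (qe k).length
              = 3 * ∑ k : Fin L.length, (qe k).length := by
            rw [Finset.mul_sum]
          have := hQlen
          omega
      _ = 8 * E := by ring
  -- select independent set
  have hcardL : Fintype.card (Fin L.length) = ℓ := by simp [hLlen]
  obtain ⟨S, hSind, hScard⟩ := select R hsym nbr
    (fun a b hab hb => hRnbr a b ⟨hab.symm, hb⟩) (8 * E) hdegsum (by omega)
  rw [hcardL] at hScard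
  refine ⟨S.card, fun i => xx (S.equivFin.symm i).1, fun i => wkk (S.equivFin.symm i).1,
    fun i => hEven _, ?_, ?_⟩
  · intro i j hij e hei hej
    have hne2 : ((S.equivFin.symm i).1 : Fin L.length) ≠ (S.equivFin.symm j).1 := by
      intro hh
      exact hij (S.equivFin.symm.injective (Subtype.ext hh))
    exact hSind _ (S.equivFin.symm i).2 _ (S.equivFin.symm j).2 hne2 ⟨e, hei, hej⟩
  · have hle : ℓ * ℓ ≤ 100 * E * S.card := by nlinarith [hScard, hE6]
    have hEpos : (0:ℝ) < (E : ℝ) := by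
      have : 0 < E := by omega
      exact_mod_cast this
    rw [div_le_iff₀ hEpos]
    have hcast : (ℓ:ℝ) * ℓ ≤ 100 * E * S.card := by exact_mod_cast hle
    nlinarith [hcast]
end
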